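/- arXiv:1804.01447 — 8 statements merged into one kernel-verified Lean document; each statement's English description precedes it below -/
import Mathlib

section
/- Let n be a positive integer and let M(n) be the ℤ-module of polynomials f(q) ∈ ℤ[q] of degree less than n such that f(ω_n^j) ∈ ℤ for all j = 1, …, n, where ω_n is a fixed primitive n-th root of unity. Then the following two sets each form a ℤ-basis of M(n): (i) B₁(n) = { g_d(q) : d | n } where g_d(q) = ∑_{0 ≤ j < n, gcd(j,n) = d} q^j, and (ii) B₂(n) = { h_d(q) : d | n } where h_d(q) = ∑_{j=0}^{n/d − 1} q^{dj}. In particular, every f ∈ M(n) is a ℤ-linear combination of the polynomials h_d(q) for d | n, and these polynomials are ℤ-linearly independent. -/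
open Polynomial Finset

-- value rigidity
lemma aux_val_rigid {m : ℕ} (hm : 0 < m) {ζ ζ' : ℂ} (hζ : IsPrimitiveRoot ζ m)
    (hζ' : IsPrimitiveRoot ζ' m) (f : Polynomial ℤ) (z : ℤ)
    (hz : aeval ζ f = (z : ℂ)) : aeval ζ' f = (z : ℂ) := by
  set p : Polynomial ℚ := f.map (algebraMap ℤ ℚ) - C (z : ℚ) with hp
  have hev : ∀ x : ℂ, aeval x p = aeval x f - (z : ℂ) := by
    intro x
    rw [hp, map_sub, aeval_map_algebraMap, aeval_C]; norm_num
  have h1 : aeval ζ p = 0 := by rw [hev, hz, sub_self]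
  have hdvd : minpoly ℚ ζ ∣ p := minpoly.dvd ℚ ζ h1
  rw [← Polynomial.cyclotomic_eq_minpoly_rat hζ hm] at hdvd
  obtain ⟨q, hq⟩ := hdvd
  have h2 : aeval ζ' (Polynomial.cyclotomic m ℚ) = 0 := by
    have h3 := hζ'.isRoot_cyclotomic hm (R := ℂ)
    rw [aeval_def, ← Polynomial.eval_map, Polynomial.map_cyclotomic]
    exact h3
  have h4 : aeval ζ' p = 0 := by rw [hq, map_mul, h2, zero_mul]
  rw [hev] at h4
  linear_combination h4

-- primitive root of ω^k
lemma aux_prim_pow {n : ℕ} (hn : 0 < n) {ω : ℂ} (hω : IsPrimitiveRoot ω n) (k : ℕ) :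
    IsPrimitiveRoot (ω ^ k) (n / Nat.gcd k n) := by
  have hd : Nat.gcd k n ∣ n := Nat.gcd_dvd_right k n
  have hdk : Nat.gcd k n ∣ k := Nat.gcd_dvd_left k n
  have hpos : 0 < Nat.gcd k n := Nat.gcd_pos_of_pos_right k hn
  have h1 : IsPrimitiveRoot (ω ^ Nat.gcd k n) (n / Nat.gcd k n) :=
    hω.pow hn (Nat.mul_div_cancel' hd).symm
  have h2 := h1.pow_of_coprime (k / Nat.gcd k n) (Nat.coprime_div_gcd_div_gcd hpos)
  rwa [← pow_mul, Nat.mul_div_cancel' hdk] at h2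

-- mod invariance of powers
lemma aux_pow_mod {n : ℕ} {ω : ℂ} (hω1 : ω ^ n = 1) {x y : ℕ} (hxy : x ≡ y [MOD n]) :
    ω ^ x = ω ^ y := by
  have h : ∀ a : ℕ, ω ^ a = ω ^ (a % n) := by
    intro a
    conv_lhs => rw [← Nat.div_add_mod a n]
    rw [pow_add, pow_mul, hω1, one_pow, one_mul]
  rw [h x, h y, hxy]

-- inverse mod n
lemma aux_inverse {n : ℕ} (hn : 0 < n) {b : ℕ} (hb : Nat.Coprime b n) :
    ∃ c, Nat.Coprime c n ∧ b * c ≡ 1 [MOD n] ∧ c * b ≡ 1 [MOD n] := by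
  haveI : NeZero n := ⟨hn.ne'⟩
  set U : (ZMod n)ˣ := ZMod.unitOfCoprime b hb with hU
  refine ⟨(↑(U⁻¹) : ZMod n).val, ZMod.val_coe_unit_coprime _, ?_, ?_⟩
  · rw [← ZMod.natCast_eq_natCast_iff]
    push_cast
    rw [ZMod.natCast_val, ZMod.cast_id]
    rw [show ((b : ZMod n)) = (U : ZMod n) from (ZMod.coe_unitOfCoprime b hb).symm]
    rw [← Units.val_mul, mul_inv_cancel, Units.val_one]
  · rw [← ZMod.natCast_eq_natCast_iff]
    push_cast
    rw [ZMod.natCast_val, ZMod.cast_id]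
    rw [show ((b : ZMod n)) = (U : ZMod n) from (ZMod.coe_unitOfCoprime b hb).symm]
    rw [← Units.val_mul, inv_mul_cancel, Units.val_one]

-- every residue with given gcd is unit times the gcd
lemma aux_exists_unit {n : ℕ} (hn : 0 < n) (j : ℕ) :
    ∃ b, Nat.Coprime b n ∧ j ≡ b * Nat.gcd j n [MOD n] := by
  haveI : NeZero n := ⟨hn.ne'⟩
  set d := Nat.gcd j n with hd
  have hdn : d ∣ n := Nat.gcd_dvd_right j n
  have hdj : d ∣ j := Nat.gcd_dvd_left j n
  have hdpos : 0 < d := Nat.gcd_pos_of_pos_right j hn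
  set m := n / d with hm
  have hmd : d * m = n := Nat.mul_div_cancel' hdn
  have hmpos : 0 < m := Nat.div_pos (Nat.le_of_dvd hn hdn) hdpos
  haveI : NeZero m := ⟨hmpos.ne'⟩
  have hmn : m ∣ n := ⟨d, by rw [← hmd, mul_comm]⟩
  have hco : Nat.Coprime (j / d) m := Nat.coprime_div_gcd_div_gcd hdpos
  obtain ⟨B, hB⟩ := ZMod.unitsMap_surjective hmn (ZMod.unitOfCoprime (j / d) hco)
  refine ⟨(B : ZMod n).val, ZMod.val_coe_unit_coprime B, ?_⟩
  have key : ((B : ZMod n).val : ZMod m) = ((j / d : ℕ) : ZMod m) := by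
    have h1 : ZMod.castHom hmn (ZMod m) (((B : ZMod n).val : ℕ) : ZMod n)
        = (((B : ZMod n).val : ℕ) : ZMod m) := map_natCast _ _
    rw [ZMod.natCast_val, ZMod.cast_id] at h1
    have h2 : ZMod.castHom hmn (ZMod m) (B : ZMod n) = ((ZMod.unitsMap hmn B : ZMod m)) := rfl
    rw [hB] at h2
    rw [← h1, h2, ZMod.coe_unitOfCoprime]
  have hmod : (B : ZMod n).val ≡ j / d [MOD m] := (ZMod.natCast_eq_natCast_iff _ _ _).mp key
  have := (hmod.mul_right' (c := d))
  rw [mul_comm m d, hmd] at this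
  have hjd : j / d * d = j := Nat.div_mul_cancel hdj
  calc j = j / d * d := hjd.symm
    _ ≡ (B : ZMod n).val * d [MOD n] := this.symm

lemma aux_pow_mod' {n : ℕ} {ω : ℂ} (hω1 : ω ^ n = 1) {x y : ℕ} (hxy : x ≡ y [MOD n]) :
    ω ^ x = ω ^ y := by
  have h : ∀ a : ℕ, ω ^ a = ω ^ (a % n) := by
    intro a
    conv_lhs => rw [← Nat.div_add_mod a n]
    rw [pow_add, pow_mul, hω1, one_pow, one_mul]
  rw [h x, h y, hxy]

-- reindexing by a unit
lemma aux_S_unit {n : ℕ} (hn : 0 < n) {ω : ℂ} (hω1 : ω ^ n = 1) (v : ℕ → ℂ)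
    (hv : ∀ k k' : ℕ, Nat.gcd k n = Nat.gcd k' n → v k = v k')
    {b c : ℕ} (hb : Nat.Coprime b n) (hbc : b * c ≡ 1 [MOD n]) (hcb : c * b ≡ 1 [MOD n])
    (x : ℕ) :
    ∑ k ∈ range n, v k * ω⁻¹ ^ (b * x * k) = ∑ k ∈ range n, v k * ω⁻¹ ^ (x * k) := by
  have hωinv : (ω⁻¹) ^ n = 1 := by rw [inv_pow, hω1, inv_one]
  refine Finset.sum_nbij' (i := fun k => b * k % n) (j := fun k => c * k % n) ?_ ?_ ?_ ?_ ?_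
  · intro k _; exact Finset.mem_range.mpr (Nat.mod_lt _ hn)
  · intro k _; exact Finset.mem_range.mpr (Nat.mod_lt _ hn)
  · intro k hk
    have h1 : c * (b * k % n) ≡ k [MOD n] := by
      calc c * (b * k % n) ≡ c * (b * k) [MOD n] := (Nat.mod_modEq (b * k) n).mul_left c
        _ = c * b * k := (mul_assoc c b k).symm
        _ ≡ 1 * k [MOD n] := hcb.mul_right k
        _ = k := one_mul k
    have h2 : c * (b * k % n) % n = k % n := h1
    rwa [Nat.mod_eq_of_lt (Finset.mem_range.mp hk)] at h2
  · intro k hk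
    have h1 : b * (c * k % n) ≡ k [MOD n] := by
      calc b * (c * k % n) ≡ b * (c * k) [MOD n] := (Nat.mod_modEq (c * k) n).mul_left b
        _ = b * c * k := (mul_assoc b c k).symm
        _ ≡ 1 * k [MOD n] := hbc.mul_right k
        _ = k := one_mul k
    have h2 : b * (c * k % n) % n = k % n := h1
    rwa [Nat.mod_eq_of_lt (Finset.mem_range.mp hk)] at h2
  · intro k _
    have hgcd : Nat.gcd k n = Nat.gcd (b * k % n) n := by
      rw [← Nat.gcd_rec n (b * k), Nat.gcd_comm n (b * k), hb.gcd_mul_left_cancel k]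
    have hexp : ω⁻¹ ^ (b * x * k) = ω⁻¹ ^ (x * (b * k % n)) := by
      refine aux_pow_mod' hωinv ?_
      calc b * x * k = x * (b * k) := by ring
        _ ≡ x * (b * k % n) [MOD n] := ((Nat.mod_modEq (b * k) n).mul_left x).symm
    rw [hv k (b * k % n) hgcd, hexp]

-- Fourier: ∑_k f(ω^k) ω^{-jk} = n * coeff j
lemma aux_fourier {n : ℕ} (hn : 0 < n) {ω : ℂ} (hω : IsPrimitiveRoot ω n)
    (f : Polynomial ℤ) (hdeg : f.natDegree < n) {j : ℕ} (hj : j < n) :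
    ∑ k ∈ range n, (aeval (ω ^ k) f) * ω⁻¹ ^ (j * k) = n * (f.coeff j : ℂ) := by
  have hω1 : ω ^ n = 1 := hω.pow_eq_one
  have hω0 : ω ≠ 0 := by
    intro h; rw [h, zero_pow hn.ne'] at hω1; exact zero_ne_one hω1
  have hexp : ∀ k : ℕ, aeval (ω ^ k) f = ∑ i ∈ range n, (f.coeff i : ℂ) * (ω ^ i) ^ k := by
    intro k
    rw [Polynomial.aeval_eq_sum_range' hdeg]
    refine Finset.sum_congr rfl fun i _ => ?_
    rw [zsmul_eq_mul, ← pow_mul, ← pow_mul, mul_comm k i]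
  calc ∑ k ∈ range n, (aeval (ω ^ k) f) * ω⁻¹ ^ (j * k)
      = ∑ k ∈ range n, ∑ i ∈ range n, (f.coeff i : ℂ) * (ω ^ i * (ω ^ j)⁻¹) ^ k := by
        refine Finset.sum_congr rfl fun k _ => ?_
        rw [hexp k, Finset.sum_mul]
        refine Finset.sum_congr rfl fun i _ => ?_
        rw [mul_assoc]
        congr 1
        simp [mul_pow, inv_pow, ← pow_mul]
    _ = ∑ i ∈ range n, (f.coeff i : ℂ) * ∑ k ∈ range n, (ω ^ i * (ω ^ j)⁻¹) ^ k := by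
        rw [Finset.sum_comm]
        exact Finset.sum_congr rfl fun i _ => (Finset.mul_sum _ _ _).symm
    _ = ∑ i ∈ range n, (f.coeff i : ℂ) * (if i = j then (n : ℂ) else 0) := by
        refine Finset.sum_congr rfl fun i hi => ?_
        congr 1
        by_cases hij : i = j
        · rw [hij, mul_inv_cancel₀ (pow_ne_zero _ hω0)]
          simp
        · rw [if_neg hij]
          have hx1 : ω ^ i * (ω ^ j)⁻¹ ≠ 1 := by
            intro hx
            rw [mul_inv_eq_one₀ (pow_ne_zero _ hω0)] at hx
            exact hij (hω.pow_inj (Finset.mem_range.mp hi) hj hx)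
          have h5 : ∀ a : ℕ, (ω ^ a) ^ n = 1 := fun a => by
            rw [← pow_mul, mul_comm, pow_mul, hω1, one_pow]
          have hxn : (ω ^ i * (ω ^ j)⁻¹) ^ n = 1 := by
            rw [mul_pow, inv_pow, h5, h5, inv_one, mul_one]
          rw [geom_sum_eq hx1, hxn, sub_self, zero_div]
    _ = n * (f.coeff j : ℂ) := by
        rw [Finset.sum_congr rfl (fun i _ => by rw [mul_ite, mul_zero])]
        rw [Finset.sum_ite_eq' (range n) j]
        rw [if_pos (Finset.mem_range.mpr hj), mul_comm]

lemma aux_coeff_g {n : ℕ} (gd : Polynomial ℤ) (d : ℕ)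
    (hg : gd = ∑ j ∈ (Finset.range n).filter (fun j => Nat.gcd j n = d),
      (Polynomial.X : Polynomial ℤ) ^ j) (j : ℕ) :
    gd.coeff j = if j < n ∧ Nat.gcd j n = d then 1 else 0 := by
  rw [hg, Polynomial.finset_sum_coeff]
  simp only [Polynomial.coeff_X_pow]
  rw [Finset.sum_ite_eq]
  simp [Finset.mem_filter, Finset.mem_range, and_assoc]

lemma aux_coeff_gsum {n : ℕ} (hn : 0 < n) (g : ℕ → Polynomial ℤ)
    (hg : ∀ d, g d = ∑ j ∈ (Finset.range n).filter (fun j => Nat.gcd j n = d),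
      (Polynomial.X : Polynomial ℤ) ^ j) (c : ℕ → ℤ) (j : ℕ) :
    (∑ d ∈ n.divisors, c d • g d).coeff j = if j < n then c (Nat.gcd j n) else 0 := by
  rw [Polynomial.finset_sum_coeff]
  simp only [Polynomial.coeff_smul, smul_eq_mul]
  rw [Finset.sum_congr rfl (fun d _ => by rw [aux_coeff_g (g d) d (hg d) j])]
  by_cases hj : j < n
  · simp only [hj, true_and, mul_ite, mul_one, mul_zero]
    rw [Finset.sum_ite_eq]
    rw [if_pos (Nat.mem_divisors.mpr ⟨Nat.gcd_dvd_right j n, hn.ne'⟩)]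
    simp
  · simp [hj]

lemma aux_coeff_h {n : ℕ} (hn : 0 < n) (hd : Polynomial ℤ) {d : ℕ} (hdn : d ∣ n) (hd0 : 0 < d)
    (hh : hd = ∑ i ∈ Finset.range (n / d), (Polynomial.X : Polynomial ℤ) ^ (d * i)) (j : ℕ) :
    hd.coeff j = if j < n ∧ d ∣ j then 1 else 0 := by
  rw [hh, Polynomial.finset_sum_coeff]
  simp only [Polynomial.coeff_X_pow]
  by_cases hdj : d ∣ j
  · have hiff : ∀ i : ℕ, (j = d * i) ↔ (i = j / d) := by
      intro i
      constructor
      · intro hji; rw [hji, Nat.mul_div_cancel_left i hd0]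
      · intro hi; rw [hi, Nat.mul_div_cancel' hdj]
    simp only [hiff]
    rw [Finset.sum_ite_eq']
    have hlt : j / d ∈ Finset.range (n / d) ↔ j < n := by
      rw [Finset.mem_range]
      constructor
      · intro hlt
        calc j = d * (j / d) := (Nat.mul_div_cancel' hdj).symm
          _ < n := by
            have h2 : d * (j / d) < d * (n / d) := Nat.mul_lt_mul_of_pos_left hlt hd0
            rwa [Nat.mul_div_cancel' hdn] at h2
      · intro hjn; exact Nat.div_lt_div_of_lt_of_dvd hdn hjn
    by_cases hjn : j < n
    · rw [if_pos (hlt.mpr hjn), if_pos ⟨hjn, hdj⟩]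
    · rw [if_neg (fun hmem => hjn (hlt.mp hmem)), if_neg (fun hc => hjn hc.1)]
  · rw [if_neg (fun hc => hdj hc.2)]
    refine Finset.sum_eq_zero fun i _ => ?_
    rw [if_neg (fun hji => hdj ⟨i, hji⟩)]

lemma aux_coeff_hsum {n : ℕ} (hn : 0 < n) (h : ℕ → Polynomial ℤ)
    (hh : ∀ d, h d = ∑ i ∈ Finset.range (n / d), (Polynomial.X : Polynomial ℤ) ^ (d * i))
    (c : ℕ → ℤ) (j : ℕ) :
    (∑ d ∈ n.divisors, c d • h d).coeff j =
      if j < n then ∑ e ∈ (Nat.gcd j n).divisors, c e else 0 := by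
  rw [Polynomial.finset_sum_coeff]
  simp only [Polynomial.coeff_smul, smul_eq_mul]
  rw [Finset.sum_congr rfl (fun d hd => by
    rw [aux_coeff_h hn (h d) (Nat.mem_divisors.mp hd).1
      (Nat.pos_of_ne_zero (fun h0 => (Nat.mem_divisors.mp hd).2
        (by rw [← Nat.zero_dvd.mp (h0 ▸ (Nat.mem_divisors.mp hd).1)]))) (hh d) j])]
  by_cases hj : j < n
  · simp only [hj, true_and, mul_ite, mul_one, mul_zero, if_pos]
    rw [← Finset.sum_filter]
    apply Finset.sum_congr _ (fun _ _ => rfl)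
    ext e
    simp only [Finset.mem_filter, Nat.mem_divisors]
    constructor
    · rintro ⟨⟨hen, -⟩, hej⟩
      exact ⟨Nat.dvd_gcd hej hen, fun h0 => hn.ne' (Nat.eq_zero_of_gcd_eq_zero_right h0)⟩
    · rintro ⟨heg, -⟩
      exact ⟨⟨heg.trans (Nat.gcd_dvd_right j n), hn.ne'⟩, heg.trans (Nat.gcd_dvd_left j n)⟩
  · simp [hj]

lemma aux_moebius (V : ℕ → ℤ) (m : ℕ) (hm : 0 < m) :
    ∑ i ∈ m.divisors, (∑ x ∈ i.divisors, (ArithmeticFunction.moebius (i / x)) * V x) = V m := by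
  have := (ArithmeticFunction.sum_eq_iff_sum_smul_moebius_eq
    (R := ℤ) (f := fun i => ∑ x ∈ i.divisors, (ArithmeticFunction.moebius (i / x)) * V x)
    (g := V)).mpr
  apply this _ m hm
  intro k hk
  rw [Nat.sum_divisorsAntidiagonal' (f := fun x y => (ArithmeticFunction.moebius x) • V y)]
  simp [smul_eq_mul]


/-- The sets B₁(n) = {g_d : d ∣ n} and B₂(n) = {h_d : d ∣ n} each form a
ℤ-basis of the module M(n) of integer polynomials of degree < n taking integer values at all
n-th roots of unity: every such f is a unique ℤ-linear combination of the g_d's, and likewise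
of the h_d's. -/
theorem stmt_0 (n : ℕ) (hn : 0 < n) (ω : ℂ) (hω : IsPrimitiveRoot ω n)
    (g h : ℕ → Polynomial ℤ)
    (hg : ∀ d, g d = ∑ j ∈ (Finset.range n).filter (fun j => Nat.gcd j n = d),
      (Polynomial.X : Polynomial ℤ) ^ j)
    (hh : ∀ d, h d = ∑ j ∈ Finset.range (n / d), (Polynomial.X : Polynomial ℤ) ^ (d * j)) :
    ∀ f : Polynomial ℤ, f.degree < n →
      (∀ j ∈ Finset.Icc 1 n, ∃ z : ℤ, Polynomial.aeval (ω ^ j) f = (z : ℂ)) →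
      ((∃! c : ℕ → ℤ, (∀ d, d ∉ n.divisors → c d = 0) ∧
          f = ∑ d ∈ n.divisors, c d • g d) ∧
       (∃! c : ℕ → ℤ, (∀ d, d ∉ n.divisors → c d = 0) ∧
          f = ∑ d ∈ n.divisors, c d • h d)) := by
  intro f hdeg hval'
  have hne : (n : ℂ) ≠ 0 := Nat.cast_ne_zero.mpr hn.ne'
  have hω1 : ω ^ n = 1 := hω.pow_eq_one
  have hnd : f.natDegree < n := by
    rcases eq_or_ne f 0 with rfl | hf0
    · simpa using hn
    · exact (Polynomial.natDegree_lt_iff_degree_lt hf0).mpr hdeg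
  have hcoeff0 : ∀ j : ℕ, ¬ j < n → f.coeff j = 0 := by
    intro j hj
    exact Polynomial.coeff_eq_zero_of_degree_lt
      (lt_of_lt_of_le hdeg (by exact_mod_cast Nat.le_of_not_lt hj))
  have hval : ∀ k : ℕ, ∃ z : ℤ, aeval (ω ^ k) f = (z : ℂ) := by
    intro k
    have hk : ω ^ k = ω ^ (k % n) := aux_pow_mod' hω1 (Nat.mod_modEq k n).symm
    by_cases h0 : k % n = 0
    · obtain ⟨z, hz⟩ := hval' n (Finset.mem_Icc.mpr ⟨hn, le_refl n⟩)
      refine ⟨z, ?_⟩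
      rw [hk, h0, pow_zero, ← hω1] at *
      exact hz
    · obtain ⟨z, hz⟩ := hval' (k % n) (Finset.mem_Icc.mpr
        ⟨Nat.one_le_iff_ne_zero.mpr h0, le_of_lt (Nat.mod_lt k hn)⟩)
      exact ⟨z, by rw [hk]; exact hz⟩
  have hvgcd : ∀ k k' : ℕ, Nat.gcd k n = Nat.gcd k' n →
      aeval (ω ^ k) f = aeval (ω ^ k') f := by
    intro k k' hkk
    obtain ⟨z, hz⟩ := hval k
    have hm : 0 < n / Nat.gcd k n :=
      Nat.div_pos (Nat.le_of_dvd hn (Nat.gcd_dvd_right k n)) (Nat.gcd_pos_of_pos_right k hn)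
    have h1 := aux_prim_pow hn hω k
    have h2 := aux_prim_pow hn hω k'
    rw [← hkk] at h2
    rw [hz]
    exact (aux_val_rigid hm h1 h2 f z hz).symm
  have hSgcd : ∀ j : ℕ, (∑ k ∈ range n, (aeval (ω ^ k) f) * ω⁻¹ ^ (j * k))
      = ∑ k ∈ range n, (aeval (ω ^ k) f) * ω⁻¹ ^ (Nat.gcd j n * k) := by
    intro j
    obtain ⟨b, hb, hmod⟩ := aux_exists_unit hn j
    obtain ⟨c, hc, hbc, hcb⟩ := aux_inverse hn hb
    have h2 := aux_S_unit hn hω1 (fun k => aeval (ω ^ k) f) hvgcd hb hbc hcb (Nat.gcd j n)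
    have h1 : (∑ k ∈ range n, (aeval (ω ^ k) f) * ω⁻¹ ^ (j * k))
        = ∑ k ∈ range n, (aeval (ω ^ k) f) * ω⁻¹ ^ (b * Nat.gcd j n * k) := by
      refine Finset.sum_congr rfl fun k _ => ?_
      rw [aux_pow_mod' (show (ω⁻¹) ^ n = 1 by rw [inv_pow, hω1, inv_one]) (hmod.mul_right k)]
    rw [h1]
    exact h2
  have hCR : ∀ j j' : ℕ, j < n → j' < n → Nat.gcd j n = Nat.gcd j' n →
      f.coeff j = f.coeff j' := by
    intro j j' hj hj' hgj
    have h1 := aux_fourier hn hω f hnd hj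
    have h2 := aux_fourier hn hω f hnd hj'
    have h3 : (n : ℂ) * (f.coeff j : ℂ) = n * (f.coeff j' : ℂ) := by
      rw [← h1, ← h2, hSgcd j, hSgcd j', hgj]
    exact_mod_cast mul_left_cancel₀ hne h3
  have hVC : ∀ j, j < n → f.coeff j = f.coeff (Nat.gcd j n % n) := by
    intro j hj
    refine hCR j _ hj (Nat.mod_lt _ hn) ?_
    rw [← Nat.gcd_rec n (Nat.gcd j n), Nat.gcd_comm n, Nat.gcd_eq_left (Nat.gcd_dvd_right j n)]
  have hJD : ∀ d ∈ n.divisors, d % n < n ∧ Nat.gcd (d % n) n = d := by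
    intro d hd
    obtain ⟨hdvd, -⟩ := Nat.mem_divisors.mp hd
    refine ⟨Nat.mod_lt _ hn, ?_⟩
    rw [← Nat.gcd_rec n d, Nat.gcd_comm n d, Nat.gcd_eq_left hdvd]
  constructor
  -- g part
  · set cg : ℕ → ℤ := fun d => if d ∈ n.divisors then f.coeff (d % n) else 0 with hcg
    have hfg : f = ∑ d ∈ n.divisors, cg d • g d := by
      apply Polynomial.ext; intro j
      rw [aux_coeff_gsum hn g hg cg j]
      by_cases hj : j < n
      · rw [if_pos hj]
        have hgd : Nat.gcd j n ∈ n.divisors :=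
          Nat.mem_divisors.mpr ⟨Nat.gcd_dvd_right j n, hn.ne'⟩
        simp only [hcg, if_pos hgd]
        exact hVC j hj
      · rw [if_neg hj]
        exact hcoeff0 j hj
    have huniq_g : ∀ c1 c2 : ℕ → ℤ, (∀ d ∉ n.divisors, c1 d = 0) →
        (∀ d ∉ n.divisors, c2 d = 0) →
        (∑ d ∈ n.divisors, c1 d • g d) = (∑ d ∈ n.divisors, c2 d • g d) → c1 = c2 := by
      intro c1 c2 h1 h2 heq
      funext d
      by_cases hd : d ∈ n.divisors
      · obtain ⟨hlt, hgcd⟩ := hJD d hd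
        have hco := congrArg (fun p => Polynomial.coeff p (d % n)) heq
        simp only [aux_coeff_gsum hn g hg c1, aux_coeff_gsum hn g hg c2,
          if_pos hlt, hgcd] at hco
        exact hco
      · rw [h1 d hd, h2 d hd]
    refine ⟨cg, ⟨fun d hd => if_neg hd, hfg⟩, ?_⟩
    rintro c' ⟨hc'0, hc'⟩
    exact huniq_g c' cg hc'0 (fun d hd => if_neg hd) (by rw [← hc', ← hfg])
  -- h part
  · set ch : ℕ → ℤ := fun d => if d ∈ n.divisors then
        (∑ x ∈ d.divisors, (ArithmeticFunction.moebius (d / x)) * f.coeff (x % n)) else 0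
      with hch
    have hfh : f = ∑ d ∈ n.divisors, ch d • h d := by
      apply Polynomial.ext; intro j
      rw [aux_coeff_hsum hn h hh ch j]
      by_cases hj : j < n
      · rw [if_pos hj]
        have hstep : ∑ e ∈ (Nat.gcd j n).divisors, ch e =
            ∑ e ∈ (Nat.gcd j n).divisors,
              (∑ x ∈ e.divisors, (ArithmeticFunction.moebius (e / x)) * f.coeff (x % n)) := by
          refine Finset.sum_congr rfl fun e he => ?_
          have hein : e ∈ n.divisors := Nat.mem_divisors.mpr
            ⟨(Nat.mem_divisors.mp he).1.trans (Nat.gcd_dvd_right j n), hn.ne'⟩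
          simp only [hch, if_pos hein]
        rw [hstep, aux_moebius (fun x => f.coeff (x % n)) (Nat.gcd j n)
          (Nat.gcd_pos_of_pos_right j hn)]
        exact hVC j hj
      · rw [if_neg hj]
        exact hcoeff0 j hj
    have huniq_h : ∀ c1 c2 : ℕ → ℤ, (∀ d ∉ n.divisors, c1 d = 0) →
        (∀ d ∉ n.divisors, c2 d = 0) →
        (∑ d ∈ n.divisors, c1 d • h d) = (∑ d ∈ n.divisors, c2 d • h d) → c1 = c2 := by
      intro c1 c2 h1 h2 heq
      have key : ∀ m ∈ n.divisors, ∑ e ∈ m.divisors, c1 e = ∑ e ∈ m.divisors, c2 e := by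
        intro m hm
        obtain ⟨hlt, hgcd⟩ := hJD m hm
        have hco := congrArg (fun p => Polynomial.coeff p (m % n)) heq
        simp only [aux_coeff_hsum hn h hh c1, aux_coeff_hsum hn h hh c2,
          if_pos hlt, hgcd] at hco
        exact hco
      funext d
      by_cases hd : d ∈ n.divisors
      · suffices hsuff : ∀ m : ℕ, m ∣ n → c1 m = c2 m by
          exact hsuff d (Nat.mem_divisors.mp hd).1
        intro m
        induction m using Nat.strong_induction_on with
        | _ m IH =>
          intro hmn
          have hm0 : m ≠ 0 := ne_zero_of_dvd_ne_zero hn.ne' hmn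
          have hmm : m ∈ m.divisors := Nat.mem_divisors_self m hm0
          have hkey := key m (Nat.mem_divisors.mpr ⟨hmn, hn.ne'⟩)
          rw [← Finset.add_sum_erase _ c1 hmm, ← Finset.add_sum_erase _ c2 hmm] at hkey
          have herase : ∑ e ∈ m.divisors.erase m, c1 e = ∑ e ∈ m.divisors.erase m, c2 e := by
            refine Finset.sum_congr rfl fun e he => ?_
            obtain ⟨hne', hmem⟩ := Finset.mem_erase.mp he
            have hedvd : e ∣ m := (Nat.mem_divisors.mp hmem).1
            exact IH e (lt_of_le_of_ne (Nat.le_of_dvd (Nat.pos_of_ne_zero hm0) hedvd) hne')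
              (hedvd.trans hmn)
          rw [herase] at hkey
          exact add_right_cancel hkey
      · rw [h1 d hd, h2 d hd]
    refine ⟨ch, ⟨fun d hd => if_neg hd, hfh⟩, ?_⟩
    rintro c' ⟨hc'0, hc'⟩
    exact huniq_h c' ch hc'0 (fun d hd => if_neg hd) (by rw [← hc', ← hfh])
end

section
/- Let n be a positive integer and f(q) ∈ ℤ[q] be such that f(ω_n^j) ∈ ℤ for all j = 1, …, n, where ω_n is a fixed primitive n-th root of unity. Then for each k = 1, …, n the integer ∑_{j | k} μ(k/j) f(ω_n^j) is divisible by k, where μ is the classical Möbius function. Moreover, if k does not divide n, then ∑_{j | k} μ(k/j) f(ω_n^j) = 0. -/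
open Polynomial Finset

lemma myPow_mod {ω : ℂ} {n : ℕ} (hω1 : ω ^ n = 1) (m : ℕ) : ω ^ m = ω ^ (m % n) := by
  conv_lhs => rw [← Nat.mod_add_div m n, pow_add, pow_mul, hω1, one_pow, mul_one]

lemma myPow_congr {ω : ℂ} {n : ℕ} (hω1 : ω ^ n = 1) {m m' : ℕ} (h : m % n = m' % n) :
    ω ^ m = ω ^ m' := by
  rw [myPow_mod hω1 m, h, ← myPow_mod hω1 m']

lemma myOrth {m : ℕ} {ζ : ℂ} (hζ : IsPrimitiveRoot ζ m) (d : ℕ) :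
    ∑ u ∈ Finset.range m, ζ ^ (u * d) = if m ∣ d then (m : ℂ) else 0 := by
  have key : ∀ u, ζ ^ (u * d) = (ζ ^ d) ^ u := fun u => by rw [← pow_mul, mul_comm]
  simp_rw [key]
  by_cases h : m ∣ d
  · rw [if_pos h, (hζ.pow_eq_one_iff_dvd d).2 h]
    simp
  · rw [if_neg h]
    have hne : ζ ^ d ≠ 1 := fun hc => h ((hζ.pow_eq_one_iff_dvd d).1 hc)
    rw [geom_sum_eq hne, ← pow_mul, mul_comm d m, pow_mul, hζ.pow_eq_one, one_pow, sub_self,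
      zero_div]

lemma myDecomp {n : ℕ} (hn : 0 < n) {ω : ℂ} (hω1 : ω ^ n = 1) (f : Polynomial ℤ) (d : ℕ) :
    Polynomial.aeval (ω ^ d) f =
      ∑ i ∈ Finset.range n,
        ((∑ t ∈ (Finset.range (f.natDegree + 1)).filter (fun t => t % n = i), f.coeff t : ℤ) : ℂ)
          * ω ^ (i * d) := by
  rw [Polynomial.aeval_eq_sum_range (ω ^ d)]
  have step : ∀ t, f.coeff t • (ω ^ d) ^ t = ((f.coeff t : ℂ)) * ω ^ ((t % n) * d) := by
    intro t
    rw [zsmul_eq_mul, ← pow_mul]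
    congr 1
    apply myPow_congr hω1
    have : t % n * d ≡ t * d [MOD n] := (Nat.mod_modEq t n).mul_right d
    exact (by rw [mul_comm]; exact this.symm : d * t ≡ t % n * d [MOD n])
  simp_rw [step]
  rw [← Finset.sum_fiberwise_of_maps_to (g := fun t => t % n)
    (fun t _ => Finset.mem_range.2 (Nat.mod_lt t hn))]
  refine Finset.sum_congr rfl fun i hi => ?_
  have inner : ∑ t ∈ (Finset.range (f.natDegree + 1)).filter (fun t => t % n = i),
      (f.coeff t : ℂ) * ω ^ (t % n * d)
      = ∑ t ∈ (Finset.range (f.natDegree + 1)).filter (fun t => t % n = i),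
        (f.coeff t : ℂ) * ω ^ (i * d) := by
    refine Finset.sum_congr rfl fun t ht => ?_
    rw [(Finset.mem_filter.1 ht).2]
  rw [inner, ← Finset.sum_mul]
  push_cast
  ring

lemma myFourier {n : ℕ} (hn : 0 < n) {ω : ℂ} (hω : IsPrimitiveRoot ω n) (f : Polynomial ℤ)
    {i : ℕ} (hi : i < n) :
    (n : ℂ) * ((∑ t ∈ (Finset.range (f.natDegree + 1)).filter (fun t => t % n = i),
        f.coeff t : ℤ) : ℂ) =
      ∑ j ∈ Finset.range n, Polynomial.aeval (ω ^ j) f * ω ^ (j * (n - i)) := by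
  have hω1 : ω ^ n = 1 := hω.pow_eq_one
  symm
  calc ∑ j ∈ Finset.range n, Polynomial.aeval (ω ^ j) f * ω ^ (j * (n - i))
      = ∑ j ∈ Finset.range n, ∑ i' ∈ Finset.range n,
          ((∑ t ∈ (Finset.range (f.natDegree + 1)).filter (fun t => t % n = i'),
            f.coeff t : ℤ) : ℂ) * ω ^ (j * (i' + (n - i))) := by
        refine Finset.sum_congr rfl fun j hj => ?_
        rw [myDecomp hn hω1 f j, Finset.sum_mul]
        refine Finset.sum_congr rfl fun i' hi' => ?_
        rw [mul_assoc, ← pow_add]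
        congr 2
        ring
    _ = ∑ i' ∈ Finset.range n,
          ((∑ t ∈ (Finset.range (f.natDegree + 1)).filter (fun t => t % n = i'),
            f.coeff t : ℤ) : ℂ) * (if n ∣ (i' + (n - i)) then (n : ℂ) else 0) := by
        rw [Finset.sum_comm]
        refine Finset.sum_congr rfl fun i' hi' => ?_
        rw [← Finset.mul_sum, myOrth hω]
    _ = (n : ℂ) * ((∑ t ∈ (Finset.range (f.natDegree + 1)).filter (fun t => t % n = i),
          f.coeff t : ℤ) : ℂ) := by
        have hcong : ∀ i' ∈ Finset.range n,
            ((∑ t ∈ (Finset.range (f.natDegree + 1)).filter (fun t => t % n = i'),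
              f.coeff t : ℤ) : ℂ) * (if n ∣ (i' + (n - i)) then (n : ℂ) else 0)
            = ((∑ t ∈ (Finset.range (f.natDegree + 1)).filter (fun t => t % n = i'),
              f.coeff t : ℤ) : ℂ) * (if i' = i then (n:ℂ) else 0) := by
          intro i' hi'
          have hi'n := Finset.mem_range.1 hi'
          congr 1
          by_cases h : i' = i
          · subst h
            have heq : i' + (n - i') = n := by omega
            rw [if_pos rfl, if_pos (show n ∣ i' + (n - i') by rw [heq])]
          · rw [if_neg h, if_neg ?_]
            intro hdvd
            rcases hdvd with ⟨e, he⟩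
            have h2 : n * e < n * 2 := by omega
            have h3 : e < 2 := Nat.lt_of_mul_lt_mul_left h2
            have h4 : e ≠ 0 := by rintro rfl; omega
            have h5 : e = 1 := by omega
            subst h5
            omega
        rw [Finset.sum_congr rfl hcong,
          Finset.sum_eq_single i (fun b _ hb => by rw [if_neg hb, mul_zero])
            (fun h => absurd (Finset.mem_range.2 hi) h), if_pos rfl]
        ring

lemma myUnit {n : ℕ} (hn : 0 < n) {i i' : ℕ} (h : Nat.gcd i n = Nat.gcd i' n) :
    ∃ t : ℕ, t.Coprime n ∧ t * i ≡ i' [MOD n] := by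
  set g := Nat.gcd i n with hg
  have hgpos : 0 < g := Nat.gcd_pos_of_pos_right _ hn
  have hgn : g ∣ n := Nat.gcd_dvd_right _ _
  set m := n / g with hm
  have hmn : m ∣ n := Nat.div_dvd_of_dvd hgn
  have hngm : n = g * m := (Nat.mul_div_cancel' hgn).symm
  have hmpos : 0 < m := Nat.div_pos (Nat.le_of_dvd hn hgn) hgpos
  obtain ⟨u, hu⟩ : g ∣ i := Nat.gcd_dvd_left _ _
  obtain ⟨u', hu'⟩ : g ∣ i' := h ▸ Nat.gcd_dvd_left i' n
  have hcu : Nat.Coprime u m := by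
    have h2 : g * Nat.gcd u m = g * 1 := by
      rw [← Nat.gcd_mul_left, ← hu, ← hngm, mul_one, ← hg]
    exact Nat.eq_of_mul_eq_mul_left hgpos h2
  have hcu' : Nat.Coprime u' m := by
    have h2 : g * Nat.gcd u' m = g * 1 := by
      rw [← Nat.gcd_mul_left, ← hu', ← hngm, mul_one, h]
    exact Nat.eq_of_mul_eq_mul_left hgpos h2
  haveI : NeZero n := ⟨hn.ne'⟩
  haveI : NeZero m := ⟨hmpos.ne'⟩
  -- build unit in ZMod m : u' * u⁻¹
  set U : (ZMod m)ˣ := ZMod.unitOfCoprime u hcu with hU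
  set U' : (ZMod m)ˣ := ZMod.unitOfCoprime u' hcu' with hU'
  obtain ⟨T, hT⟩ := ZMod.unitsMap_surjective hmn (U' * U⁻¹)
  refine ⟨(T : ZMod n).val, ZMod.val_coe_unit_coprime T, ?_⟩
  -- reduce to mod m congruence
  have key : (T : ZMod n).val * u ≡ u' [MOD m] := by
    rw [← ZMod.natCast_eq_natCast_iff]
    push_cast
    have hcast : (((T : ZMod n).val : ℕ) : ZMod m) = ((ZMod.unitsMap hmn T : ZMod m)) := by
      rw [ZMod.unitsMap_def]
      simp [ZMod.natCast_val, ZMod.castHom_apply]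
    rw [hcast, hT]
    push_cast [ZMod.coe_unitOfCoprime]
    have hUu : ((U⁻¹ : (ZMod m)ˣ) : ZMod m) * (u : ZMod m) = 1 := by
      rw [← ZMod.coe_unitOfCoprime u hcu, ← hU, ← Units.val_mul, inv_mul_cancel, Units.val_one]
    rw [mul_assoc, hUu, mul_one, hU', ZMod.coe_unitOfCoprime]
  have := Nat.ModEq.mul_left' (c := g) key
  rw [← hngm] at this
  calc (T : ZMod n).val * i = g * ((T : ZMod n).val * u) := by rw [hu]; ring
    _ ≡ g * u' [MOD n] := this
    _ = i' := hu'.symm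

lemma myPrimPow {n : ℕ} (hn : 0 < n) {ω : ℂ} (hω : IsPrimitiveRoot ω n) (j : ℕ) :
    IsPrimitiveRoot (ω ^ j) (n / Nat.gcd j n) := by
  have hg : Nat.gcd j n ∣ n := Nat.gcd_dvd_right _ _
  have hgpos : 0 < Nat.gcd j n := Nat.gcd_pos_of_pos_right _ hn
  have base : IsPrimitiveRoot (ω ^ Nat.gcd j n) (n / Nat.gcd j n) :=
    hω.pow hn (Nat.mul_div_cancel' hg).symm
  have hjg : Nat.gcd j n ∣ j := Nat.gcd_dvd_left _ _
  have : ω ^ j = (ω ^ Nat.gcd j n) ^ (j / Nat.gcd j n) := by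
    rw [← pow_mul, Nat.mul_div_cancel' hjg]
  rw [this]
  exact base.pow_of_coprime _ (Nat.coprime_div_gcd_div_gcd hgpos)

lemma myGcdInv {n : ℕ} (hn : 0 < n) {ω : ℂ} (hω : IsPrimitiveRoot ω n) (f : Polynomial ℤ)
    {j j' : ℕ} (h : Nat.gcd j n = Nat.gcd j' n) {z : ℤ}
    (hz : Polynomial.aeval (ω ^ j) f = (z : ℂ)) :
    Polynomial.aeval (ω ^ j') f = (z : ℂ) := by
  have hmpos : 0 < n / Nat.gcd j n :=
    Nat.div_pos (Nat.le_of_dvd hn (Nat.gcd_dvd_right _ _)) (Nat.gcd_pos_of_pos_right _ hn)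
  have prim : IsPrimitiveRoot (ω ^ j) (n / Nat.gcd j n) := myPrimPow hn hω j
  have prim' : IsPrimitiveRoot (ω ^ j') (n / Nat.gcd j n) := by
    rw [h]; exact myPrimPow hn hω j'
  have hmin : minpoly ℚ (ω ^ j) = minpoly ℚ (ω ^ j') := by
    rw [← cyclotomic_eq_minpoly_rat prim hmpos, ← cyclotomic_eq_minpoly_rat prim' hmpos]
  set F : ℚ[X] := f.map (algebraMap ℤ ℚ) - C (z : ℚ) with hFdef
  have hF : aeval (ω ^ j) F = 0 := by
    rw [hFdef]
    simp [← algebraMap_int_eq, Polynomial.aeval_map_algebraMap, hz]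
  have hdvd : minpoly ℚ (ω ^ j') ∣ F := hmin ▸ minpoly.dvd ℚ _ hF
  obtain ⟨q, hq⟩ := hdvd
  have hF' : aeval (ω ^ j') F = 0 := by
    rw [hq, map_mul, minpoly.aeval, zero_mul]
  rw [hFdef] at hF'
  simp only [map_sub, ← algebraMap_int_eq, Polynomial.aeval_map_algebraMap, aeval_C] at hF'
  have := sub_eq_zero.1 hF'
  simpa using this

lemma mySumReindex {n : ℕ} (hn : 0 < n) {t : ℕ} (ht : t.Coprime n) (F : ℕ → ℂ)
    (hF : ∀ j j', j % n = j' % n → F j = F j') :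
    ∑ j ∈ Finset.range n, F (t * j) = ∑ j ∈ Finset.range n, F j := by
  have hinj : ∀ j ∈ Finset.range n, ∀ j' ∈ Finset.range n,
      t * j % n = t * j' % n → j = j' := by
    intro j hj j' hj' hmod
    have hc : t * j ≡ t * j' [MOD n] := hmod
    have := Nat.ModEq.cancel_left_of_coprime (Nat.coprime_comm.1 ht) hc
    have hj1 := Finset.mem_range.1 hj
    have hj2 := Finset.mem_range.1 hj'
    have h3 : j % n = j' % n := this
    rw [Nat.mod_eq_of_lt hj1, Nat.mod_eq_of_lt hj2] at h3
    exact h3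
  have himg : (Finset.range n).image (fun j => t * j % n) = Finset.range n := by
    apply Finset.eq_of_subset_of_card_le
    · intro x hx
      obtain ⟨j, hj, rfl⟩ := Finset.mem_image.1 hx
      exact Finset.mem_range.2 (Nat.mod_lt _ hn)
    · rw [Finset.card_image_of_injOn (fun j hj j' hj' h => hinj j hj j' hj' h)]
  conv_rhs => rw [← himg]
  rw [Finset.sum_image hinj]
  refine Finset.sum_congr rfl fun j hj => ?_
  exact hF _ _ (Nat.mod_mod_of_dvd _ dvd_rfl).symm

lemma myCinv {n : ℕ} (hn : 0 < n) {ω : ℂ} (hω : IsPrimitiveRoot ω n) (f : Polynomial ℤ)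
    (hfa : ∀ j : ℕ, ∃ z : ℤ, Polynomial.aeval (ω ^ j) f = (z : ℂ))
    {i i' : ℕ} (hi : i < n) (hi' : i' < n) (h : Nat.gcd i n = Nat.gcd i' n) :
    (∑ t ∈ (Finset.range (f.natDegree + 1)).filter (fun t => t % n = i), f.coeff t)
      = (∑ t ∈ (Finset.range (f.natDegree + 1)).filter (fun t => t % n = i'), f.coeff t) := by
  have hω1 : ω ^ n = 1 := hω.pow_eq_one
  obtain ⟨t, htc, htm⟩ := myUnit hn h.symm
  have hper : ∀ j j', j % n = j' % n →
      Polynomial.aeval (ω ^ j) f * ω ^ (j * (n - i'))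
        = Polynomial.aeval (ω ^ j') f * ω ^ (j' * (n - i')) := by
    intro j j' hjj
    rw [myPow_congr hω1 hjj, myPow_congr hω1
      (show (j * (n - i')) % n = (j' * (n - i')) % n from (Nat.ModEq.mul_right _ hjj))]
  have key : (n:ℂ) * ((∑ t ∈ (Finset.range (f.natDegree + 1)).filter
        (fun t => t % n = i), f.coeff t : ℤ) : ℂ)
      = (n:ℂ) * ((∑ t ∈ (Finset.range (f.natDegree + 1)).filter
        (fun t => t % n = i'), f.coeff t : ℤ) : ℂ) := by
    rw [myFourier hn hω f hi, myFourier hn hω f hi']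
    rw [← mySumReindex hn htc (fun j => Polynomial.aeval (ω ^ j) f * ω ^ (j * (n - i'))) hper]
    refine Finset.sum_congr rfl fun j hj => ?_
    have hile : i ≤ n := hi.le
    have hile' : i' ≤ n := hi'.le
    congr 1
    · -- aeval (ω ^ j) f = aeval (ω ^ (t * j)) f
      obtain ⟨z, hz⟩ := hfa j
      have hgcd : Nat.gcd j n = Nat.gcd (t * j) n := (Nat.Coprime.gcd_mul_left_cancel j htc).symm
      rw [hz, myGcdInv hn hω f hgcd hz]
    · -- ω ^ (j * (n - i)) = ω ^ (t * j * (n - i'))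
      apply myPow_congr hω1
      show j * (n - i) ≡ t * j * (n - i') [MOD n]
      have e1 : t * j * (n - i') + t * j * i' = t * j * n := by
        rw [← Nat.mul_add, Nat.sub_add_cancel hile']
      have e2 : j * (n - i) + j * i = j * n := by
        rw [← Nat.mul_add, Nat.sub_add_cancel hile]
      have m1 : t * j * (n - i') + t * j * i' ≡ 0 [MOD n] := by
        rw [e1, Nat.modEq_zero_iff_dvd]
        exact dvd_mul_left n (t * j)
      have m2 : j * (n - i) + j * i ≡ 0 [MOD n] := by
        rw [e2, Nat.modEq_zero_iff_dvd]
        exact dvd_mul_left n j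
      have m3 : t * j * i' ≡ j * i [MOD n] := by
        calc t * j * i' = j * (t * i') := by ring
          _ ≡ j * i [MOD n] := htm.mul_left j
      have m4 : j * (n - i) + t * j * i' ≡ t * j * (n - i') + t * j * i' [MOD n] :=
        ((m3.add_left _).trans (m2.trans m1.symm))
      exact Nat.ModEq.add_right_cancel' _ m4
  have hne : (n:ℂ) ≠ 0 := Nat.cast_ne_zero.2 hn.ne'
  exact_mod_cast mul_left_cancel₀ hne key

lemma myMultSum {n : ℕ} (hn : 0 < n) {g : ℕ} (hg : g ∣ n) (hgpos : 0 < g) (F : ℕ → ℂ) :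
    ∑ i ∈ (Finset.range n).filter (fun i => g ∣ i), F i
      = ∑ u ∈ Finset.range (n / g), F (g * u) := by
  refine Finset.sum_nbij' (fun i => i / g) (fun u => g * u) ?_ ?_ ?_ ?_ ?_
  · intro a ha
    obtain ⟨ha1, ha2⟩ := Finset.mem_filter.1 ha
    exact Finset.mem_range.2 (Nat.div_lt_div_of_lt_of_dvd hg (Finset.mem_range.1 ha1))
  · intro a ha
    refine Finset.mem_filter.2 ⟨Finset.mem_range.2 ?_, Dvd.intro a rfl⟩
    have := Finset.mem_range.1 ha
    calc g * a < g * (n / g) := by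
          exact (Nat.mul_lt_mul_left hgpos).2 this
      _ = n := Nat.mul_div_cancel' hg
  · intro a ha
    exact Nat.mul_div_cancel' (Finset.mem_filter.1 ha).2
  · intro a ha
    exact Nat.mul_div_cancel_left a hgpos
  · intro a ha
    rw [Nat.mul_div_cancel' (Finset.mem_filter.1 ha).2]

lemma myMobSum {N : ℕ} (hN : 0 < N) :
    (∑ e ∈ N.divisors, ArithmeticFunction.moebius e) = if N = 1 then 1 else 0 := by
  have h := congrArg (fun F : ArithmeticFunction ℤ => F N)
    ArithmeticFunction.moebius_mul_coe_zeta
  simp only [ArithmeticFunction.mul_apply, ArithmeticFunction.one_apply] at h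
  rw [Nat.sum_divisorsAntidiagonal (f := fun a b => ArithmeticFunction.moebius a *
    (((ArithmeticFunction.zeta : ArithmeticFunction ℕ) : ArithmeticFunction ℤ)) b)] at h
  rw [← h]
  refine Finset.sum_congr rfl fun d hd => ?_
  obtain ⟨hd1, hd2⟩ := Nat.mem_divisors.1 hd
  have hne : N / d ≠ 0 := by
    have := Nat.div_pos (Nat.le_of_dvd hN hd1) (Nat.pos_of_dvd_of_pos hd1 hN)
    omega
  rw [ArithmeticFunction.natCoe_apply, ArithmeticFunction.zeta_apply_ne hne]
  simp

lemma myMob {k m : ℕ} (hk : 0 < k) :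
    (∑ d ∈ k.divisors.filter (fun d => m ∣ d), ArithmeticFunction.moebius (k / d))
      = if m = k then 1 else 0 := by
  by_cases hmk : m ∣ k
  · have hmpos : 0 < m := Nat.pos_of_dvd_of_pos hmk hk
    have hkm : 0 < k / m := Nat.div_pos (Nat.le_of_dvd hk hmk) hmpos
    have step : ∑ d ∈ k.divisors.filter (fun d => m ∣ d), ArithmeticFunction.moebius (k / d)
        = ∑ e ∈ (k / m).divisors, ArithmeticFunction.moebius ((k / m) / e) := by
      refine Finset.sum_nbij' (fun d => d / m) (fun e => m * e) ?_ ?_ ?_ ?_ ?_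
      · intro d hd
        obtain ⟨hd1, hd2⟩ := Finset.mem_filter.1 hd
        obtain ⟨hdk, hk0⟩ := Nat.mem_divisors.1 hd1
        obtain ⟨e, rfl⟩ := hd2
        show m * e / m ∈ (k / m).divisors
        rw [Nat.mul_div_cancel_left e hmpos, Nat.mem_divisors]
        constructor
        · obtain ⟨K, rfl⟩ := hmk
          rw [Nat.mul_div_cancel_left K hmpos]
          exact (mul_dvd_mul_iff_left hmpos.ne').1 hdk
        · exact hkm.ne'
      · intro e he
        obtain ⟨hek, -⟩ := Nat.mem_divisors.1 he
        refine Finset.mem_filter.2 ⟨Nat.mem_divisors.2 ⟨?_, hk.ne'⟩, Dvd.intro e rfl⟩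
        calc m * e ∣ m * (k / m) := mul_dvd_mul_left m hek
          _ = k := Nat.mul_div_cancel' hmk
      · intro d hd
        exact Nat.mul_div_cancel' (Finset.mem_filter.1 hd).2
      · intro e he
        exact Nat.mul_div_cancel_left e hmpos
      · intro d hd
        obtain ⟨e, rfl⟩ := (Finset.mem_filter.1 hd).2
        show _ = ArithmeticFunction.moebius (k / m / (m * e / m))
        rw [Nat.mul_div_cancel_left e hmpos, Nat.div_div_eq_div_mul]
    rw [step, Nat.sum_div_divisors (k / m) ArithmeticFunction.moebius, myMobSum hkm]
    have hiff : (k / m = 1) ↔ (m = k) := by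
      constructor
      · intro h1
        obtain ⟨K, rfl⟩ := hmk
        rw [Nat.mul_div_cancel_left K hmpos] at h1
        rw [h1, mul_one]
      · rintro rfl
        exact Nat.div_self hk
    simp only [hiff]
  · rw [Finset.filter_eq_empty_iff.2, Finset.sum_empty, if_neg]
    · rintro rfl; exact hmk dvd_rfl
    · intro d hd hcon
      exact hmk (hcon.trans (Nat.mem_divisors.1 hd).1)

noncomputable def myC (n : ℕ) (f : Polynomial ℤ) (i : ℕ) : ℤ :=
  ∑ t ∈ (Finset.range (f.natDegree + 1)).filter (fun t => t % n = i), f.coeff t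

noncomputable def myE (n : ℕ) (f : Polynomial ℤ) (g : ℕ) : ℤ :=
  if g = n then myC n f 0 else myC n f g

noncomputable def myD (n : ℕ) (f : Polynomial ℤ) (g : ℕ) : ℤ :=
  ∑ g' ∈ g.divisors, ArithmeticFunction.moebius (g / g') * myE n f g'

lemma myE_spec {n : ℕ} (hn : 0 < n) {ω : ℂ} (hω : IsPrimitiveRoot ω n) (f : Polynomial ℤ)
    (hfa : ∀ j : ℕ, ∃ z : ℤ, Polynomial.aeval (ω ^ j) f = (z : ℂ))
    {i : ℕ} (hi : i < n) : myC n f i = myE n f (Nat.gcd i n) := by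
  by_cases hgi : Nat.gcd i n = n
  · rw [myE, if_pos hgi]
    exact myCinv hn hω f hfa hi hn (by rw [hgi, Nat.gcd_zero_left])
  · rw [myE, if_neg hgi]
    have hdvd : Nat.gcd i n ∣ n := Nat.gcd_dvd_right i n
    have hlt : Nat.gcd i n < n := lt_of_le_of_ne (Nat.le_of_dvd hn hdvd) hgi
    exact myCinv hn hω f hfa hi hlt (by rw [Nat.gcd_eq_left hdvd])

lemma myD_sum (n : ℕ) (f : Polynomial ℤ) :
    ∀ g, 0 < g → ∑ g' ∈ g.divisors, myD n f g' = myE n f g := by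
  have := (ArithmeticFunction.sum_eq_iff_sum_smul_moebius_eq
    (f := myD n f) (g := myE n f)).2 ?_
  · intro g hg
    exact this g hg
  · intro g hg
    rw [Nat.sum_divisorsAntidiagonal' (f := fun a b => ArithmeticFunction.moebius a • myE n f b)]
    rw [myD]
    refine Finset.sum_congr rfl fun d hd => ?_
    rw [zsmul_eq_mul]
    norm_cast

lemma myKey {n : ℕ} (hn : 0 < n) {ω : ℂ} (hω : IsPrimitiveRoot ω n) (f : Polynomial ℤ)
    (hfa : ∀ j : ℕ, ∃ z : ℤ, Polynomial.aeval (ω ^ j) f = (z : ℂ)) (d : ℕ) :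
    Polynomial.aeval (ω ^ d) f = ∑ g ∈ n.divisors,
      (myD n f g : ℂ) * (if (n / g) ∣ d then ((n / g : ℕ) : ℂ) else 0) := by
  have hω1 : ω ^ n = 1 := hω.pow_eq_one
  rw [myDecomp hn hω1 f d]
  calc ∑ i ∈ Finset.range n, ((∑ t ∈ (Finset.range (f.natDegree + 1)).filter
          (fun t => t % n = i), f.coeff t : ℤ) : ℂ) * ω ^ (i * d)
      = ∑ i ∈ Finset.range n, ∑ g ∈ n.divisors,
          (if g ∣ i then (myD n f g : ℂ) * ω ^ (i * d) else 0) := by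
        refine Finset.sum_congr rfl fun i hi => ?_
        have hin := Finset.mem_range.1 hi
        have h1 : (∑ t ∈ (Finset.range (f.natDegree + 1)).filter
            (fun t => t % n = i), f.coeff t : ℤ) = myC n f i := rfl
        rw [h1, myE_spec hn hω f hfa hin,
          ← myD_sum n f (Nat.gcd i n) (Nat.gcd_pos_of_pos_right i hn)]
        rw [← Nat.divisors_filter_dvd_of_dvd hn.ne' (Nat.gcd_dvd_right i n),
          Finset.sum_filter]
        rw [Int.cast_sum, Finset.sum_mul]
        refine Finset.sum_congr rfl fun g hg => ?_
        have hgn : g ∣ n := (Nat.mem_divisors.1 hg).1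
        have : g ∣ Nat.gcd i n ↔ g ∣ i := by
          constructor
          · intro h; exact h.trans (Nat.gcd_dvd_left i n)
          · intro h; exact Nat.dvd_gcd h hgn
        simp only [this]
        split
        · rfl
        · rw [Int.cast_zero, zero_mul]
    _ = ∑ g ∈ n.divisors, ∑ i ∈ Finset.range n,
          (if g ∣ i then (myD n f g : ℂ) * ω ^ (i * d) else 0) := Finset.sum_comm
    _ = ∑ g ∈ n.divisors,
          (myD n f g : ℂ) * (if (n / g) ∣ d then ((n / g : ℕ) : ℂ) else 0) := by
        refine Finset.sum_congr rfl fun g hg => ?_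
        obtain ⟨hgn, -⟩ := Nat.mem_divisors.1 hg
        have hgpos : 0 < g := Nat.pos_of_dvd_of_pos hgn hn
        rw [← Finset.sum_filter, myMultSum hn hgn hgpos (fun i => (myD n f g : ℂ) * ω ^ (i * d))]
        have hprim : IsPrimitiveRoot (ω ^ g) (n / g) :=
          hω.pow hn (Nat.mul_div_cancel' hgn).symm
        have expstep : ∀ u, (myD n f g : ℂ) * ω ^ (g * u * d)
            = (myD n f g : ℂ) * (ω ^ g) ^ (u * d) := by
          intro u
          rw [← pow_mul, mul_assoc]
        simp_rw [expstep]
        rw [← Finset.mul_sum, myOrth hprim d]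

/-- If f ∈ ℤ[q] takes integer values at all n-th roots of unity, then for each
k = 1, …, n the integer S = ∑_{j ∣ k} μ(k/j) f(ω^j) is divisible by k, and S = 0 if k ∤ n. -/
theorem stmt_3 (n : ℕ) (hn : 0 < n) (ω : ℂ) (hω : IsPrimitiveRoot ω n)
    (f : Polynomial ℤ)
    (hf : ∀ j ∈ Finset.Icc 1 n, ∃ z : ℤ, Polynomial.aeval (ω ^ j) f = (z : ℂ))
    (k : ℕ) (hk : k ∈ Finset.Icc 1 n) :
    ∃ S : ℤ, (S : ℂ) = ∑ j ∈ k.divisors,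
        ((ArithmeticFunction.moebius (k / j) : ℤ) : ℂ) * Polynomial.aeval (ω ^ j) f ∧
      (k : ℤ) ∣ S ∧ (¬ (k ∣ n) → S = 0) := by
  obtain ⟨hk1, hkn⟩ := Finset.mem_Icc.1 hk
  have hkpos : 0 < k := hk1
  have hω1 : ω ^ n = 1 := hω.pow_eq_one
  have hfa : ∀ j : ℕ, ∃ z : ℤ, Polynomial.aeval (ω ^ j) f = (z : ℂ) := by
    intro j
    rcases Nat.eq_zero_or_pos (j % n) with h0 | hpos
    · obtain ⟨z, hz⟩ := hf n (Finset.mem_Icc.2 ⟨hn, le_refl n⟩)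
      refine ⟨z, ?_⟩
      rw [myPow_congr hω1 (show j % n = n % n by simp [h0])]
      exact hz
    · obtain ⟨z, hz⟩ := hf (j % n) (Finset.mem_Icc.2 ⟨hpos, (Nat.mod_lt j hn).le⟩)
      refine ⟨z, ?_⟩
      rw [myPow_mod hω1 j]
      exact hz
  have main : ∑ j ∈ k.divisors,
        ((ArithmeticFunction.moebius (k / j) : ℤ) : ℂ) * Polynomial.aeval (ω ^ j) f
      = if k ∣ n then (k : ℂ) * (myD n f (n / k) : ℂ) else 0 := by
    calc ∑ j ∈ k.divisors,
          ((ArithmeticFunction.moebius (k / j) : ℤ) : ℂ) * Polynomial.aeval (ω ^ j) f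
        = ∑ j ∈ k.divisors, ∑ g ∈ n.divisors,
            ((ArithmeticFunction.moebius (k / j) : ℤ) : ℂ) *
              ((myD n f g : ℂ) * (if (n / g) ∣ j then ((n / g : ℕ) : ℂ) else 0)) := by
          refine Finset.sum_congr rfl fun j hj => ?_
          rw [myKey hn hω f hfa j, Finset.mul_sum]
      _ = ∑ g ∈ n.divisors, ∑ j ∈ k.divisors,
            ((ArithmeticFunction.moebius (k / j) : ℤ) : ℂ) *
              ((myD n f g : ℂ) * (if (n / g) ∣ j then ((n / g : ℕ) : ℂ) else 0)) :=
          Finset.sum_comm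
      _ = ∑ g ∈ n.divisors, (myD n f g : ℂ) * ((n / g : ℕ) : ℂ) *
            ((∑ j ∈ k.divisors.filter (fun j => (n / g) ∣ j),
              ArithmeticFunction.moebius (k / j) : ℤ) : ℂ) := by
          refine Finset.sum_congr rfl fun g hg => ?_
          rw [Finset.sum_filter, Int.cast_sum, Finset.mul_sum]
          refine Finset.sum_congr rfl fun j hj => ?_
          split
          · push_cast
            ring
          · push_cast
            ring
      _ = ∑ g ∈ n.divisors, (myD n f g : ℂ) * ((n / g : ℕ) : ℂ) *
            (((if (n / g) = k then 1 else 0 : ℤ)) : ℂ) := by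
          refine Finset.sum_congr rfl fun g hg => ?_
          rw [myMob hkpos]
      _ = if k ∣ n then (k : ℂ) * (myD n f (n / k) : ℂ) else 0 := by
          by_cases hdvd : k ∣ n
          · rw [if_pos hdvd]
            have hmem : n / k ∈ n.divisors :=
              Nat.mem_divisors.2 ⟨Nat.div_dvd_of_dvd hdvd, hn.ne'⟩
            rw [Finset.sum_eq_single_of_mem (n / k) hmem ?_]
            · rw [Nat.div_div_self hdvd hn.ne', if_pos rfl]
              push_cast
              ring
            · intro g hg hne
              have hgn : g ∣ n := (Nat.mem_divisors.1 hg).1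
              rw [if_neg, Int.cast_zero, mul_zero]
              intro hc
              apply hne
              rw [← Nat.div_div_self hgn hn.ne', hc]
          · rw [if_neg hdvd]
            refine Finset.sum_eq_zero fun g hg => ?_
            have hgn : g ∣ n := (Nat.mem_divisors.1 hg).1
            rw [if_neg, Int.cast_zero, mul_zero]
            intro hc
            exact hdvd (hc ▸ Nat.div_dvd_of_dvd hgn)
  refine ⟨if k ∣ n then (k : ℤ) * myD n f (n / k) else 0, ?_, ?_, ?_⟩
  · rw [main]
    split
    · push_cast
      ring
    · rw [Int.cast_zero]
  · split
    · exact Dvd.intro _ rfl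
    · exact dvd_zero _
  · intro hkn
    rw [if_neg hkn]
end

section
/- Let n be a positive integer, let f(q) ∈ ℕ[q] (a polynomial with non-negative integer coefficients) satisfy f(ω_n^j) ∈ ℕ for each j = 1, …, n, where ω_n is a fixed primitive n-th root of unity, and let X be any finite set of cardinality f(1). Then there exists an action of the cyclic group C_n of order n on X (equivalently, a permutation σ of X with σ^n = identity) such that |{x ∈ X : σ^k(x) = x}| = f(ω_n^k) for all k ∈ ℤ, if and only if for every divisor k of n one has ∑_{j | k} μ(k/j) f(ω_n^j) ≥ 0. -/
open Polynomial Finset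

namespace Stmt4

lemma fix_pow {X : Type} (τ : Equiv.Perm X) (x : X) (h : τ x = x) (m : ℕ) : (τ ^ m) x = x := by
  induction m with
  | zero => simp
  | succ m ih => rw [pow_succ, Equiv.Perm.mul_apply, h, ih]

lemma fix_zpow {X : Type} (τ : Equiv.Perm X) (x : X) (h : τ x = x) (a : ℤ) : (τ ^ a) x = x := by
  rcases le_or_gt 0 a with ha | ha
  · lift a to ℕ using ha
    rw [zpow_natCast]; exact fix_pow τ x h a
  · obtain ⟨m, rfl⟩ : ∃ m : ℕ, a = -(m : ℤ) := ⟨a.natAbs, by omega⟩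
    rw [zpow_neg, zpow_natCast]
    have := fix_pow τ x h m
    conv_lhs => rw [← this]
    simp

lemma fix_gcd_iff {X : Type} {n : ℕ} (hn : 0 < n) (σ : Equiv.Perm X) (hσ : σ ^ n = 1)
    (k : ℤ) (x : X) : (σ ^ k) x = x ↔ (σ ^ (Int.gcd k n)) x = x := by
  constructor
  · intro h
    have h1 : (σ ^ ((Int.gcd k n : ℤ))) x = x := by
      rw [Int.gcd_eq_gcd_ab k n, zpow_add, zpow_mul, zpow_mul]
      have hn1 : (σ ^ (n : ℤ)) = 1 := by rw [zpow_natCast, hσ]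
      rw [hn1]
      simp only [one_zpow, mul_one]
      exact fix_zpow _ x h _
    rwa [zpow_natCast] at h1
  · intro h
    have hdvd : ((Int.gcd k n : ℤ)) ∣ k := Int.gcd_dvd_left _ _
    obtain ⟨c, hc⟩ := hdvd
    rw [hc, zpow_mul, zpow_natCast]
    exact fix_zpow _ x h c

section Values

variable {n : ℕ} (hn : 0 < n) {ω : ℂ} (hω : IsPrimitiveRoot ω n)
  (f : Polynomial ℕ) (F : ℕ → ℕ)
  (hF : ∀ j ∈ Finset.Icc 1 n, Polynomial.aeval (ω ^ j) f = (F j : ℂ))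

include hn hω

lemma prim_pow {j : ℕ} (hj : 0 < j) : IsPrimitiveRoot (ω ^ j) (n / Nat.gcd j n) := by
  have hd : Nat.gcd j n ∣ n := Nat.gcd_dvd_right j n
  have hdpos : 0 < Nat.gcd j n := Nat.gcd_pos_of_pos_left _ hj
  have h1 : IsPrimitiveRoot (ω ^ Nat.gcd j n) (n / Nat.gcd j n) :=
    hω.pow hn (by rw [Nat.mul_div_cancel' hd])
  have h2 : Nat.Coprime (j / Nat.gcd j n) (n / Nat.gcd j n) := Nat.coprime_div_gcd_div_gcd hdpos
  have := h1.pow_of_coprime _ h2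
  rwa [← pow_mul, Nat.mul_div_cancel' (Nat.gcd_dvd_left j n)] at this

include hF

lemma F_eq_of_gcd_eq {j j' : ℕ} (hj : j ∈ Finset.Icc 1 n) (hj' : j' ∈ Finset.Icc 1 n)
    (h : Nat.gcd j n = Nat.gcd j' n) : F j = F j' := by
  simp only [Finset.mem_Icc] at hj hj'
  set e := n / Nat.gcd j n with he_def
  have he : 0 < e := Nat.div_pos (Nat.le_of_dvd hn (Nat.gcd_dvd_right j n))
    (Nat.gcd_pos_of_pos_left _ hj.1)
  have p1 : IsPrimitiveRoot (ω ^ j) e := prim_pow hn hω hj.1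
  have p2 : IsPrimitiveRoot (ω ^ j') e := by
    rw [he_def, h]; exact prim_pow hn hω hj'.1
  haveI : NeZero ((e : ℂ)) := ⟨Nat.cast_ne_zero.mpr he.ne'⟩
  set q : ℚ[X] := f.map (algebraMap ℕ ℚ) - C ((F j : ℚ)) with hq_def
  have hq0 : aeval (ω ^ j) q = 0 := by
    rw [hq_def, map_sub, aeval_map_algebraMap, aeval_C]
    rw [hF j (Finset.mem_Icc.mpr hj)]
    simp
  have hdvd : minpoly ℚ (ω ^ j) ∣ q := minpoly.dvd ℚ _ hq0
  rw [← cyclotomic_eq_minpoly_rat p1 he] at hdvd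
  have hroot : aeval (ω ^ j') (cyclotomic e ℚ) = 0 := by
    rw [aeval_def, ← Polynomial.eval_map, Polynomial.map_cyclotomic]
    exact isRoot_cyclotomic_iff.mpr p2
  obtain ⟨g, hg⟩ := hdvd
  have hq0' : aeval (ω ^ j') q = 0 := by rw [hg, map_mul, hroot, zero_mul]
  rw [hq_def, map_sub, aeval_map_algebraMap, aeval_C] at hq0'
  rw [hF j' (Finset.mem_Icc.mpr hj')] at hq0'
  have h2 : ((F j' : ℂ)) = ((F j : ℂ)) := by
    have h3 : ((F j' : ℂ)) - ((F j : ℂ)) = 0 := by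
      rw [← hq0']; norm_num
    linear_combination h3
  exact_mod_cast h2.symm

lemma aeval_pow_eq_F_gcd (m : ℕ) : Polynomial.aeval (ω ^ m) f = (F (Nat.gcd m n) : ℂ) := by
  have hgcdIcc : Nat.gcd m n ∈ Finset.Icc 1 n :=
    Finset.mem_Icc.mpr ⟨Nat.gcd_pos_of_pos_right _ hn, Nat.le_of_dvd hn (Nat.gcd_dvd_right m n)⟩
  have hgg : Nat.gcd (Nat.gcd m n) n = Nat.gcd m n :=
    Nat.gcd_eq_left (Nat.gcd_dvd_right m n)
  by_cases hd : n ∣ m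
  · have h1 : ω ^ m = ω ^ n := by
      rw [(hω.pow_eq_one_iff_dvd m).mpr hd, hω.pow_eq_one]
    have h2 : Nat.gcd m n = n := Nat.dvd_antisymm (Nat.gcd_dvd_right m n) (Nat.dvd_gcd hd dvd_rfl)
    rw [h1, hF n (Finset.mem_Icc.mpr ⟨hn, le_refl n⟩), h2]
  · have hmod : m % n ≠ 0 := fun h => hd (Nat.dvd_of_mod_eq_zero h)
    have h1 : ω ^ m = ω ^ (m % n) := by
      conv_lhs => rw [← Nat.div_add_mod m n, pow_add, pow_mul, hω.pow_eq_one, one_pow, one_mul]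
    have hIcc : m % n ∈ Finset.Icc 1 n :=
      Finset.mem_Icc.mpr ⟨Nat.one_le_iff_ne_zero.mpr hmod, le_of_lt (Nat.mod_lt m hn)⟩
    have hg : Nat.gcd (m % n) n = Nat.gcd m n := by
      rw [Nat.gcd_comm m n, Nat.gcd_rec n m]
    rw [h1, hF _ hIcc]
    congr 1
    exact F_eq_of_gcd_eq hn hω f F hF hIcc hgcdIcc (by rw [hg, hgg])

end Values


section DFT
variable {n : ℕ} [NeZero n] {ω : ℂ} (hω : IsPrimitiveRoot ω n)

lemma sum_val_range (G : ℕ → ℂ) : ∑ z : ZMod n, G z.val = ∑ i ∈ Finset.range n, G i := by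
  refine Finset.sum_nbij' (i := fun (z : ZMod n) => z.val) (j := fun (i : ℕ) => ((i : ZMod n)))
    ?_ ?_ ?_ ?_ ?_
  · intro a _; exact Finset.mem_range.mpr (ZMod.val_lt a)
  · intro a _; exact Finset.mem_univ _
  · intro a _; show ((a.val : ℕ) : ZMod n) = a; rw [ZMod.natCast_val, ZMod.cast_id]
  · intro a ha; exact ZMod.val_cast_of_lt (Finset.mem_range.mp ha)
  · intro a _; rfl

lemma geom_root (y : ℂ) (N : ℕ) (hy : y ^ N = 1) :
    ∑ i ∈ Finset.range N, y ^ i = if y = 1 then (N : ℂ) else 0 := by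
  split_ifs with h
  · simp [h]
  · rw [geom_sum_eq h, hy]; simp

include hω

lemma pow_mod (a : ℕ) : ω ^ a = ω ^ (a % n) := by
  conv_lhs => rw [← Nat.div_add_mod a n, pow_add, pow_mul, hω.pow_eq_one, one_pow, one_mul]

lemma pow_val_natCast (a : ℕ) : ω ^ ((a : ZMod n)).val = ω ^ a := by
  rw [ZMod.val_natCast, ← pow_mod hω]

lemma pow_val_mul (z w : ZMod n) : ω ^ ((z * w).val) = (ω ^ z.val) ^ w.val := by
  rw [ZMod.val_mul, ← pow_mod hω, pow_mul]

lemma pow_val_add (z w : ZMod n) : ω ^ ((z + w).val) = ω ^ z.val * ω ^ w.val := by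
  rw [ZMod.val_add, ← pow_mod hω, pow_add]

lemma sum_pw (t : ZMod n) :
    ∑ z : ZMod n, ω ^ ((z * t).val) = if t = 0 then (n : ℂ) else 0 := by
  have h1 : ∀ z : ZMod n, ω ^ ((z * t).val) = (ω ^ t.val) ^ z.val := by
    intro z; rw [mul_comm, pow_val_mul hω]
  simp only [h1]
  rw [sum_val_range (fun i => (ω ^ t.val) ^ i)]
  have hy : (ω ^ t.val) ^ n = 1 := by
    rw [← pow_mul, mul_comm, pow_mul, hω.pow_eq_one, one_pow]
  rw [geom_root _ _ hy]
  have : (ω ^ t.val = 1) ↔ (t = 0) := by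
    rw [hω.pow_eq_one_iff_dvd]
    constructor
    · intro h
      have := Nat.eq_zero_of_dvd_of_lt h
      rcases Nat.eq_zero_or_pos t.val with h0 | hpos
      · exact (ZMod.val_eq_zero t).mp h0
      · exact absurd (ZMod.val_lt t) (by omega)
    · intro h; rw [h]; simp
  simp [this]

variable (f : Polynomial ℕ)

/-- coefficient sums grouped mod n -/
def Ct (r : ZMod n) : ℕ := ∑ m ∈ f.support.filter (fun m : ℕ => (((m : ℕ) : ZMod n) = r)), f.coeff m

lemma expand_aeval (z : ZMod n) :
    Polynomial.aeval (ω ^ z.val) f = ∑ r : ZMod n, (Ct f r : ℂ) * ω ^ ((z * r).val) := by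
  have h0 : Polynomial.aeval (ω ^ z.val) f
      = ∑ m ∈ f.support, (f.coeff m : ℂ) * (ω ^ z.val) ^ m := by
    rw [Polynomial.aeval_def, Polynomial.eval₂_eq_sum, Polynomial.sum_def]
    exact Finset.sum_congr rfl (fun m _ => by simp)
  have h1 : ∑ r : ZMod n, ∑ m ∈ f.support.filter (fun m : ℕ => (((m : ℕ) : ZMod n) = r)),
      ((f.coeff m : ℂ) * (ω ^ z.val) ^ m) = ∑ m ∈ f.support, (f.coeff m : ℂ) * (ω ^ z.val) ^ m :=
    Finset.sum_fiberwise_of_maps_to (fun m _ => Finset.mem_univ _) _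
  rw [h0, ← h1]
  apply Finset.sum_congr rfl
  intro r _
  have : ∀ m ∈ f.support.filter (fun m : ℕ => (((m : ℕ) : ZMod n) = r)),
      (f.coeff m : ℂ) * (ω ^ z.val) ^ m = (f.coeff m : ℂ) * ω ^ ((z * r).val) := by
    intro m hm
    obtain ⟨_, hm2⟩ := Finset.mem_filter.mp hm
    have hv : (z * ((m : ℕ) : ZMod n)).val = z.val * m % n := by
      rw [ZMod.val_mul, ZMod.val_natCast]
      exact Nat.ModEq.mul_left z.val (Nat.mod_modEq m n)
    rw [← hm2, hv, ← pow_mod hω, pow_mul]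
  rw [Finset.sum_congr rfl this, ← Finset.sum_mul, Ct]
  push_cast
  ring

lemma inv_Ct (z := 0) : ∀ s : ZMod n,
    (n : ℂ) * (Ct f s : ℂ) = ∑ z : ZMod n, Polynomial.aeval (ω ^ z.val) f * ω ^ ((-(z * s)).val) := by
  intro s
  have h1 : ∀ z : ZMod n, Polynomial.aeval (ω ^ z.val) f * ω ^ ((-(z * s)).val)
      = ∑ r : ZMod n, (Ct f r : ℂ) * ω ^ ((z * (r - s)).val) := by
    intro z
    rw [expand_aeval hω, Finset.sum_mul]
    apply Finset.sum_congr rfl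
    intro r _
    have : z * r + (-(z * s)) = z * (r - s) := by ring
    rw [mul_assoc, ← pow_val_add hω, this]
  simp only [h1]
  rw [Finset.sum_comm]
  have h2 : ∀ r : ZMod n, ∑ z : ZMod n, (Ct f r : ℂ) * ω ^ ((z * (r - s)).val)
      = (Ct f r : ℂ) * (if r - s = 0 then (n : ℂ) else 0) := by
    intro r
    rw [← Finset.mul_sum, sum_pw hω]
  simp only [h2, sub_eq_zero, mul_ite, mul_zero]
  rw [Finset.sum_ite_eq' Finset.univ s (fun r => (Ct f r : ℂ) * n)]
  simp [mul_comm]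

lemma gcd_mod (m : ℕ) : Nat.gcd (m % n) n = Nat.gcd m n := by
  rw [Nat.gcd_comm m n, Nat.gcd_rec n m]

lemma gcd_unit_mul (u : (ZMod n)ˣ) (w : ZMod n) :
    Nat.gcd ((↑u * w).val) n = Nat.gcd w.val n := by
  rw [ZMod.val_mul, gcd_mod hω]
  exact Nat.Coprime.gcd_mul_left_cancel w.val (ZMod.val_coe_unit_coprime u)

lemma Ct_unit_mul
    (hg : ∀ z w : ZMod n, Nat.gcd z.val n = Nat.gcd w.val n →
      Polynomial.aeval (ω ^ z.val) f = Polynomial.aeval (ω ^ w.val) f)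
    (u : (ZMod n)ˣ) (s : ZMod n) : Ct f ((u : ZMod n) * s) = Ct f s := by
  have hne : (n : ℂ) ≠ 0 := Nat.cast_ne_zero.mpr (NeZero.ne n)
  have key : (n : ℂ) * (Ct f ((u : ZMod n) * s) : ℂ) = (n : ℂ) * (Ct f s : ℂ) := by
    rw [inv_Ct hω f, inv_Ct hω f]
    apply Finset.sum_nbij' (fun z => (u : ZMod n) * z) (fun z => ((u⁻¹ : (ZMod n)ˣ) : ZMod n) * z)
    · intro a _; exact Finset.mem_univ _
    · intro a _; exact Finset.mem_univ _
    · intro a _; rw [← mul_assoc]; norm_num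
    · intro a _; rw [← mul_assoc]; norm_num
    · intro a _
      have e1 : Polynomial.aeval (ω ^ a.val) f = Polynomial.aeval (ω ^ (((u : ZMod n) * a).val)) f :=
        (hg _ _ (gcd_unit_mul hω u a)).symm
      have e2 : ((u : ZMod n) * a) * s = a * ((u : ZMod n) * s) := by ring
      rw [e1, e2]
  have := mul_left_cancel₀ hne key
  exact_mod_cast this

lemma exists_unit_mul (r : ZMod n) :
    ∃ u : (ZMod n)ˣ, r = (u : ZMod n) * ((Nat.gcd r.val n : ℕ) : ZMod n) := by
  have hnpos : 0 < n := Nat.pos_of_ne_zero (NeZero.ne n)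
  set d := Nat.gcd r.val n with hd_def
  have hd : d ∣ n := Nat.gcd_dvd_right _ _
  have hdpos : 0 < d := Nat.gcd_pos_of_pos_right _ hnpos
  have he : (n / d) ∣ n := Nat.div_dvd_of_dvd hd
  have hco : (r.val / d).Coprime (n / d) := Nat.coprime_div_gcd_div_gcd hdpos
  obtain ⟨u, hu⟩ := ZMod.unitsMap_surjective he (ZMod.unitOfCoprime _ hco)
  refine ⟨u, ?_⟩
  have hcast : ((((↑u : ZMod n)).val : ℕ) : ZMod (n / d)) = ((r.val / d : ℕ) : ZMod (n / d)) := by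
    have h1 : ((ZMod.unitsMap he u : ZMod (n / d))) = ((r.val / d : ℕ) : ZMod (n / d)) := by
      rw [hu, ZMod.coe_unitOfCoprime]
    rw [ZMod.unitsMap_def] at h1
    simp only [Units.coe_map, MonoidHom.coe_coe, ZMod.castHom_apply] at h1
    rw [ZMod.natCast_val]
    exact h1
  have hmod : ((↑u : ZMod n)).val ≡ r.val / d [MOD n / d] :=
    (ZMod.natCast_eq_natCast_iff _ _ _).mp hcast
  have hmod2 : d * ((↑u : ZMod n)).val ≡ d * (r.val / d) [MOD d * (n / d)] :=
    Nat.ModEq.mul_left' _ hmod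
  rw [Nat.mul_div_cancel' hd, Nat.mul_div_cancel' (Nat.gcd_dvd_left r.val n)] at hmod2
  have : ((d * ((↑u : ZMod n)).val : ℕ) : ZMod n) = ((r.val : ℕ) : ZMod n) :=
    (ZMod.natCast_eq_natCast_iff _ _ _).mpr hmod2
  push_cast at this
  rw [ZMod.natCast_val, ZMod.cast_id, ZMod.natCast_val, ZMod.cast_id] at this
  rw [← this]; ring

lemma Ct_gcd
    (hg : ∀ z w : ZMod n, Nat.gcd z.val n = Nat.gcd w.val n →
      Polynomial.aeval (ω ^ z.val) f = Polynomial.aeval (ω ^ w.val) f)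
    (r : ZMod n) : Ct f r = Ct f ((Nat.gcd r.val n : ℕ) : ZMod n) := by
  obtain ⟨u, hu⟩ := exists_unit_mul hω r
  conv_lhs => rw [hu]
  exact Ct_unit_mul hω f hg u _

end DFT
section Inner
variable {n : ℕ} [NeZero n] {ω : ℂ} (hω : IsPrimitiveRoot ω n)
include hω

lemma inner_sum (s : ℕ) (hs : s ∣ n) (hs0 : s ≠ 0) (j : ℕ) :
    ∑ r ∈ Finset.univ.filter (fun r : ZMod n => s ∣ r.val), ω ^ (((j : ZMod n) * r).val)
      = if (n / s) ∣ j then ((n / s : ℕ) : ℂ) else 0 := by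
  have hspos : 0 < s := Nat.pos_of_ne_zero hs0
  have htrans : ∑ i ∈ Finset.range (n / s), (ω ^ (j * s)) ^ i
      = ∑ r ∈ Finset.univ.filter (fun r : ZMod n => s ∣ r.val), ω ^ (((j : ZMod n) * r).val) := by
    refine Finset.sum_nbij' (i := fun (i : ℕ) => (((s * i : ℕ)) : ZMod n))
      (j := fun (r : ZMod n) => r.val / s) ?_ ?_ ?_ ?_ ?_
    · intro i hi
      have hlt : s * i < n := (Nat.lt_div_iff_mul_lt' hs i).mp (Finset.mem_range.mp hi)
      rw [Finset.mem_filter]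
      refine ⟨Finset.mem_univ _, ?_⟩
      rw [ZMod.val_cast_of_lt hlt]
      exact Dvd.intro i rfl
    · intro r hr
      exact Finset.mem_range.mpr (Nat.div_lt_div_of_lt_of_dvd hs (ZMod.val_lt r))
    · intro i hi
      have hlt : s * i < n := (Nat.lt_div_iff_mul_lt' hs i).mp (Finset.mem_range.mp hi)
      show ((s * i : ℕ) : ZMod n).val / s = i
      rw [ZMod.val_cast_of_lt hlt, Nat.mul_div_cancel_left i hspos]
    · intro r hr
      obtain ⟨-, hdvd⟩ := Finset.mem_filter.mp hr
      show (((s * (r.val / s) : ℕ)) : ZMod n) = r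
      rw [Nat.mul_div_cancel' hdvd, ZMod.natCast_val, ZMod.cast_id]
    · intro i hi
      have hlt : s * i < n := (Nat.lt_div_iff_mul_lt' hs i).mp (Finset.mem_range.mp hi)
      show (ω ^ (j * s)) ^ i = ω ^ (((j : ZMod n) * ((s * i : ℕ) : ZMod n)).val)
      rw [← pow_mul, ← Nat.cast_mul, ZMod.val_natCast, ← pow_mod hω, mul_assoc]
  rw [← htrans]
  have hy : (ω ^ (j * s)) ^ (n / s) = 1 := by
    rw [← pow_mul, mul_assoc, Nat.mul_div_cancel' hs, mul_comm j n, pow_mul, hω.pow_eq_one, one_pow]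
  rw [geom_root _ _ hy]
  have hiff : (ω ^ (j * s) = 1) ↔ ((n / s) ∣ j) := by
    rw [hω.pow_eq_one_iff_dvd, Nat.div_dvd_iff_dvd_mul hs hspos, mul_comm s j]
  simp [hiff]

end Inner

section Key
variable {n : ℕ} (hn : 0 < n) {ω : ℂ} (hω : IsPrimitiveRoot ω n)
  (f : Polynomial ℕ) (F : ℕ → ℕ)
  (hF : ∀ j ∈ Finset.Icc 1 n, Polynomial.aeval (ω ^ j) f = (F j : ℂ))

include hn hω hF

lemma exists_B :
    ∃ B : ℕ → ℤ, ∀ j, j ∣ n → (F j : ℤ) = ∑ c ∈ j.divisors, (c : ℤ) * B c := by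
  haveI : NeZero n := ⟨hn.ne'⟩
  have hg : ∀ z w : ZMod n, Nat.gcd z.val n = Nat.gcd w.val n →
      Polynomial.aeval (ω ^ z.val) f = Polynomial.aeval (ω ^ w.val) f := by
    intro z w h
    rw [aeval_pow_eq_F_gcd hn hω f F hF, aeval_pow_eq_F_gcd hn hω f F hF, h]
  set E : ℕ → ℤ := fun d => (Ct f ((d : ZMod n)) : ℤ) with hE
  set B : ℕ → ℤ := fun s => ∑ x ∈ s.divisorsAntidiagonal,
      (ArithmeticFunction.moebius x.1) * E x.2 with hB
  have hEB : ∀ d : ℕ, 0 < d → ∑ s ∈ d.divisors, B s = E d := by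
    refine fun d hd =>
      (ArithmeticFunction.sum_eq_iff_sum_smul_moebius_eq (R := ℤ) (f := B) (g := E)).mpr ?_ d hd
    intro m _
    simp only [hB, smul_eq_mul]
  refine ⟨fun c => B (n / c), ?_⟩
  intro j hj
  have hj0 : j ≠ 0 := by rintro rfl; exact hn.ne' (Nat.eq_zero_of_zero_dvd hj)
  have hC : (F j : ℂ) = ∑ c ∈ j.divisors, (c : ℂ) * ((B (n / c) : ℤ) : ℂ) := by
    have hval : ((j : ZMod n)).val.gcd n = j := by
      rw [ZMod.val_natCast, gcd_mod hω, Nat.gcd_eq_left hj]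
    have h1 : (F j : ℂ) = Polynomial.aeval (ω ^ ((j : ZMod n)).val) f := by
      rw [aeval_pow_eq_F_gcd hn hω f F hF, hval]
    rw [h1, expand_aeval hω f]
    have h2 : ∀ r : ZMod n, (Ct f r : ℂ)
        = ∑ s ∈ n.divisors, (if s ∣ r.val then ((B s : ℤ) : ℂ) else 0) := by
      intro r
      have hgpos : 0 < Nat.gcd r.val n := Nat.gcd_pos_of_pos_right _ hn
      have h5 : (Nat.gcd r.val n).divisors = n.divisors.filter (fun s => s ∣ r.val) := by
        rw [← Nat.divisors_filter_dvd_of_dvd hn.ne' (Nat.gcd_dvd_right r.val n)]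
        apply Finset.filter_congr
        intro s hs
        constructor
        · intro h; exact (Nat.dvd_gcd_iff.mp h).1
        · intro h; exact Nat.dvd_gcd h (Nat.mem_divisors.mp hs).1
      have h6 : (Ct f r : ℤ) = ∑ s ∈ n.divisors.filter (fun s => s ∣ r.val), B s := by
        rw [Ct_gcd hω f hg r, ← h5]
        exact (hEB _ hgpos).symm
      have h7 : ((Ct f r : ℤ) : ℂ)
          = ((∑ s ∈ n.divisors.filter (fun s => s ∣ r.val), B s : ℤ) : ℂ) := congrArg _ h6
      push_cast at h7
      rw [h7, Finset.sum_filter]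
    simp only [h2, Finset.sum_mul]
    rw [Finset.sum_comm]
    have h7 : ∀ s ∈ n.divisors,
        (∑ r : ZMod n, (if s ∣ r.val then ((B s : ℤ) : ℂ) else 0) * ω ^ (((j : ZMod n) * r).val))
        = ((B s : ℤ) : ℂ) * (if (n / s) ∣ j then ((n / s : ℕ) : ℂ) else 0) := by
      intro s hs
      obtain ⟨hsn, -⟩ := Nat.mem_divisors.mp hs
      have hs0 : s ≠ 0 := by rintro rfl; exact hn.ne' (Nat.eq_zero_of_zero_dvd hsn)
      have hsplit : ∀ r : ZMod n,
          (if s ∣ r.val then ((B s : ℤ) : ℂ) else 0) * ω ^ (((j : ZMod n) * r).val)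
          = (if s ∣ r.val then ((B s : ℤ) : ℂ) * ω ^ (((j : ZMod n) * r).val) else 0) := by
        intro r; split_ifs <;> simp
      simp only [hsplit]
      rw [← Finset.sum_filter, ← Finset.mul_sum, inner_sum hω s hsn hs0 j]
    rw [Finset.sum_congr rfl h7]
    have h8 : ∀ s ∈ n.divisors,
        ((B s : ℤ) : ℂ) * (if (n / s) ∣ j then ((n / s : ℕ) : ℂ) else 0)
        = ((B (n / (n / s)) : ℤ) : ℂ) * (if (n / s) ∣ j then (((n / s) : ℕ) : ℂ) else 0) := by
      intro s hs
      rw [Nat.div_div_self (Nat.mem_divisors.mp hs).1 hn.ne']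
    rw [Finset.sum_congr rfl h8]
    have h10 := Nat.sum_div_divisors (α := ℂ) n
      (fun c => ((B (n / c) : ℤ) : ℂ) * (if c ∣ j then ((c : ℕ) : ℂ) else 0))
    rw [h10]
    have h9 : ∑ c ∈ n.divisors, ((B (n / c) : ℤ) : ℂ) * (if c ∣ j then ((c : ℕ) : ℂ) else 0)
        = ∑ c ∈ n.divisors.filter (fun c => c ∣ j), ((B (n / c) : ℤ) : ℂ) * ((c : ℕ) : ℂ) := by
      rw [Finset.sum_filter]
      apply Finset.sum_congr rfl
      intro c _
      split_ifs <;> simp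
    rw [h9, Nat.divisors_filter_dvd_of_dvd hn.ne' hj]
    apply Finset.sum_congr rfl
    intro c _
    ring
  apply Int.cast_injective (α := ℂ)
  push_cast
  push_cast at hC
  exact hC

end Key




lemma construct (n : ℕ) (hn : 0 < n) (a : ℕ → ℕ) (X : Type) [Fintype X]
    (hcard : Fintype.card X = ∑ c ∈ n.divisors, a c * c) :
    ∃ σ : Equiv.Perm X, σ ^ n = 1 ∧
      ∀ m : ℕ, m ∣ n → (Nat.card {x : X // (σ ^ m) x = x} = ∑ c ∈ m.divisors, a c * c) := by
  classical
  haveI inst : ∀ c : {d : ℕ // d ∈ n.divisors}, NeZero (c.1) :=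
    fun c => ⟨(Nat.pos_of_mem_divisors c.2).ne'⟩
  set T : Type := Σ c : {d : ℕ // d ∈ n.divisors}, (Fin (a c.1) × ZMod c.1) with hT
  set σT : Equiv.Perm T := Equiv.sigmaCongrRight
    (fun c => Equiv.prodCongr (Equiv.refl (Fin (a c.1))) (Equiv.addRight (1 : ZMod c.1))) with hσT
  have hst : ∀ t : T, σT t = ⟨t.1, (t.2.1, t.2.2 + 1)⟩ := fun t => rfl
  have hpow : ∀ (m : ℕ) (t : T), (σT ^ m) t = ⟨t.1, (t.2.1, t.2.2 + (m : ZMod t.1.1))⟩ := by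
    intro m
    induction m with
    | zero => intro t; simp
    | succ m ih =>
      intro t
      rw [pow_succ, Equiv.Perm.mul_apply, hst t]
      rw [ih ⟨t.1, (t.2.1, t.2.2 + 1)⟩]
      have : t.2.2 + 1 + (m : ZMod t.1.1) = t.2.2 + ((m + 1 : ℕ) : ZMod t.1.1) := by
        push_cast; ring
      simp only [this]
  have hfixiff : ∀ (m : ℕ) (t : T), ((σT ^ m) t = t) ↔ ((m : ZMod t.1.1) = 0) := by
    intro m t
    rw [hpow m t]
    constructor
    · intro h
      have h' : (⟨t.1, (t.2.1, t.2.2 + (m : ZMod t.1.1))⟩ : T) = ⟨t.1, t.2⟩ := by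
        rw [Sigma.eta]; exact h
      have h3 : (t.2.1, t.2.2 + (m : ZMod t.1.1)) = t.2 := eq_of_heq (Sigma.mk.inj_iff.mp h').2
      have h4 := congrArg Prod.snd h3
      simpa using h4
    · intro h; rw [h, add_zero]
  have hσTn : σT ^ n = 1 := by
    refine Equiv.ext fun t => ?_
    have := (hfixiff n t).mpr
      ((ZMod.natCast_eq_zero_iff n t.1.1).mpr (Nat.mem_divisors.mp t.1.2).1)
    simpa using this
  have hcount : ∀ m : ℕ, m ∣ n →
      Fintype.card {t : T // (σT ^ m) t = t} = ∑ c ∈ m.divisors, a c * c := by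
    intro m hm
    rw [Fintype.card_subtype]
    have h0 : Finset.filter (fun t : T => (σT ^ m) t = t) Finset.univ
        = Finset.filter (fun t : T => ((m : ZMod t.1.1) = 0)) Finset.univ := by
      apply Finset.filter_congr
      intro t _
      exact hfixiff m t
    rw [h0, Finset.card_filter]
    rw [← Finset.univ_sigma_univ, Finset.sum_sigma]
    have h5 : ∀ c : {d : ℕ // d ∈ n.divisors},
        (∑ y ∈ (Finset.univ : Finset (Fin (a c.1) × ZMod c.1)),
          if ((m : ZMod c.1) = 0) then 1 else 0)
        = if c.1 ∣ m then a c.1 * c.1 else 0 := by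
      intro c
      by_cases hdvd : c.1 ∣ m
      · have hz : ((m : ZMod c.1)) = 0 := (ZMod.natCast_eq_zero_iff m c.1).mpr hdvd
        simp [hz, hdvd, ZMod.card]
      · have hz : ¬((m : ZMod c.1) = 0) :=
          fun h => hdvd ((ZMod.natCast_eq_zero_iff m c.1).mp h)
        simp [hz, hdvd]
    rw [Finset.sum_congr rfl (fun c _ => h5 c)]
    rw [Finset.sum_coe_sort n.divisors (fun c => if c ∣ m then a c * c else 0)]
    rw [← Finset.sum_filter, Nat.divisors_filter_dvd_of_dvd hn.ne' hm]
  have hcardT : Fintype.card T = ∑ c ∈ n.divisors, a c * c := by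
    rw [Fintype.card_sigma]
    have h6 : ∀ c : {d : ℕ // d ∈ n.divisors},
        Fintype.card (Fin (a c.1) × ZMod c.1) = a c.1 * c.1 := by
      intro c; simp [ZMod.card]
    rw [Finset.sum_congr rfl (fun c _ => h6 c)]
    rw [Finset.sum_coe_sort n.divisors (fun c => a c * c)]
  have e : X ≃ T := Fintype.equivOfCardEq (by rw [hcard, hcardT])
  set σ : Equiv.Perm X := (e.trans σT).trans e.symm with hσ
  have hσpow : ∀ m : ℕ, σ ^ m = (e.trans (σT ^ m)).trans e.symm := by
    intro m
    induction m with
    | zero =>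
      ext x
      simp [Equiv.trans_apply]
    | succ m ih =>
      ext x
      rw [pow_succ, Equiv.Perm.mul_apply, ih, hσ]
      simp only [Equiv.trans_apply, Equiv.apply_symm_apply, pow_succ, Equiv.Perm.mul_apply]
  refine ⟨σ, ?_, ?_⟩
  · rw [hσpow n, hσTn]
    ext x
    simp [Equiv.trans_apply]
  · intro m hm
    have heq : {x : X // (σ ^ m) x = x} ≃ {t : T // (σT ^ m) t = t} := by
      refine Equiv.subtypeEquiv e ?_
      intro x
      rw [hσpow m]
      simp only [Equiv.trans_apply]
      rw [Equiv.symm_apply_eq]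
    rw [Nat.card_congr heq, Nat.card_eq_fintype_card]
    exact hcount m hm


lemma exists_B' {n : ℕ} (hn : 0 < n) {ω : ℂ} (hω : IsPrimitiveRoot ω n)
    (f : Polynomial ℕ) (F : ℕ → ℕ)
    (hF : ∀ j ∈ Finset.Icc 1 n, Polynomial.aeval (ω ^ j) f = (F j : ℂ)) :
    ∃ B : ℕ → ℤ, (∀ j, j ∣ n → (F j : ℤ) = ∑ c ∈ j.divisors, (c : ℤ) * B c) ∧
      (∀ k, k ∣ n →
        ∑ j ∈ k.divisors, (ArithmeticFunction.moebius (k / j) : ℤ) * (F j : ℤ) = k * B k) := by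
  obtain ⟨B, hB⟩ := exists_B hn hω f F hF
  refine ⟨B, hB, ?_⟩
  have hs : ∀ m k : ℕ, m ∣ k → k ∈ {d : ℕ | d ∣ n} → m ∈ {d : ℕ | d ∣ n} :=
    fun m k hmk hk => hmk.trans hk
  have hmain := (ArithmeticFunction.sum_eq_iff_sum_smul_moebius_eq_on (R := ℤ)
      (f := fun c => (c : ℤ) * B c) (g := fun j => (F j : ℤ)) {d : ℕ | d ∣ n} hs).mp
      (fun j _ hjn => (hB j hjn).symm)
  intro k hk
  have hk0 : 0 < k := Nat.pos_of_dvd_of_pos hk hn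
  have h2 := hmain k hk0 hk
  rw [← h2, ← Nat.sum_divisorsAntidiagonal'
    (f := fun a b => (ArithmeticFunction.moebius a : ℤ) * (F b : ℤ))]
  apply Finset.sum_congr rfl
  intro x _
  rw [smul_eq_mul]

lemma fix_card_eq (X : Type) [Fintype X] (σ : Equiv.Perm X) {n : ℕ} (hn : 0 < n)
    (hσ : σ ^ n = 1) (j : ℕ) (hj : j ∣ n) :
    Nat.card {x : X // (σ ^ j) x = x}
      = ∑ d ∈ j.divisors,
          (Finset.univ.filter (fun x : X => Function.minimalPeriod (⇑σ) x = d)).card := by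
  classical
  have hj0 : j ≠ 0 := by rintro rfl; exact hn.ne' (Nat.eq_zero_of_zero_dvd hj)
  have hiff : ∀ x : X, ((σ ^ j) x = x) ↔ (Function.minimalPeriod (⇑σ) x ∣ j) := by
    intro x
    rw [← Function.isPeriodicPt_iff_minimalPeriod_dvd]
    show _ ↔ (⇑σ)^[j] x = x
    rw [Equiv.Perm.iterate_eq_pow]
  rw [Nat.card_eq_fintype_card, Fintype.card_subtype]
  have h0 : Finset.filter (fun x : X => (σ ^ j) x = x) Finset.univ
      = Finset.filter (fun x => Function.minimalPeriod (⇑σ) x ∣ j) Finset.univ :=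
    Finset.filter_congr (fun x _ => hiff x)
  rw [h0]
  have hmaps : ∀ x ∈ Finset.univ.filter (fun x : X => Function.minimalPeriod (⇑σ) x ∣ j),
      Function.minimalPeriod (⇑σ) x ∈ j.divisors := fun x hx =>
    Nat.mem_divisors.mpr ⟨(Finset.mem_filter.mp hx).2, hj0⟩
  have hsum := Finset.sum_fiberwise_of_maps_to hmaps (fun _ => (1 : ℕ))
  rw [Finset.card_eq_sum_ones, ← hsum]
  apply Finset.sum_congr rfl
  intro d hd
  rw [← Finset.card_eq_sum_ones]
  congr 1
  rw [Finset.filter_filter]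
  apply Finset.filter_congr
  intro x _
  constructor
  · rintro ⟨-, h⟩; exact h
  · intro h; exact ⟨h ▸ (Nat.mem_divisors.mp hd).1, h⟩

end Stmt4

/-- Let f ∈ ℕ[q] take non-negative integer values F j at the n-th roots of
unity ω^j, and let X be any finite set of cardinality f(1).  There exists an action of the
cyclic group of order n on X (a permutation σ with σⁿ = 1) such that the number of fixed
points of σᵏ equals f(ωᵏ) for all k ∈ ℤ, if and only if ∑_{j ∣ k} μ(k/j) f(ω^j) ≥ 0 for every
divisor k of n. -/
theorem stmt_4 (n : ℕ) (hn : 0 < n) (ω : ℂ) (hω : IsPrimitiveRoot ω n)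
    (f : Polynomial ℕ) (F : ℕ → ℕ)
    (hF : ∀ j ∈ Finset.Icc 1 n, Polynomial.aeval (ω ^ j) f = (F j : ℂ))
    (X : Type) [Fintype X] (hX : Nat.card X = f.eval 1) :
    (∃ σ : Equiv.Perm X, σ ^ n = 1 ∧
        ∀ k : ℤ, (Nat.card {x : X // (σ ^ k) x = x} : ℂ) = Polynomial.aeval (ω ^ k) f) ↔
      (∀ k ∈ n.divisors, 0 ≤ ∑ j ∈ k.divisors, ArithmeticFunction.moebius (k / j) * (F j : ℤ)) := by
  classical
  constructor
  · -- forward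
    rintro ⟨σ, hσn, hfix⟩ k hk
    obtain ⟨hkd, -⟩ := Nat.mem_divisors.mp hk
    have hk0 : 0 < k := Nat.pos_of_dvd_of_pos hkd hn
    set P : X → ℕ := fun x => Function.minimalPeriod (⇑σ) x with hP
    have hFcard : ∀ j, 0 < j → j ∣ n →
        ∑ d ∈ j.divisors, ((Finset.univ.filter (fun x : X => P x = d)).card : ℤ) = (F j : ℤ) := by
      intro j hj0 hjdvd
      have h1 := hfix (j : ℤ)
      rw [zpow_natCast, zpow_natCast] at h1
      rw [hF j (Finset.mem_Icc.mpr ⟨hj0, Nat.le_of_dvd hn hjdvd⟩)] at h1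
      have h2 : Nat.card {x : X // (σ ^ j) x = x} = F j := by exact_mod_cast h1
      rw [Stmt4.fix_card_eq X σ hn hσn j hjdvd] at h2
      rw [← h2]
      push_cast
      rfl
    have hs : ∀ m k : ℕ, m ∣ k → k ∈ {d : ℕ | d ∣ n} → m ∈ {d : ℕ | d ∣ n} :=
      fun m k hmk hk => hmk.trans hk
    have hmain := (ArithmeticFunction.sum_eq_iff_sum_smul_moebius_eq_on (R := ℤ)
        (f := fun d => ((Finset.univ.filter (fun x : X => P x = d)).card : ℤ))
        (g := fun j => (F j : ℤ)) {d : ℕ | d ∣ n} hs).mp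
        (fun j hj0 hjn => hFcard j hj0 hjn) k hk0 hkd
    rw [← Nat.sum_divisorsAntidiagonal'
      (f := fun a b => (ArithmeticFunction.moebius a : ℤ) * (F b : ℤ))]
    have : ∑ x ∈ k.divisorsAntidiagonal, (ArithmeticFunction.moebius x.1 : ℤ) * (F x.2 : ℤ)
        = ∑ x ∈ k.divisorsAntidiagonal, ArithmeticFunction.moebius x.1 • ((F x.2 : ℤ)) := by
      apply Finset.sum_congr rfl; intro x _; rw [smul_eq_mul]
    rw [this, hmain]
    positivity
  · -- backward
    intro hpos
    obtain ⟨B, hB1, hB2⟩ := Stmt4.exists_B' hn hω f F hF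
    have hBpos : ∀ c, c ∣ n → 0 ≤ B c := by
      intro c hcd
      have hc : c ∈ n.divisors := Nat.mem_divisors.mpr ⟨hcd, hn.ne'⟩
      have h1 := hpos c hc
      rw [hB2 c hcd] at h1
      have hc0 : (0 : ℤ) < c := by exact_mod_cast Nat.pos_of_mem_divisors hc
      by_contra hneg
      push_neg at hneg
      nlinarith
    set a : ℕ → ℕ := fun c => (B c).toNat with ha
    have hFa : ∀ j, j ∣ n → F j = ∑ c ∈ j.divisors, a c * c := by
      intro j hj
      have h1 := hB1 j hj
      have h2 : ∑ c ∈ j.divisors, (c : ℤ) * B c = ∑ c ∈ j.divisors, ((a c * c : ℕ) : ℤ) := by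
        apply Finset.sum_congr rfl
        intro c hc
        have hcB : ((a c : ℤ)) = B c :=
          Int.toNat_of_nonneg (hBpos c ((Nat.mem_divisors.mp hc).1.trans hj))
        push_cast
        rw [hcB]
        ring
      rw [h2] at h1
      exact_mod_cast h1
    have hFn : F n = f.eval 1 := by
      have h1 := hF n (Finset.mem_Icc.mpr ⟨hn, le_refl n⟩)
      rw [hω.pow_eq_one] at h1
      have h2 : Polynomial.aeval (1 : ℂ) f = ((f.eval 1 : ℕ) : ℂ) := by
        rw [Polynomial.aeval_def, Polynomial.eval₂_at_one]
        simp
      rw [h2] at h1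
      exact_mod_cast h1.symm
    have hcardX : Fintype.card X = ∑ c ∈ n.divisors, a c * c := by
      rw [← Nat.card_eq_fintype_card, hX, ← hFn]
      exact hFa n dvd_rfl
    obtain ⟨σ, hσn, hσcount⟩ := Stmt4.construct n hn a X hcardX
    refine ⟨σ, hσn, ?_⟩
    intro k
    have hgdvd : (Int.gcd k (n : ℤ)) ∣ n := by
      have := Int.gcd_dvd_right (a := k) (b := (n : ℤ))
      exact_mod_cast this
    have hcardeq : Nat.card {x : X // (σ ^ k) x = x}
        = Nat.card {x : X // (σ ^ (Int.gcd k (n : ℤ))) x = x} :=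
      Nat.card_congr (Equiv.subtypeEquivRight (Stmt4.fix_gcd_iff hn σ hσn k))
    have hω0 : ω ≠ 0 := hω.ne_zero hn.ne'
    have hnz : (n : ℤ) ≠ 0 := by exact_mod_cast hn.ne'
    have hzpow : ω ^ k = ω ^ ((k % (n : ℤ)).toNat) := by
      conv_lhs => rw [← Int.mul_ediv_add_emod k (n : ℤ)]
      rw [zpow_add₀ hω0, zpow_mul, zpow_natCast, hω.pow_eq_one, one_zpow, one_mul,
        ← zpow_natCast, Int.toNat_of_nonneg (Int.emod_nonneg k hnz)]
    have hmodnonneg : 0 ≤ k % (n : ℤ) := Int.emod_nonneg k hnz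
    have hgcd1 : Int.gcd (k % (n : ℤ)) (n : ℤ) = Int.gcd k (n : ℤ) := by
      apply Nat.dvd_antisymm
      · have h1 : ((Int.gcd (k % (n : ℤ)) (n : ℤ) : ℤ)) ∣ k := by
          have hd : ((Int.gcd (k % (n : ℤ)) (n : ℤ) : ℤ)) ∣ k % (n : ℤ) + (n : ℤ) * (k / (n : ℤ)) :=
            dvd_add (Int.gcd_dvd_left _ _) (Dvd.dvd.mul_right (Int.gcd_dvd_right _ _) _)
          have hk2 : k % (n : ℤ) + (n : ℤ) * (k / (n : ℤ)) = k := by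
            rw [Int.emod_def]; ring
          rwa [hk2] at hd
        have h2 := Int.dvd_gcd h1 (Int.gcd_dvd_right _ _)
        exact_mod_cast h2
      · have h1 : ((Int.gcd k (n : ℤ) : ℤ)) ∣ k % (n : ℤ) := by
          rw [Int.emod_def]
          exact dvd_sub (Int.gcd_dvd_left _ _) (Dvd.dvd.mul_right (Int.gcd_dvd_right _ _) _)
        have h2 := Int.dvd_gcd h1 (Int.gcd_dvd_right _ _)
        exact_mod_cast h2
    have hgcd2 : Nat.gcd ((k % (n : ℤ)).toNat) n = Int.gcd k (n : ℤ) := by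
      rw [← hgcd1, Int.gcd_def, Int.natAbs_natCast]
      congr 1
      omega
    have hval : Polynomial.aeval (ω ^ k) f = ((F (Int.gcd k (n : ℤ)) : ℕ) : ℂ) := by
      rw [hzpow, Stmt4.aeval_pow_eq_F_gcd hn hω f F hF, hgcd2]
    rw [hval, hcardeq, hσcount _ hgdvd, ← hFa _ hgdvd]
end

section
/- Let f(q) = q^5 + 3q^3 + q + 10 and let ω_6 be a primitive 6-th root of unity. Then f(ω_6^j) takes the values 8, 12, 5, 12, 8, 15 for j = 1, …, 6 (in particular f(ω_6^j) ∈ ℕ for all j), yet there is no action of the cyclic group C_6 of order 6 on a set X of cardinality f(1) = 15 (equivalently, no permutation σ of X with σ^6 = identity) such that |{x ∈ X : σ^k(x) = x}| = f(ω_6^k) for all k ∈ ℤ. -/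
/-- The polynomial f(q) = q⁵ + 3q³ + q + 10 takes the values 8, 12, 5, 12,
8, 15 at ω₆, ω₆², …, ω₆⁶ — in particular non-negative integer values — yet there is no action
of the cyclic group of order 6 on a set of cardinality f(1) = 15 whose fixed-point counts are
given by f at the 6-th roots of unity. -/
theorem stmt_5 (ω : ℂ) (hω : IsPrimitiveRoot ω 6)
    (f : Polynomial ℕ)
    (hf : f = Polynomial.X ^ 5 + 3 * Polynomial.X ^ 3 + Polynomial.X + 10) :
    (Polynomial.aeval (ω ^ 1) f = 8 ∧ Polynomial.aeval (ω ^ 2) f = 12 ∧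
     Polynomial.aeval (ω ^ 3) f = 5 ∧ Polynomial.aeval (ω ^ 4) f = 12 ∧
     Polynomial.aeval (ω ^ 5) f = 8 ∧ Polynomial.aeval (ω ^ 6) f = 15) ∧
    ∀ (X : Type) (_ : Fintype X), Nat.card X = 15 →
      ¬ ∃ σ : Equiv.Perm X, σ ^ 6 = 1 ∧
        ∀ k : ℤ, (Nat.card {x : X // (σ ^ k) x = x} : ℂ) = Polynomial.aeval (ω ^ k) f := by
  have h6 : ω ^ 6 = 1 := hω.pow_eq_one
  have h3ne : ω ^ 3 ≠ 1 := hω.pow_ne_one_of_pos_of_lt (by norm_num) (by norm_num)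
  have h2ne : ω ^ 2 ≠ 1 := hω.pow_ne_one_of_pos_of_lt (by norm_num) (by norm_num)
  have h3 : ω ^ 3 = -1 := by
    have hm : (ω ^ 3 - 1) * (ω ^ 3 + 1) = 0 := by
      have h' : (ω ^ 3) ^ 2 = 1 := by rw [← pow_mul]; exact h6
      linear_combination h'
    rcases mul_eq_zero.mp hm with h | h
    · exact absurd (sub_eq_zero.mp h) h3ne
    · exact eq_neg_of_add_eq_zero_left h
  have hne : ω + 1 ≠ 0 := by
    intro h
    apply h2ne
    have : ω = -1 := eq_neg_of_add_eq_zero_left h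
    rw [this]; ring
  have h2 : ω ^ 2 - ω + 1 = 0 := by
    have : (ω + 1) * (ω ^ 2 - ω + 1) = 0 := by linear_combination h3
    rcases mul_eq_zero.mp this with h | h
    · exact absurd h hne
    · exact h
  have hv1 : Polynomial.aeval (ω ^ 1) f = 8 := by
    simp only [hf, map_add, map_mul, map_pow, Polynomial.aeval_X, map_ofNat]
    linear_combination (2 + 3*ω + ω^2 + ω^3) * h2
  have hv2 : Polynomial.aeval (ω ^ 2) f = 12 := by
    simp only [hf, map_add, map_mul, map_pow, Polynomial.aeval_X, map_ofNat]
    linear_combination (-2 - 2*ω + ω^2 + 3*ω^3 + 2*ω^4 - ω^5 + ω^7 + ω^8) * h2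
  have hv3 : Polynomial.aeval (ω ^ 3) f = 5 := by
    simp only [hf, map_add, map_mul, map_pow, Polynomial.aeval_X, map_ofNat]
    linear_combination (5 + 5*ω - 4*ω^3 - 4*ω^4 + 4*ω^6 + 4*ω^7 - ω^9 - ω^10 + ω^12 + ω^13) * h2
  have hv4 : Polynomial.aeval (ω ^ 4) f = 12 := by
    simp only [hf, map_add, map_mul, map_pow, Polynomial.aeval_X, map_ofNat]
    linear_combination (-2 - 2*ω + 2*ω^3 + 3*ω^4 + ω^5 - 2*ω^6 - 3*ω^7 - ω^8 + 2*ω^9 + 3*ω^10 + ω^11 + ω^12 - ω^14 - ω^15 + ω^17 + ω^18) * h2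
  have hv5 : Polynomial.aeval (ω ^ 5) f = 8 := by
    simp only [hf, map_add, map_mul, map_pow, Polynomial.aeval_X, map_ofNat]
    linear_combination (2 + 2*ω - 2*ω^3 - 2*ω^4 + ω^5 + 3*ω^6 + 2*ω^7 - ω^8 - 3*ω^9 - 2*ω^10 + ω^11 + 3*ω^12 + 2*ω^13 - ω^14 + ω^16 + ω^17 - ω^19 - ω^20 + ω^22 + ω^23) * h2
  have hv6 : Polynomial.aeval (ω ^ 6) f = 15 := by
    simp only [hf, map_add, map_mul, map_pow, Polynomial.aeval_X, map_ofNat]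
    linear_combination (-5 - 5*ω + 5*ω^3 + 5*ω^4 - 4*ω^6 - 4*ω^7 + 4*ω^9 + 4*ω^10 - 4*ω^12 - 4*ω^13 + 4*ω^15 + 4*ω^16 - ω^18 - ω^19 + ω^21 + ω^22 - ω^24 - ω^25 + ω^27 + ω^28) * h2
  refine ⟨⟨hv1, hv2, hv3, hv4, hv5, hv6⟩, ?_⟩
  intro X _ _ ⟨σ, _, hfix⟩
  have e1 : (Nat.card {x : X // (σ ^ (1:ℤ)) x = x} : ℂ) = 8 := by
    rw [hfix 1]; rw [zpow_one]
    simpa using hv1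
  have e3 : (Nat.card {x : X // (σ ^ (3:ℤ)) x = x} : ℂ) = 5 := by
    rw [hfix 3]
    have : ω ^ (3:ℤ) = ω ^ (3:ℕ) := by exact_mod_cast rfl
    rw [this]
    simpa using hv3
  have n1 : Nat.card {x : X // (σ ^ (1:ℤ)) x = x} = 8 := by exact_mod_cast e1
  have n3 : Nat.card {x : X // (σ ^ (3:ℤ)) x = x} = 5 := by exact_mod_cast e3
  have hle : Nat.card {x : X // (σ ^ (1:ℤ)) x = x} ≤
      Nat.card {x : X // (σ ^ (3:ℤ)) x = x} := by
    apply Nat.card_le_card_of_injective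
      (fun y => ⟨y.1, by
        have hx : σ y.1 = y.1 := by simpa using y.2
        show (σ ^ (3:ℤ)) y.1 = y.1
        have : (σ ^ (3:ℤ)) = σ ^ (3:ℕ) := by exact_mod_cast rfl
        rw [this]
        simp [pow_succ, Equiv.Perm.mul_apply, hx]⟩)
    intro a b hab
    simpa [Subtype.ext_iff] using hab
  omega
end

section
/- Let n be a positive integer and let A = (a_{ij}) be an n × n matrix with non-negative integer entries (rows indexed by i = 0, …, n−1, columns by j = 1, …, n) satisfying, for each 1 ≤ k ≤ n, the equations ∑_{0 ≤ i < n, 1 ≤ j ≤ n} a_{ij} ω_n^{ki} = ∑_{0 ≤ i < n} ∑_{j | k} a_{ij}, where ω_n is a fixed primitive n-th root of unity. Then there exists a finite set X with an action of the cyclic group C_n of order n and a statistic τ : X → ℕ such that for all i, j, a_{ij} equals the number of x ∈ X with τ(x) ≡ i (mod n) and order exactly j under C_n, and the triple (X, C_n, ∑_{x∈X} q^{τ(x)}) exhibits the cyclic sieving phenomenon. -/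
open Finset

-- geometric sum
lemma aux_geom (ζ : ℂ) (m : ℕ) (h : ζ ^ m = 1) :
    ∑ s ∈ range m, ζ ^ s = if ζ = 1 then (m : ℂ) else 0 := by
  split_ifs with h1
  · simp [h1]
  · have := geom_sum_mul ζ m
    rw [h, sub_self] at this
    rcases mul_eq_zero.1 this with h2 | h2
    · exact h2
    · exact absurd (sub_eq_zero.1 h2) h1

lemma aux_shift (n : ℕ) (f : ℕ → ℂ) (h : f n = f 0) :
    ∑ k ∈ Icc 1 n, f k = ∑ k ∈ range n, f k := by
  have hins : range (n + 1) = insert 0 (Icc 1 n) := by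
    ext x; simp [Finset.mem_range, Finset.mem_Icc]; omega
  have h0 : (0 : ℕ) ∉ Icc 1 n := by simp
  have h1 := Finset.sum_range_succ f n
  rw [hins, Finset.sum_insert h0] at h1
  have := h1
  rw [← h] at this
  linear_combination this

lemma aux_anti {a b n : ℕ} (hn : 0 < n) (hab : a ∣ b) (hbn : b ∣ n) : n / b ∣ n / a := by
  obtain ⟨c, rfl⟩ := hab
  obtain ⟨d, rfl⟩ := hbn
  have ha : 0 < a := by
    rcases Nat.eq_zero_or_pos a with h | h
    · subst h; simp at hn
    · exact h
  have hac : 0 < a * c := by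
    rcases Nat.eq_zero_or_pos (a * c) with h | h
    · rw [h] at hn; simp at hn
    · exact h
  have e1 : a * c * d / (a * c) = d := Nat.mul_div_cancel_left _ hac
  have e2 : a * c * d / a = c * d := by
    rw [Nat.mul_assoc, Nat.mul_div_cancel_left _ ha]
  rw [e1, e2]
  exact Dvd.intro_left c rfl

lemma aux_divdvd {n t j : ℕ} (hn : 0 < n) (ht : t ∣ n) (hj : j ∣ n) :
    n / t ∣ n / j ↔ j ∣ t := by
  constructor
  · intro h
    have h2 : n / (n / j) ∣ n / (n / t) := aux_anti hn h (Nat.div_dvd_of_dvd hj)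
    rwa [Nat.div_div_self hj hn.ne', Nat.div_div_self ht hn.ne'] at h2
  · intro h
    exact aux_anti hn h ht

lemma aux_card_true {Y : Type*} [Fintype Y] {c : Prop} (hc : c) :
    Nat.card {_y : Y // c} = Fintype.card Y := by
  rw [Nat.card_congr (Equiv.subtypeUnivEquiv fun _ => hc), Nat.card_eq_fintype_card]

lemma aux_card_false {Y : Type*} {c : Prop} (hc : ¬ c) :
    Nat.card {_y : Y // c} = 0 := by
  have : IsEmpty {_y : Y // c} := ⟨fun y => hc y.2⟩
  simp

lemma aux_card_sigma {J : Type*} [Fintype J] {B : J → Type*} [∀ j, Fintype (B j)]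
    (Q : (Σ j, B j) → Prop) (P : ∀ j, B j → Prop) (hQP : ∀ j y, Q ⟨j, y⟩ ↔ P j y) :
    Nat.card {x : Σ j, B j // Q x} = ∑ j, Nat.card {y : B j // P j y} := by
  classical
  have e : {x : Σ j, B j // Q x} ≃ Σ j, {y : B j // P j y} :=
    { toFun := fun x => ⟨x.1.1, x.1.2, (hQP x.1.1 x.1.2).1 (by
        have := x.2; rwa [show x.1 = ⟨x.1.1, x.1.2⟩ from rfl] at this)⟩
      invFun := fun p => ⟨⟨p.1, p.2.1⟩, (hQP p.1 p.2.1).2 p.2.2⟩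
      left_inv := by rintro ⟨⟨j, y⟩, h⟩; rfl
      right_inv := by rintro ⟨j, y, h⟩; rfl }
  rw [Nat.card_congr e, Nat.card_eq_fintype_card, Fintype.card_sigma]
  congr 1
  ext j
  rw [Nat.card_eq_fintype_card]

lemma aux_sInf {j : ℕ} (hj : 0 < j) : sInf {l : ℕ | 0 < l ∧ j ∣ l} = j := by
  apply le_antisymm
  · exact Nat.sInf_le ⟨hj, dvd_refl j⟩
  · have hne : {l : ℕ | 0 < l ∧ j ∣ l}.Nonempty := ⟨j, hj, dvd_refl j⟩
    exact le_csInf hne fun l hl => Nat.le_of_dvd hl.1 hl.2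

lemma aux_zpow {G : Type*} [Group G] (g : G) (n : ℕ) (hn : 0 < n) (h : g ^ n = 1) (k : ℤ) :
    g ^ k = g ^ (k % (n : ℤ)).toNat := by
  have hmod : 0 ≤ k % (n : ℤ) := Int.emod_nonneg k (by exact_mod_cast hn.ne')
  conv_lhs => rw [← Int.mul_ediv_add_emod k (n : ℤ)]
  rw [zpow_add, zpow_mul, zpow_natCast, h, one_zpow, one_mul,
    ← zpow_natCast, Int.toNat_of_nonneg hmod]

lemma aux_zpow0 (ω : ℂ) (n : ℕ) (hn : 0 < n) (h : ω ^ n = 1) (k : ℤ) :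
    ω ^ k = ω ^ (k % (n : ℤ)).toNat := by
  have hω : ω ≠ 0 := by
    intro h0
    rw [h0, zero_pow hn.ne'] at h
    exact zero_ne_one h
  have hmod : 0 ≤ k % (n : ℤ) := Int.emod_nonneg k (by exact_mod_cast hn.ne')
  conv_lhs => rw [← Int.mul_ediv_add_emod k (n : ℤ)]
  rw [zpow_add₀ hω, zpow_mul, zpow_natCast, h, one_zpow, one_mul,
    ← zpow_natCast, Int.toNat_of_nonneg hmod]

lemma aux_cyc_pow (e m : ℕ) [NeZero m] (l : ℕ) (p : Fin e × ZMod m) :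
    ((Equiv.prodCongr (Equiv.refl (Fin e)) (Equiv.addLeft (1 : ZMod m))) ^ l) p
      = (p.1, (l : ZMod m) + p.2) := by
  induction l with
  | zero => simp
  | succ l ih =>
    rw [pow_succ', Equiv.Perm.mul_apply, ih]
    have h1 : (Equiv.prodCongr (Equiv.refl (Fin e)) (Equiv.addLeft (1 : ZMod m)))
        ((p.1 : Fin e), ((l : ZMod m) + p.2)) = (p.1, 1 + ((l : ZMod m) + p.2)) := rfl
    rw [h1]
    simp only [Nat.cast_add, Nat.cast_one]
    ring_nf

lemma aux_cyc_fix (e m : ℕ) [NeZero m] (l : ℕ) (p : Fin e × ZMod m) :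
    ((Equiv.prodCongr (Equiv.refl (Fin e)) (Equiv.addLeft (1 : ZMod m))) ^ l) p = p
      ↔ m ∣ l := by
  rw [aux_cyc_pow, Prod.ext_iff]
  constructor
  · intro h
    have h2 : (l : ZMod m) = 0 := by
      have := h.2
      simpa using congrArg (fun z => z - p.2) this
    exact (ZMod.natCast_eq_zero_iff l m).1 h2
  · intro h
    have h2 : (l : ZMod m) = 0 := (ZMod.natCast_eq_zero_iff l m).2 h
    exact ⟨rfl, by rw [h2, zero_add]⟩

lemma aux_inv (n : ℕ) (hn : 0 < n) (ω : ℂ) (hω : IsPrimitiveRoot ω n) (c d : ℕ → ℕ)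
    (hF2 : ∀ k ∈ Icc 1 n, ∑ i' ∈ range n, (c i' : ℂ) * ω ^ (k * i')
      = ∑ t ∈ n.divisors.filter (· ∣ k), (d t : ℂ))
    (i : ℕ) (hi : i < n) :
    (n * c i : ℕ) = ∑ t ∈ n.divisors, if (n / t) ∣ i then d t * (n / t) else 0 := by
  have hω1 : ω ^ n = 1 := hω.pow_eq_one
  set F : ℕ → ℂ := fun k => ∑ i' ∈ range n, (c i' : ℂ) * ω ^ (k * i') with hF
  -- key1
  have key1 : ∑ k ∈ range n, F k * ω ^ (k * (n - i)) = (n : ℂ) * (c i) := by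
    have step : ∀ k, F k * ω ^ (k * (n - i))
        = ∑ i' ∈ range n, (c i' : ℂ) * (ω ^ (i' + (n - i))) ^ k := by
      intro k
      rw [hF]
      rw [Finset.sum_mul]
      apply Finset.sum_congr rfl
      intro i' _
      rw [mul_assoc, ← pow_add, ← pow_mul, ← mul_add, mul_comm k (i' + (n - i)), pow_mul]
    simp only [step]
    rw [Finset.sum_comm]
    have inner : ∀ i' ∈ range n, ∑ k ∈ range n, (c i' : ℂ) * (ω ^ (i' + (n - i))) ^ k
        = if i' = i then (n : ℂ) * c i else 0 := by
      intro i' hi'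
      rw [← Finset.mul_sum, aux_geom _ n (by rw [← pow_mul, mul_comm, pow_mul, hω1, one_pow])]
      have hdvd_iff : ω ^ (i' + (n - i)) = 1 ↔ i' = i := by
        rw [hω.pow_eq_one_iff_dvd]
        constructor
        · intro h
          have hpos : 0 < i' + (n - i) := by omega
          have hle : n ≤ i' + (n - i) := Nat.le_of_dvd hpos h
          have hlt : i' + (n - i) - n < n := by
            simp at hi'; omega
          have h2 : n ∣ i' + (n - i) - n := Nat.dvd_sub h dvd_rfl
          have h3 : i' + (n - i) - n = 0 := Nat.eq_zero_of_dvd_of_lt h2 hlt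
          omega
        · intro h; subst h; rw [show i' + (n - i') = n by omega]
      by_cases hcase : i' = i
      · rw [if_pos ((hdvd_iff).2 hcase), if_pos hcase, hcase, mul_comm]
      · rw [if_neg (fun h => hcase (hdvd_iff.1 h)), if_neg hcase, mul_zero]
    rw [Finset.sum_congr rfl inner, Finset.sum_ite_eq' (range n) i
      (fun _ => (n : ℂ) * c i), if_pos (by simpa using hi)]
  -- key2
  have key2 : ∑ k ∈ range n, F k * ω ^ (k * (n - i))
      = ∑ t ∈ n.divisors, if (n / t) ∣ i then (d t : ℂ) * ((n / t : ℕ) : ℂ) else 0 := by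
    have h0n : F n * ω ^ (n * (n - i)) = F 0 * ω ^ (0 * (n - i)) := by
      have hFn : F n = F 0 := by
        rw [hF]
        apply Finset.sum_congr rfl
        intro i' _
        rw [pow_mul, hω1, one_pow, Nat.zero_mul, pow_zero]
      rw [hFn, pow_mul, hω1, one_pow, Nat.zero_mul, pow_zero]
    rw [← aux_shift n (fun k => F k * ω ^ (k * (n - i))) h0n]
    have hstep1 : ∀ k ∈ Icc 1 n, F k * ω ^ (k * (n - i))
        = ∑ t ∈ n.divisors, if t ∣ k then (d t : ℂ) * ω ^ (k * (n - i)) else 0 := by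
      intro k hk
      have hFk : F k = ∑ t ∈ filter (fun x => x ∣ k) n.divisors, (d t : ℂ) := hF2 k hk
      rw [hFk, Finset.sum_filter, Finset.sum_mul]
      apply Finset.sum_congr rfl
      intro t _
      split_ifs <;> simp
    rw [Finset.sum_congr rfl hstep1, Finset.sum_comm]
    apply Finset.sum_congr rfl
    intro t ht
    obtain ⟨htn, hn0⟩ := Nat.mem_divisors.1 ht
    have ht0 : 0 < t := Nat.pos_of_dvd_of_pos htn hn
    have htle : t ≤ n := Nat.le_of_dvd hn htn
    have hnt : t * (n / t) = n := Nat.mul_div_cancel' htn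
    have hnt0 : 0 < n / t := Nat.div_pos htle ht0
    rw [← Finset.sum_filter]
    have himg : (Icc 1 n).filter (fun k => t ∣ k) = (Icc 1 (n / t)).image (fun s => t * s) := by
      ext x
      simp only [Finset.mem_filter, Finset.mem_Icc, Finset.mem_image]
      constructor
      · rintro ⟨⟨hx1, hx2⟩, hdvd⟩
        refine ⟨x / t, ⟨?_, ?_⟩, (Nat.mul_div_cancel' hdvd)⟩
        · have : t ≤ x := Nat.le_of_dvd (by omega) hdvd
          exact Nat.one_le_div_iff ht0 |>.2 this
        · exact Nat.div_le_div_right hx2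
      · rintro ⟨s, ⟨hs1, hs2⟩, rfl⟩
        refine ⟨⟨by nlinarith, ?_⟩, Dvd.intro s rfl⟩
        calc t * s ≤ t * (n / t) := Nat.mul_le_mul_left t hs2
          _ = n := hnt
    rw [himg, Finset.sum_image (by intro x _ y _ h; exact Nat.eq_of_mul_eq_mul_left ht0 h)]
    have hterm : ∀ s, (d t : ℂ) * ω ^ (t * s * (n - i)) = (d t : ℂ) * (ω ^ (t * (n - i))) ^ s := by
      intro s
      rw [← pow_mul]
      congr 2
      ring
    simp only [hterm]
    rw [← Finset.mul_sum]
    have hshift2 : (fun s => (ω ^ (t * (n - i))) ^ s) (n / t) = (fun s => (ω ^ (t * (n - i))) ^ s) 0 := by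
      simp only [pow_zero, ← pow_mul]
      rw [show t * (n - i) * (n / t) = (n - i) * (t * (n / t)) by ring, hnt, mul_comm, pow_mul,
        hω1, one_pow]
    rw [aux_shift (n / t) _ hshift2, aux_geom _ (n / t) (by
      rw [← pow_mul, show t * (n - i) * (n / t) = (n - i) * (t * (n / t)) by ring, hnt,
        mul_comm, pow_mul, hω1, one_pow])]
    have hcond : ω ^ (t * (n - i)) = 1 ↔ (n / t) ∣ i := by
      rw [hω.pow_eq_one_iff_dvd]
      constructor
      · intro h
        have h2 : t * (n / t) ∣ t * (n - i) := by rwa [hnt]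
        have h3 : (n / t) ∣ (n - i) := (mul_dvd_mul_iff_left ht0.ne').1 h2
        have h4 : (n / t) ∣ n := Nat.div_dvd_of_dvd htn
        have := Nat.dvd_sub h4 h3
        rwa [Nat.sub_sub_self (le_of_lt hi)] at this
      · intro h
        have h4 : (n / t) ∣ n := Nat.div_dvd_of_dvd htn
        have h3 : (n / t) ∣ (n - i) := Nat.dvd_sub h4 h
        have h2 : t * (n / t) ∣ t * (n - i) := mul_dvd_mul_left t h3
        rwa [hnt] at h2
    by_cases hc : (n / t) ∣ i
    · rw [if_pos (hcond.2 hc), if_pos hc]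
    · rw [if_neg (fun h => hc (hcond.1 h)), if_neg hc, mul_zero]
  -- combine
  rw [key2] at key1
  have : ((∑ t ∈ n.divisors, if (n / t) ∣ i then d t * (n / t) else 0 : ℕ) : ℂ)
      = ((n * c i : ℕ) : ℂ) := by
    rw [Nat.cast_sum, show ((n * c i : ℕ) : ℂ) = (n : ℂ) * (c i : ℂ) by push_cast; ring,
      ← key1]
    apply Finset.sum_congr rfl
    intro t _
    split_ifs <;> push_cast <;> ring
  exact_mod_cast this.symm

/-- Every non-negative integer n × n matrix (a i j) satisfying the CSP
equations ∑_{i,j} a i j ω^{ki} = ∑_i ∑_{j ∣ k} a i j (1 ≤ k ≤ n) is realized by an actual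
cyclic sieving phenomenon: there is a finite set X, a permutation σ with σⁿ = 1 and a
statistic τ such that a i j counts the x ∈ X with τ x ≡ i (mod n) of order exactly j, and the
fixed-point count of σᵏ equals ∑_{x} (ωᵏ)^{τ x} for all k ∈ ℤ. -/
theorem stmt_7 (n : ℕ) (hn : 0 < n) (ω : ℂ) (hω : IsPrimitiveRoot ω n)
    (a : ℕ → ℕ → ℕ)
    (ha : ∀ k ∈ Finset.Icc 1 n,
        ∑ i ∈ Finset.range n, ∑ j ∈ Finset.Icc 1 n, (a i j : ℂ) * ω ^ (k * i) =
        ∑ i ∈ Finset.range n, ∑ j ∈ (Finset.Icc 1 n).filter (· ∣ k), (a i j : ℂ)) :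
    ∃ (X : Type) (inst : Fintype X) (σ : Equiv.Perm X) (τ : X → ℕ),
      σ ^ n = 1 ∧
      (∀ i ∈ Finset.range n, ∀ j ∈ Finset.Icc 1 n,
        a i j = Nat.card {x : X // τ x % n = i ∧ sInf {l : ℕ | 0 < l ∧ (σ ^ l) x = x} = j}) ∧
      (∀ k : ℤ, (Nat.card {x : X // (σ ^ k) x = x} : ℂ) =
        ∑ x ∈ @Finset.univ X inst, (ω ^ k) ^ τ x) := by
  classical
  have hω1 : ω ^ n = 1 := hω.pow_eq_one
  set d : ℕ → ℕ := fun j => ∑ i ∈ Finset.range n, a i j with hdd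
  set c : ℕ → ℕ := fun i => ∑ j ∈ Finset.Icc 1 n, a i j with hcc
  -- reformulated hypothesis
  have hF : ∀ k ∈ Finset.Icc 1 n,
      ∑ i ∈ Finset.range n, (c i : ℂ) * ω ^ (k * i)
        = ∑ j ∈ (Finset.Icc 1 n).filter (· ∣ k), (d j : ℂ) := by
    intro k hk
    have h1 := ha k hk
    have hL : ∑ i ∈ Finset.range n, (c i : ℂ) * ω ^ (k * i)
        = ∑ i ∈ Finset.range n, ∑ j ∈ Finset.Icc 1 n, (a i j : ℂ) * ω ^ (k * i) := by
      apply Finset.sum_congr rfl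
      intro i _
      rw [← Finset.sum_mul, hcc]
      push_cast
      ring
    have hR : ∑ j ∈ (Finset.Icc 1 n).filter (· ∣ k), (d j : ℂ)
        = ∑ i ∈ Finset.range n, ∑ j ∈ (Finset.Icc 1 n).filter (· ∣ k), (a i j : ℂ) := by
      rw [Finset.sum_comm]
      apply Finset.sum_congr rfl
      intro j _
      rw [hdd]
      push_cast
      ring
    rw [hL, hR, h1]
  -- vanishing for non-divisors
  have hvan : ∀ j ∈ Finset.Icc 1 n, ¬ j ∣ n → d j = 0 := by
    intro j hj hjn
    have hkn : n ∈ Finset.Icc 1 n := Finset.mem_Icc.2 ⟨hn, le_refl n⟩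
    have h1 := hF n hkn
    have hL : ∑ i ∈ Finset.range n, (c i : ℂ) * ω ^ (n * i)
        = ((∑ j' ∈ Finset.Icc 1 n, d j' : ℕ) : ℂ) := by
      have : ∀ i ∈ Finset.range n, (c i : ℂ) * ω ^ (n * i) = (c i : ℂ) := by
        intro i _
        rw [pow_mul, hω1, one_pow, mul_one]
      rw [Finset.sum_congr rfl this]
      rw [show (∑ j' ∈ Finset.Icc 1 n, d j' : ℕ) = ∑ i ∈ Finset.range n, c i from ?_]
      · push_cast; rfl
      · rw [Finset.sum_comm]
    have hR : ∑ j' ∈ (Finset.Icc 1 n).filter (· ∣ n), (d j' : ℂ)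
        = ((∑ j' ∈ (Finset.Icc 1 n).filter (· ∣ n), d j' : ℕ) : ℂ) := by
      push_cast; rfl
    rw [hL, hR] at h1
    have h2 : ∑ j' ∈ Finset.Icc 1 n, d j' = ∑ j' ∈ (Finset.Icc 1 n).filter (· ∣ n), d j' :=
      Nat.cast_injective h1
    have h3 : ∑ j' ∈ (Finset.Icc 1 n).filter (fun x => ¬ x ∣ n), d j' = 0 := by
      have h4 := Finset.sum_filter_add_sum_filter_not (Finset.Icc 1 n) (· ∣ n) d
      omega
    rw [Finset.sum_eq_zero_iff] at h3
    exact h3 j (Finset.mem_filter.2 ⟨hj, hjn⟩)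
  have hvana : ∀ i ∈ Finset.range n, ∀ j, d j = 0 → a i j = 0 := by
    intro i hi j hdj
    rw [hdd] at hdj
    rw [Finset.sum_eq_zero_iff] at hdj
    exact hdj i hi
  -- divisors subset of Icc
  have hsub : ∀ k, n.divisors.filter (· ∣ k) ⊆ (Finset.Icc 1 n).filter (· ∣ k) := by
    intro k x hx
    rw [Finset.mem_filter, Nat.mem_divisors] at hx
    rw [Finset.mem_filter, Finset.mem_Icc]
    exact ⟨⟨Nat.pos_of_dvd_of_pos hx.1.1 hn, Nat.le_of_dvd hn hx.1.1⟩, hx.2⟩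
  have hF2 : ∀ k ∈ Finset.Icc 1 n,
      ∑ i' ∈ Finset.range n, (c i' : ℂ) * ω ^ (k * i')
        = ∑ t ∈ n.divisors.filter (· ∣ k), (d t : ℂ) := by
    intro k hk
    rw [hF k hk]
    symm
    apply Finset.sum_subset (hsub k)
    intro x hx hx2
    rw [Finset.mem_filter, Finset.mem_Icc] at hx
    have : ¬ x ∣ n := by
      intro hdvd
      exact hx2 (Finset.mem_filter.2 ⟨Nat.mem_divisors.2 ⟨hdvd, hn.ne'⟩, hx.2⟩)
    rw [hvan x (Finset.mem_Icc.2 hx.1) this, Nat.cast_zero]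
  -- divisibility j ∣ d j
  have hdvd : ∀ j ∈ n.divisors, j ∣ d j := by
    have key : ∀ m : ℕ, ∀ j ∈ n.divisors, n / j ≤ m → j ∣ d j := by
      intro m
      induction m with
      | zero =>
        intro j hj h0
        obtain ⟨hjn, -⟩ := Nat.mem_divisors.1 hj
        have : 0 < n / j := Nat.div_pos (Nat.le_of_dvd hn hjn) (Nat.pos_of_dvd_of_pos hjn hn)
        omega
      | succ m ih =>
        intro j hj hm
        obtain ⟨hjn, -⟩ := Nat.mem_divisors.1 hj
        have hj0 : 0 < j := Nat.pos_of_dvd_of_pos hjn hn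
        have hinv := aux_inv n hn ω hω c d hF2 (n / j % n) (Nat.mod_lt _ hn)
        set i0 := n / j % n with hi0
        have hcond : ∀ t ∈ n.divisors, ((n / t) ∣ i0 ↔ j ∣ t) := by
          intro t ht
          obtain ⟨htn, -⟩ := Nat.mem_divisors.1 ht
          rw [hi0, Nat.dvd_mod_iff (Nat.div_dvd_of_dvd htn)]
          exact aux_divdvd hn htn hjn
        have h5 : (∑ t ∈ n.divisors, if (n / t) ∣ i0 then d t * (n / t) else 0)
            = ∑ t ∈ n.divisors.filter (fun t => j ∣ t), d t * (n / t) := by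
          rw [Finset.sum_filter]
          apply Finset.sum_congr rfl
          intro t ht
          rw [if_congr (hcond t ht) rfl rfl]
        have hjmem : j ∈ n.divisors.filter (fun t => j ∣ t) :=
          Finset.mem_filter.2 ⟨hj, dvd_refl j⟩
        have hSdvd : n ∣ ∑ t ∈ (n.divisors.filter (fun t => j ∣ t)).erase j, d t * (n / t) := by
          apply Finset.dvd_sum
          intro t ht
          obtain ⟨htne, htf⟩ := Finset.mem_erase.1 ht
          obtain ⟨htdiv, hjt⟩ := Finset.mem_filter.1 htf
          obtain ⟨htn, -⟩ := Nat.mem_divisors.1 htdiv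
          have ht0 : 0 < t := Nat.pos_of_dvd_of_pos htn hn
          have hjlt : j < t := lt_of_le_of_ne (Nat.le_of_dvd ht0 hjt) (Ne.symm htne)
          have hntlt : n / t < n / j := by
            by_contra hge
            push_neg at hge
            have e1 : j * (n / j) = n := Nat.mul_div_cancel' hjn
            have e2 : t * (n / t) = n := Nat.mul_div_cancel' htn
            have h7 : 0 < n / t := Nat.div_pos (Nat.le_of_dvd hn htn) ht0
            nlinarith
          obtain ⟨et, het⟩ := ih t htdiv (by omega)
          refine ⟨et, ?_⟩
          rw [het]
          calc t * et * (n / t) = t * (n / t) * et := by ring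
            _ = n * et := by rw [Nat.mul_div_cancel' htn]
        obtain ⟨s, hs⟩ := hSdvd
        have hmain : n * c i0 = d j * (n / j) + n * s := by
          rw [hinv, h5, ← Finset.add_sum_erase _ _ hjmem, hs]
        have hj' : (0:ℤ) < ((n / j : ℕ) : ℤ) := by
          exact_mod_cast Nat.div_pos (Nat.le_of_dvd hn hjn) hj0
        have e1 : (j : ℤ) * ((n / j : ℕ) : ℤ) = (n : ℤ) := by
          exact_mod_cast Nat.mul_div_cancel' hjn
        have e2 : (n : ℤ) * (c i0 : ℤ) = (d j : ℤ) * ((n / j : ℕ) : ℤ) + (n : ℤ) * (s : ℤ) := by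
          exact_mod_cast hmain
        have hcast : ((n / j : ℕ) : ℤ) * (d j : ℤ)
            = ((n / j : ℕ) : ℤ) * ((j : ℤ) * ((c i0 : ℤ) - (s : ℤ))) := by
          linear_combination ((s : ℤ) - (c i0 : ℤ)) * e1 - e2
        have hfinal : (d j : ℤ) = (j : ℤ) * ((c i0 : ℤ) - (s : ℤ)) :=
          mul_left_cancel₀ (ne_of_gt hj') hcast
        exact Int.natCast_dvd_natCast.1 ⟨_, hfinal⟩
    intro j hj
    exact key (n / j) j hj (le_refl _)
  -- total count
  have htot : ∑ t ∈ n.divisors, d t = ∑ i' ∈ Finset.range n, c i' := by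
    have h1 := hF2 n (Finset.mem_Icc.2 ⟨hn, le_refl n⟩)
    have hfil : n.divisors.filter (· ∣ n) = n.divisors := by
      apply Finset.filter_true_of_mem
      intro x hx
      exact (Nat.mem_divisors.1 hx).1
    rw [hfil] at h1
    have h2 : ∀ i' ∈ Finset.range n, (c i' : ℂ) * ω ^ (n * i') = (c i' : ℂ) := by
      intro i' _
      rw [pow_mul, hω1, one_pow, mul_one]
    rw [Finset.sum_congr rfl h2] at h1
    exact_mod_cast h1.symm
  -- construction
  have hdpos : ∀ j : {j : ℕ // j ∈ n.divisors}, 0 < (j : ℕ) :=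
    fun j => Nat.pos_of_mem_divisors j.2
  let J := {j : ℕ // j ∈ n.divisors}
  let B : J → Type := fun j => Σ i : Fin n, Fin (a i (j : ℕ))
  let Z : J → Type := fun j => Fin (d (j : ℕ) / (j : ℕ)) × ZMod (j : ℕ)
  have hcardB : ∀ j : J, Fintype.card (B j) = d (j : ℕ) := by
    intro j
    rw [Fintype.card_sigma]
    simp only [Fintype.card_fin]
    exact Fin.sum_univ_eq_sum_range (fun i => a i (j : ℕ)) n
  let ψ : ∀ j : J, B j ≃ Z j := fun j =>
    haveI : NeZero ((j : ℕ)) := ⟨(hdpos j).ne'⟩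
    Fintype.equivOfCardEq (by
      rw [hcardB, Fintype.card_prod, Fintype.card_fin, ZMod.card]
      exact (Nat.div_mul_cancel (hdvd _ j.2)).symm)
  let cyc : ∀ j : J, Equiv.Perm (Z j) := fun j =>
    Equiv.prodCongr (Equiv.refl _) (Equiv.addLeft 1)
  let ρ : ∀ j : J, Equiv.Perm (B j) := fun j => ((ψ j).trans (cyc j)).trans (ψ j).symm
  let σ : Equiv.Perm (Σ j : J, B j) := Equiv.Perm.sigmaCongrRightHom B ρ
  let τ : (Σ j : J, B j) → ℕ := fun x => (x.2.1 : ℕ)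
  have hρpow : ∀ (j : J) (l : ℕ) (y : B j), (ρ j ^ l) y = (ψ j).symm ((cyc j ^ l) ((ψ j) y)) := by
    intro j l
    induction l with
    | zero => intro y; simp
    | succ l ihl =>
      intro y
      rw [pow_succ, Equiv.Perm.mul_apply, pow_succ, Equiv.Perm.mul_apply, ihl (ρ j y)]
      congr 2
      show (ψ j) (((ψ j).symm) ((cyc j) ((ψ j) y))) = _
      rw [Equiv.apply_symm_apply]
  have hfix : ∀ (j : J) (l : ℕ) (y : B j), ((ρ j ^ l) y = y) ↔ (j : ℕ) ∣ l := by
    intro j l y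
    haveI : NeZero ((j : ℕ)) := ⟨(hdpos j).ne'⟩
    rw [hρpow]
    constructor
    · intro h
      have h2 := congrArg (ψ j) h
      rw [Equiv.apply_symm_apply] at h2
      exact (aux_cyc_fix _ _ l _).1 h2
    · intro h
      rw [(aux_cyc_fix _ _ l ((ψ j) y)).2 h, Equiv.symm_apply_apply]
  have hσpow : ∀ (l : ℕ) (x : Σ j : J, B j), (σ ^ l) x = ⟨x.1, (ρ x.1 ^ l) x.2⟩ := by
    intro l x
    have h1 : σ ^ l = Equiv.Perm.sigmaCongrRightHom B (ρ ^ l) :=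
      (map_pow (Equiv.Perm.sigmaCongrRightHom B) ρ l).symm
    rw [h1]
    rcases x with ⟨j, y⟩
    rfl
  have hσfix : ∀ (l : ℕ) (j : J) (y : B j),
      ((σ ^ l) ⟨j, y⟩ = (⟨j, y⟩ : Σ j : J, B j)) ↔ (j : ℕ) ∣ l := by
    intro l j y
    rw [hσpow, Sigma.mk.inj_iff]
    simp only [heq_eq_eq, true_and]
    exact hfix j l y
  have hσn : σ ^ n = 1 := by
    apply Equiv.ext
    intro x
    rcases x with ⟨j, y⟩
    rw [Equiv.Perm.one_apply]
    exact (hσfix n j y).2 (Nat.mem_divisors.1 j.2).1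
  refine ⟨(Σ j : J, B j), inferInstance, σ, τ, hσn, ?_, ?_⟩
  · -- bullet 2
    intro i hi j hj
    rw [Finset.mem_range] at hi
    rw [Finset.mem_Icc] at hj
    have hpred : ∀ (j' : J) (y : B j'),
        (τ ⟨j', y⟩ % n = i ∧ sInf {l : ℕ | 0 < l ∧ (σ ^ l) ⟨j', y⟩ = (⟨j', y⟩ : Σ j : J, B j)} = j)
          ↔ ((y.1 : ℕ) = i ∧ (j' : ℕ) = j) := by
      intro j' y
      have hord : sInf {l : ℕ | 0 < l ∧ (σ ^ l) ⟨j', y⟩ = (⟨j', y⟩ : Σ j : J, B j)} = (j' : ℕ) := by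
        have hset : {l : ℕ | 0 < l ∧ (σ ^ l) ⟨j', y⟩ = (⟨j', y⟩ : Σ j : J, B j)}
            = {l : ℕ | 0 < l ∧ (j' : ℕ) ∣ l} := by
          ext l
          simp only [Set.mem_setOf_eq]
          exact and_congr_right fun _ => hσfix l j' y
        rw [hset, aux_sInf (hdpos j')]
      have hτ : τ ⟨j', y⟩ % n = (y.1 : ℕ) := Nat.mod_eq_of_lt y.1.isLt
      rw [hord, hτ]
    rw [aux_card_sigma _ (fun (j' : J) (y : B j') => ((y.1 : ℕ) = i ∧ (j' : ℕ) = j)) hpred]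
    have hinner : ∀ j' : J, Nat.card {y : B j' // (y.1 : ℕ) = i ∧ (j' : ℕ) = j}
        = if (j' : ℕ) = j then a i (j' : ℕ) else 0 := by
      intro j'
      rw [aux_card_sigma (B := fun i' : Fin n => Fin (a i' (j' : ℕ)))
        _ (fun (i' : Fin n) (_ : Fin (a i' (j' : ℕ))) => ((i' : ℕ) = i ∧ (j' : ℕ) = j))
        (fun i' m => Iff.rfl)]
      have hin2 : ∀ i' : Fin n, Nat.card {m : Fin (a i' (j' : ℕ)) // (i' : ℕ) = i ∧ (j' : ℕ) = j}
          = if ((i' : ℕ) = i ∧ (j' : ℕ) = j) then a i' (j' : ℕ) else 0 := by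
        intro i'
        by_cases h : ((i' : ℕ) = i ∧ (j' : ℕ) = j)
        · rw [if_pos h, aux_card_true h, Fintype.card_fin]
        · rw [if_neg h, aux_card_false h]
      rw [Finset.sum_congr rfl (fun i' _ => hin2 i')]
      by_cases hj' : (j' : ℕ) = j
      · simp only [hj', and_true, eq_self_iff_true, if_true]
        rw [Fin.sum_univ_eq_sum_range (fun x => if x = i then a x j else 0) n,
          Finset.sum_ite_eq' (Finset.range n) i (fun x => a x j),
          if_pos (Finset.mem_range.2 hi)]
      · simp only [hj', and_false, if_false, Finset.sum_const_zero]
    rw [Finset.sum_congr rfl (fun j' _ => hinner j')]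
    rw [← Finset.sum_subtype n.divisors (fun x => Iff.rfl) (fun t => if t = j then a i t else 0),
      Finset.sum_ite_eq' n.divisors j (fun t => a i t)]
    by_cases hjd : j ∈ n.divisors
    · rw [if_pos hjd]
    · rw [if_neg hjd]
      have hjnd : ¬ j ∣ n := fun h => hjd (Nat.mem_divisors.2 ⟨h, hn.ne'⟩)
      exact hvana i (Finset.mem_range.2 hi) j (hvan j (Finset.mem_Icc.2 hj) hjnd)
  · -- bullet 3
    intro k
    have hσk : σ ^ k = σ ^ (k % (n : ℤ)).toNat := aux_zpow σ n hn hσn k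
    have hωk : ω ^ k = ω ^ (k % (n : ℤ)).toNat := aux_zpow0 ω n hn hω1 k
    set r := (k % (n : ℤ)).toNat with hr
    have hrn : r < n := by
      rw [hr]
      have h1 : k % (n : ℤ) < n := Int.emod_lt_of_pos k (by exact_mod_cast hn)
      have h2 : 0 ≤ k % (n : ℤ) := Int.emod_nonneg k (by exact_mod_cast hn.ne')
      omega
    -- LHS count
    have hLHS : Nat.card {x : Σ j : J, B j // (σ ^ k) x = x}
        = ∑ t ∈ n.divisors, if t ∣ r then d t else 0 := by
      have hpred : ∀ (j' : J) (y : B j'),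
          ((σ ^ k) ⟨j', y⟩ = (⟨j', y⟩ : Σ j : J, B j)) ↔ ((j' : ℕ) ∣ r) := by
        intro j' y
        rw [hσk]
        exact hσfix r j' y
      rw [aux_card_sigma _ (fun (j' : J) (y : B j') => ((j' : ℕ) ∣ r)) hpred]
      have hin : ∀ j' : J, Nat.card {y : B j' // (j' : ℕ) ∣ r}
          = if (j' : ℕ) ∣ r then d (j' : ℕ) else 0 := by
        intro j'
        by_cases h : (j' : ℕ) ∣ r
        · rw [if_pos h, aux_card_true h, hcardB]
        · rw [if_neg h, aux_card_false h]
      rw [Finset.sum_congr rfl (fun j' _ => hin j')]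
      rw [← Finset.sum_subtype n.divisors (fun x => Iff.rfl) (fun t => if t ∣ r then d t else 0)]
    rw [hLHS]
    -- RHS
    have hRHS : ∑ x ∈ Finset.univ, (ω ^ k) ^ τ x
        = ∑ i' ∈ Finset.range n, (c i' : ℂ) * ω ^ (r * i') := by
      rw [hωk]
      rw [← Finset.univ_sigma_univ, Finset.sum_sigma]
      have hjsum : ∀ j' : J, ∑ y ∈ (Finset.univ : Finset (B j')), (ω ^ r) ^ τ ⟨j', y⟩
          = ∑ i' ∈ Finset.range n, (a i' (j' : ℕ) : ℂ) * ω ^ (r * i') := by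
        intro j'
        rw [← Finset.univ_sigma_univ, Finset.sum_sigma]
        rw [← Fin.sum_univ_eq_sum_range (fun i' => (a i' (j' : ℕ) : ℂ) * ω ^ (r * i')) n]
        apply Finset.sum_congr rfl
        intro i' _
        have : ∀ m ∈ (Finset.univ : Finset (Fin (a i' (j' : ℕ)))),
            (ω ^ r) ^ τ ⟨j', ⟨i', m⟩⟩ = ω ^ (r * (i' : ℕ)) := by
          intro m _
          show (ω ^ r) ^ (i' : ℕ) = _
          rw [← pow_mul]
        rw [Finset.sum_congr rfl this, Finset.sum_const, Finset.card_univ, Fintype.card_fin,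
          nsmul_eq_mul]
      rw [Finset.sum_congr rfl (fun j' _ => hjsum j')]
      rw [Finset.sum_comm]
      apply Finset.sum_congr rfl
      intro i' hi'
      rw [← Finset.sum_mul]
      congr 1
      rw [← Finset.sum_subtype n.divisors (fun x => Iff.rfl) (fun t => (a i' t : ℂ))]
      rw [hcc]
      have hss : n.divisors ⊆ Finset.Icc 1 n := by
        intro x hx
        obtain ⟨hx1, -⟩ := Nat.mem_divisors.1 hx
        exact Finset.mem_Icc.2 ⟨Nat.pos_of_dvd_of_pos hx1 hn, Nat.le_of_dvd hn hx1⟩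
      rw [show ((∑ t ∈ Finset.Icc 1 n, a i' t : ℕ) : ℂ) = ∑ t ∈ Finset.Icc 1 n, (a i' t : ℂ) by
        push_cast; rfl]
      apply Finset.sum_subset hss
      intro x hx hx2
      have hxn : ¬ x ∣ n := fun h => hx2 (Nat.mem_divisors.2 ⟨h, hn.ne'⟩)
      rw [hvana i' hi' x (hvan x hx hxn), Nat.cast_zero]
    rw [hRHS]
    -- final identity
    by_cases hr0 : r = 0
    · rw [hr0]
      have h2 : ∀ i' ∈ Finset.range n, (c i' : ℂ) * ω ^ (0 * i') = (c i' : ℂ) := by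
        intro i' _
        rw [Nat.zero_mul, pow_zero, mul_one]
      rw [Finset.sum_congr rfl h2]
      have h3 : ∀ t ∈ n.divisors, (if t ∣ 0 then d t else 0) = d t := by
        intro t _
        rw [if_pos (dvd_zero t)]
      rw [Finset.sum_congr rfl h3, htot]
      push_cast
      rfl
    · have hrIcc : r ∈ Finset.Icc 1 n := Finset.mem_Icc.2 ⟨by omega, by omega⟩
      rw [hF2 r hrIcc, Finset.sum_filter]
      push_cast
      rfl
end

section
/- Let n be a positive integer and suppose i and i′ are row indices in {0, …, n−1} with gcd(n, i) = gcd(n, i′). If A ∈ CSP(n) and A′ is the matrix obtained from A by interchanging rows i and i′, then A′ ∈ CSP(n). -/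
/-- An n × n real matrix (rows indexed by 0, …, n−1 via `Fin n`, columns by 1, …, n via
`j ↦ j.val + 1`) is a CSP matrix if all entries are non-negative and for each 1 ≤ k ≤ n:
∑_{i,j} A i j ω^{ki} = ∑_i ∑_{j ∣ k} A i j. -/
def IsCSPMatrix (n : ℕ) (ω : ℂ) (A : Matrix (Fin n) (Fin n) ℝ) : Prop :=
  (∀ i j, 0 ≤ A i j) ∧
  ∀ k ∈ Finset.Icc 1 n,
    ∑ i : Fin n, ∑ j : Fin n, (A i j : ℂ) * ω ^ (k * i.val) =
    ∑ i : Fin n, ∑ j ∈ Finset.univ.filter (fun j : Fin n => (j.val + 1) ∣ k), (A i j : ℂ)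

open Finset

namespace CSPAux

variable {n : ℕ} {ω : ℂ}

lemma pow_natCast_val [NeZero n] (hω : IsPrimitiveRoot ω n) (m : ℕ) :
    ω ^ ((m : ZMod n)).val = ω ^ m := by
  rw [ZMod.val_natCast]
  conv_rhs => rw [← Nat.div_add_mod m n]
  rw [pow_add, pow_mul, hω.pow_eq_one, one_pow, one_mul]

lemma pow_val_mul [NeZero n] (hω : IsPrimitiveRoot ω n) (b x : ZMod n) :
    ω ^ ((b * x).val) = ω ^ (b.val * x.val) := by
  rw [← pow_natCast_val hω (b.val * x.val)]
  congr 1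
  rw [Nat.cast_mul, ZMod.natCast_zmod_val, ZMod.natCast_zmod_val]

lemma pow_val_add [NeZero n] (hω : IsPrimitiveRoot ω n) (u v : ZMod n) :
    ω ^ ((u + v).val) = ω ^ u.val * ω ^ v.val := by
  rw [← pow_add, ← pow_natCast_val hω (u.val + v.val)]
  congr 1
  rw [Nat.cast_add, ZMod.natCast_zmod_val, ZMod.natCast_zmod_val]

/-- Orthogonality of characters. -/
lemma orth [NeZero n] (hω : IsPrimitiveRoot ω n) (x : ZMod n) :
    ∑ b : ZMod n, ω ^ ((b * x).val) = if x = 0 then (n : ℂ) else 0 := by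
  have hbij : Function.Bijective (fun a : Fin n => ((a.val : ℕ) : ZMod n)) := by
    constructor
    · intro a b hab
      have := congrArg ZMod.val hab
      rwa [ZMod.val_natCast_of_lt a.isLt, ZMod.val_natCast_of_lt b.isLt, ← Fin.ext_iff] at this
    · intro b
      exact ⟨⟨b.val, b.val_lt⟩, ZMod.natCast_zmod_val b⟩
  have := Fintype.sum_bijective _ hbij (fun a : Fin n => (ω ^ x.val) ^ (a : ℕ))
      (fun b : ZMod n => ω ^ ((b * x).val)) (by
    intro a
    rw [pow_val_mul hω, ZMod.val_natCast_of_lt a.isLt, mul_comm, pow_mul])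
  rw [← this, Fin.sum_univ_eq_sum_range (fun a => (ω ^ x.val) ^ a)]
  by_cases hx : x = 0
  · subst hx
    simp [ZMod.val_zero]
  · rw [if_neg hx]
    have hv0 : 0 < x.val := Nat.pos_of_ne_zero (fun h => hx ((ZMod.val_eq_zero x).mp h))
    have hne : ω ^ x.val ≠ 1 := hω.pow_ne_one_of_pos_of_lt hv0.ne' (ZMod.val_lt x)
    rw [geom_sum_eq hne]
    rw [← pow_mul, mul_comm, pow_mul, hω.pow_eq_one, one_pow, sub_self, zero_div]

lemma gcd_mod (n a : ℕ) : Nat.gcd n (a % n) = Nat.gcd n a := by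
  calc Nat.gcd n (a % n) = Nat.gcd (a % n) n := Nat.gcd_comm _ _
    _ = Nat.gcd n a := (Nat.gcd_rec n a).symm

lemma gcd_unit_mul [NeZero n] (u : (ZMod n)ˣ) (x : ZMod n) :
    Nat.gcd n ((↑u * x).val) = Nat.gcd n x.val := by
  rw [ZMod.val_mul]
  calc Nat.gcd n ((u : ZMod n).val * x.val % n)
      = Nat.gcd ((u : ZMod n).val * x.val % n) n := Nat.gcd_comm _ _
    _ = Nat.gcd n ((u : ZMod n).val * x.val) := (Nat.gcd_rec n _).symm
    _ = Nat.gcd ((u : ZMod n).val * x.val) n := Nat.gcd_comm _ _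
    _ = Nat.gcd x.val n := (ZMod.val_coe_unit_coprime u).gcd_mul_left_cancel x.val
    _ = Nat.gcd n x.val := Nat.gcd_comm _ _

end CSPAux

open CSPAux in
/-- Row sums of a CSP matrix depend only on `gcd n i`. -/
lemma csp_rowsum_eq (n : ℕ) (hn : 0 < n) (ω : ℂ) (hω : IsPrimitiveRoot ω n)
    (A : Matrix (Fin n) (Fin n) ℝ) (hA : IsCSPMatrix n ω A)
    (i i' : Fin n) (hgcd : Nat.gcd n i.val = Nat.gcd n i'.val) :
    ∑ j, A i j = ∑ j, A i' j := by
  haveI : NeZero n := ⟨hn.ne'⟩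
  obtain ⟨hpos, hsum⟩ := hA
  -- complex row sums and column sums
  set S : Fin n → ℂ := fun m => ∑ j, (A m j : ℂ) with hS
  set c : Fin n → ℂ := fun j => ∑ m, (A m j : ℂ) with hc
  -- restate the CSP condition with factored row sums and column sums
  have hsum' : ∀ k ∈ Finset.Icc 1 n,
      ∑ m : Fin n, S m * ω ^ (k * m.val)
        = ∑ j ∈ univ.filter (fun j : Fin n => (j.val + 1) ∣ k), c j := by
    intro k hk
    have h1 := hsum k hk
    calc ∑ m : Fin n, S m * ω ^ (k * m.val)
        = ∑ m : Fin n, ∑ j : Fin n, (A m j : ℂ) * ω ^ (k * m.val) := by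
          refine Finset.sum_congr rfl fun m _ => ?_
          rw [hS, Finset.sum_mul]
      _ = ∑ m : Fin n, ∑ j ∈ univ.filter (fun j : Fin n => (j.val + 1) ∣ k), (A m j : ℂ) := h1
      _ = ∑ j ∈ univ.filter (fun j : Fin n => (j.val + 1) ∣ k), c j := by
          rw [Finset.sum_comm]
  -- Step A: columns whose index+1 does not divide n have zero sum
  have hcol : ∀ j : Fin n, ¬ (j.val + 1 ∣ n) → c j = 0 := by
    have hn' := hsum' n (Finset.mem_Icc.mpr ⟨hn, le_refl n⟩)
    have hl : ∑ m : Fin n, S m * ω ^ (n * m.val) = ∑ j : Fin n, c j := by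
      have : ∀ m : Fin n, S m * ω ^ (n * m.val) = S m := by
        intro m; rw [pow_mul, hω.pow_eq_one, one_pow, mul_one]
      rw [Finset.sum_congr rfl fun m _ => this m, hS, hc, Finset.sum_comm]
    rw [hl] at hn'
    -- so the sum over non-divisor columns is zero
    have hsplit : ∑ j ∈ univ.filter (fun j : Fin n => ¬ ((j.val + 1) ∣ n)), c j = 0 := by
      have := Finset.sum_filter_add_sum_filter_not univ (fun j : Fin n => (j.val + 1) ∣ n) c
      rw [← this] at hn'
      linear_combination hn' - this + this - hn' + hn' - (hsum' n (Finset.mem_Icc.mpr ⟨hn, le_refl n⟩)) + (hsum' n (Finset.mem_Icc.mpr ⟨hn, le_refl n⟩))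
    -- each term is a nonnegative real
    have hreal : ∑ j ∈ univ.filter (fun j : Fin n => ¬ ((j.val + 1) ∣ n)), (∑ m, A m j) = 0 := by
      have : ((∑ j ∈ univ.filter (fun j : Fin n => ¬ ((j.val + 1) ∣ n)), (∑ m, A m j) : ℝ) : ℂ) = 0 := by
        push_cast
        exact hsplit
      exact_mod_cast this
    intro j hj
    have hmem : j ∈ univ.filter (fun j : Fin n => ¬ ((j.val + 1) ∣ n)) := by
      simp [hj]
    have hz := (Finset.sum_eq_zero_iff_of_nonneg (fun j _ => Finset.sum_nonneg fun m _ => hpos m j)).mp hreal j hmem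
    rw [hc]
    have hz2 : ((∑ m, A m j : ℝ) : ℂ) = 0 := by rw [hz]; norm_num
    push_cast at hz2
    exact hz2
  -- the "G" function: for each divisor data g, the relevant RHS value
  set G : ℕ → ℂ := fun g => ∑ j ∈ univ.filter (fun j : Fin n => (j.val + 1) ∣ g), c j with hG
  -- Step B: the RHS depends only on gcd n k
  have hRg : ∀ k ∈ Finset.Icc 1 n,
      ∑ j ∈ univ.filter (fun j : Fin n => (j.val + 1) ∣ k), c j = G (Nat.gcd n k) := by
    intro k hk
    rw [hG]
    rw [← Finset.sum_filter_add_sum_filter_not (univ.filter (fun j : Fin n => (j.val + 1) ∣ k))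
      (fun j : Fin n => (j.val + 1) ∣ n) c]
    have h2 : ∑ j ∈ (univ.filter (fun j : Fin n => (j.val + 1) ∣ k)).filter
        (fun j : Fin n => ¬ ((j.val + 1) ∣ n)), c j = 0 := by
      refine Finset.sum_eq_zero fun j hj => ?_
      rw [Finset.mem_filter] at hj
      exact hcol j hj.2
    rw [h2, add_zero, Finset.filter_filter]
    refine Finset.sum_congr ?_ fun _ _ => rfl
    refine Finset.filter_congr fun j _ => ?_
    constructor
    · rintro ⟨h1, h2⟩; exact Nat.dvd_gcd h2 h1
    · intro h; exact ⟨h.trans (Nat.gcd_dvd_right n k), h.trans (Nat.gcd_dvd_left n k)⟩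
  -- Step C: character formulation over ZMod n
  have hchar : ∀ b : ZMod n,
      ∑ m : Fin n, S m * ω ^ ((b * (m.val : ZMod n)).val) = G (Nat.gcd n b.val) := by
    intro b
    set k : ℕ := if b = 0 then n else b.val with hkdef
    have hkmem : k ∈ Finset.Icc 1 n := by
      rw [hkdef]
      split
      · exact Finset.mem_Icc.mpr ⟨hn, le_refl n⟩
      · next hb =>
        exact Finset.mem_Icc.mpr ⟨Nat.pos_of_ne_zero fun h => hb ((ZMod.val_eq_zero b).mp h),
          (ZMod.val_lt b).le⟩
    have hkb : (k : ZMod n) = b := by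
      rw [hkdef]; split
      · next hb => rw [hb, ZMod.natCast_self]
      · exact ZMod.natCast_zmod_val b
    have hgk : Nat.gcd n k = Nat.gcd n b.val := by
      rw [hkdef]; split
      · next hb => rw [hb, ZMod.val_zero, Nat.gcd_self, Nat.gcd_zero_right]
      · rfl
    have h3 := hsum' k hkmem
    rw [hRg k hkmem, hgk] at h3
    rw [← h3]
    refine Finset.sum_congr rfl fun m _ => ?_
    congr 1
    rw [← hkb, ← Nat.cast_mul, pow_natCast_val hω]
  -- Step D: Fourier inversion. For any row x,
  have hinv : ∀ x : Fin n,
      ∑ b : ZMod n, G (Nat.gcd n b.val) * ω ^ ((b * (-(x.val : ZMod n))).val)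
        = (n : ℂ) * S x := by
    intro x
    have : ∀ b : ZMod n, G (Nat.gcd n b.val) * ω ^ ((b * (-(x.val : ZMod n))).val)
        = ∑ m : Fin n, S m * ω ^ ((b * ((m.val : ZMod n) - (x.val : ZMod n))).val) := by
      intro b
      rw [← hchar b, Finset.sum_mul]
      refine Finset.sum_congr rfl fun m _ => ?_
      rw [mul_assoc]
      congr 1
      rw [← pow_val_add hω, ← mul_add]
      congr 2
      ring
    rw [Finset.sum_congr rfl fun b _ => this b, Finset.sum_comm]
    have h4 : ∀ m : Fin n, ∑ b : ZMod n, S m * ω ^ ((b * ((m.val : ZMod n) - (x.val : ZMod n))).val)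
        = S m * (if ((m.val : ZMod n) - (x.val : ZMod n)) = 0 then (n : ℂ) else 0) := by
      intro m
      rw [← Finset.mul_sum, orth hω]
    rw [Finset.sum_congr rfl fun m _ => h4 m]
    have h5 : ∀ m : Fin n, ((m.val : ZMod n) - (x.val : ZMod n) = 0) ↔ m = x := by
      intro m
      rw [sub_eq_zero]
      constructor
      · intro h
        have := congrArg ZMod.val h
        rwa [ZMod.val_natCast_of_lt m.isLt, ZMod.val_natCast_of_lt x.isLt, ← Fin.ext_iff] at this
      · intro h; rw [h]
    have h6 : ∀ m : Fin n, S m * (if ((m.val : ZMod n) - (x.val : ZMod n)) = 0 then (n : ℂ) else 0)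
        = if m = x then S m * (n : ℂ) else 0 := by
      intro m
      rw [if_congr (h5 m) rfl rfl]
      split <;> simp
    rw [Finset.sum_congr rfl fun m _ => h6 m]
    rw [Finset.sum_ite_eq' univ x (fun m => S m * (n : ℂ))]
    simp [mul_comm]
  -- Step E: find a unit relating i and i', and reindex
  obtain ⟨d, hdn, u, hu, hiu⟩ := ZMod.eq_unit_mul_divisor ((i.val : ℕ) : ZMod n)
  obtain ⟨e, hen, v, hv, hiv⟩ := ZMod.eq_unit_mul_divisor ((i'.val : ℕ) : ZMod n)
  -- gcd n of a unit times a divisor d of n is d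
  have hgcd_ud : ∀ (w : ZMod n), IsUnit w → ∀ f : ℕ, f ∣ n →
      Nat.gcd n ((w * (f : ZMod n)).val) = Nat.gcd n f := by
    intro w hw f hf
    have := gcd_unit_mul (n := n) hw.unit ((f : ℕ) : ZMod n)
    rw [IsUnit.unit_spec] at this
    rw [this, ZMod.val_natCast, gcd_mod]
  have hde : d = e := by
    have h1 : Nat.gcd n i.val = Nat.gcd n d := by
      have : Nat.gcd n ((i.val : ZMod n)).val = Nat.gcd n i.val := by
        rw [ZMod.val_natCast_of_lt i.isLt]
      rw [← this, hiu, hgcd_ud u hu d hdn]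
    have h2 : Nat.gcd n i'.val = Nat.gcd n e := by
      have : Nat.gcd n ((i'.val : ZMod n)).val = Nat.gcd n i'.val := by
        rw [ZMod.val_natCast_of_lt i'.isLt]
      rw [← this, hiv, hgcd_ud v hv e hen]
    have hd' : Nat.gcd n d = d := Nat.gcd_eq_right hdn
    have he' : Nat.gcd n e = e := Nat.gcd_eq_right hen
    rw [h1, hd'] at hgcd
    rw [h2, he'] at hgcd
    exact hgcd
  -- the unit w with (i'.val : ZMod n) = w * (i.val : ZMod n)
  set w : (ZMod n)ˣ := hv.unit * hu.unit⁻¹ with hw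
  have hwi : ((i'.val : ℕ) : ZMod n) = (w : ZMod n) * ((i.val : ℕ) : ZMod n) := by
    have h2 : (↑(hu.unit⁻¹) : ZMod n) * u = 1 := by
      have := hu.unit.inv_mul
      rwa [hu.unit_spec] at this
    rw [hiv, hiu, hde, hw, Units.val_mul, hv.unit_spec]
    calc v * (e : ZMod n) = v * (((↑(hu.unit⁻¹) : ZMod n) * u) * (e : ZMod n)) := by
          rw [h2, one_mul]
      _ = v * (↑(hu.unit⁻¹) : ZMod n) * (u * (e : ZMod n)) := by ring
  -- reindexing b ↦ w⁻¹ * b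
  have hre : ∑ b : ZMod n, G (Nat.gcd n b.val) * ω ^ ((b * (-(i'.val : ZMod n))).val)
      = ∑ b : ZMod n, G (Nat.gcd n b.val) * ω ^ ((b * (-(i.val : ZMod n))).val) := by
    have heq : ∀ b : ZMod n,
        G (Nat.gcd n ((↑w⁻¹ * b).val)) * ω ^ (((↑w⁻¹ * b) * (-(i'.val : ZMod n))).val)
          = G (Nat.gcd n b.val) * ω ^ ((b * (-(i.val : ZMod n))).val) := by
      intro b
      rw [gcd_unit_mul w⁻¹ b]
      congr 2
      rw [hwi]
      have : (↑w⁻¹ * b) * (-((w : ZMod n) * (i.val : ZMod n)))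
          = ((↑w⁻¹ * (w : ZMod n)) * (b * (-(i.val : ZMod n)))) := by ring
      rw [this, w.inv_mul, one_mul]
    calc ∑ b : ZMod n, G (Nat.gcd n b.val) * ω ^ ((b * (-(i'.val : ZMod n))).val)
        = ∑ b : ZMod n, G (Nat.gcd n ((↑w⁻¹ * b).val)) * ω ^ (((↑w⁻¹ * b) * (-(i'.val : ZMod n))).val) := by
          refine (Fintype.sum_bijective (fun b : ZMod n => (↑w⁻¹ * b : ZMod n)) ?_ _ _ ?_).symm
          · exact Units.mulLeft_bijective w⁻¹
          · intro b; rfl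
      _ = ∑ b : ZMod n, G (Nat.gcd n b.val) * ω ^ ((b * (-(i.val : ZMod n))).val) :=
          Finset.sum_congr rfl fun b _ => heq b
  have hfin : (n : ℂ) * S i' = (n : ℂ) * S i := by
    rw [← hinv i, ← hinv i', hre]
  have hnz : (n : ℂ) ≠ 0 := Nat.cast_ne_zero.mpr hn.ne'
  have hSS : S i = S i' := (mul_left_cancel₀ hnz hfin).symm
  have : ((∑ j, A i j : ℝ) : ℂ) = ((∑ j, A i' j : ℝ) : ℂ) := by
    push_cast
    exact hSS
  exact_mod_cast this

/-- If i and i' are row indices with gcd(n, i) = gcd(n, i') and A ∈ CSP(n),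
then the matrix obtained from A by interchanging rows i and i' is again in CSP(n). -/
theorem stmt_9 (n : ℕ) (hn : 0 < n) (ω : ℂ) (hω : IsPrimitiveRoot ω n)
    (i i' : Fin n) (hgcd : Nat.gcd n i.val = Nat.gcd n i'.val)
    (A : Matrix (Fin n) (Fin n) ℝ) (hA : IsCSPMatrix n ω A) :
    IsCSPMatrix n ω (A.submatrix (Equiv.swap i i') id) := by
  have hrow := csp_rowsum_eq n hn ω hω A hA i i' hgcd
  obtain ⟨hpos, hsum⟩ := hA
  constructor
  · intro m j; exact hpos _ _
  · intro k hk
    have hrs : ∀ m : Fin n, ∑ j, (A (Equiv.swap i i' m) j : ℂ) = ∑ j, (A m j : ℂ) := by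
      intro m
      rcases eq_or_ne m i with rfl | hmi
      · rw [Equiv.swap_apply_left]
        push_cast
        exact_mod_cast congrArg (fun x : ℝ => (x : ℂ)) hrow.symm
      rcases eq_or_ne m i' with rfl | hmi'
      · rw [Equiv.swap_apply_right]
        exact_mod_cast congrArg (fun x : ℝ => (x : ℂ)) hrow
      · rw [Equiv.swap_apply_of_ne_of_ne hmi hmi']
    calc ∑ m : Fin n, ∑ j : Fin n, ((A.submatrix (Equiv.swap i i') id) m j : ℂ) * ω ^ (k * m.val)
        = ∑ m : Fin n, (∑ j : Fin n, (A (Equiv.swap i i' m) j : ℂ)) * ω ^ (k * m.val) := by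
          refine Finset.sum_congr rfl fun m _ => ?_
          rw [Finset.sum_mul]; rfl
      _ = ∑ m : Fin n, (∑ j : Fin n, (A m j : ℂ)) * ω ^ (k * m.val) :=
          Finset.sum_congr rfl fun m _ => by rw [hrs m]
      _ = ∑ m : Fin n, ∑ j : Fin n, (A m j : ℂ) * ω ^ (k * m.val) := by
          refine Finset.sum_congr rfl fun m _ => ?_
          rw [Finset.sum_mul]
      _ = ∑ m : Fin n, ∑ j ∈ Finset.univ.filter (fun j : Fin n => (j.val + 1) ∣ k), (A m j : ℂ) :=
          hsum k hk
      _ = ∑ m : Fin n, ∑ j ∈ Finset.univ.filter (fun j : Fin n => (j.val + 1) ∣ k),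
            ((A.submatrix (Equiv.swap i i') id) m j : ℂ) := by
          rw [← Equiv.sum_comp (Equiv.swap i i')
            (fun m => ∑ j ∈ Finset.univ.filter (fun j : Fin n => (j.val + 1) ∣ k), (A m j : ℂ))]
          rfl
end

section
/- Let n be a positive integer and let d denote the number of positive divisors of n. Then the cone CSP(n) ⊆ ℝ^{n×n} has dimension n(d − 1) + 1; that is, the real linear span of CSP(n) in ℝ^{n×n} has dimension n(d − 1) + 1. -/
namespace CSP13

open Finset

variable {n : ℕ}

/-- index type for divisor columns other than the last -/
abbrev D (n : ℕ) := {j : Fin n // (j.val + 1) ∣ n ∧ j.val + 1 ≠ n}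

noncomputable def sfun (n m : ℕ) (i : ℕ) : ℝ := if n / m ∣ i then (m : ℝ)⁻¹ else 0

def colSum (A : Matrix (Fin n) (Fin n) ℝ) (j : Fin n) : ℝ := ∑ i, A i j

noncomputable def Rt (A : Matrix (Fin n) (Fin n) ℝ) (i : Fin n) : ℝ :=
  ∑ j : Fin n, if (j.val + 1) ∣ n then colSum A j * sfun n (j.val + 1) i.val else 0

def MemV (A : Matrix (Fin n) (Fin n) ℝ) : Prop :=
  (∀ i j, ¬ ((j.val + 1) ∣ n) → A i j = 0) ∧ ∀ i, (∑ j, A i j) = Rt A i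

/-! ### basic summation lemmas -/

lemma sum_pow_eq {m : ℕ} (hm : 0 < m) {ζ : ℂ} (hζ : IsPrimitiveRoot ζ m) (a : ℕ) :
    ∑ t ∈ range m, ζ ^ (a * t) = if m ∣ a then (m : ℂ) else 0 := by
  by_cases h : m ∣ a
  · rw [if_pos h]
    have h1 : ζ ^ a = 1 := (hζ.pow_eq_one_iff_dvd a).mpr h
    calc ∑ t ∈ range m, ζ ^ (a * t) = ∑ t ∈ range m, ((ζ ^ a) ^ t) := by
          simp [pow_mul]
      _ = (m : ℂ) := by simp [h1]
  · rw [if_neg h]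
    have hne : ζ ^ a ≠ 1 := fun hh => h ((hζ.pow_eq_one_iff_dvd a).mp hh)
    calc ∑ t ∈ range m, ζ ^ (a * t) = ∑ t ∈ range m, (ζ ^ a) ^ t := by
          simp [pow_mul]
      _ = ((ζ ^ a) ^ m - 1) / (ζ ^ a - 1) := geom_sum_eq hne m
      _ = 0 := by
          rw [← pow_mul, mul_comm, pow_mul, hζ.pow_eq_one, one_pow]
          simp

lemma sum_fin_dvd {M : Type*} [AddCommMonoid M] (hn : 0 < n) {m : ℕ} (hm : m ∣ n)
    (hm0 : 0 < m) (F : ℕ → M) :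
    ∑ i : Fin n, (if n / m ∣ i.val then F i.val else 0) = ∑ t ∈ range m, F (n / m * t) := by
  have hdm : n / m * m = n := Nat.div_mul_cancel hm
  have hd0 : 0 < n / m := Nat.div_pos (Nat.le_of_dvd hn hm) hm0
  rw [Fin.sum_univ_eq_sum_range (fun i => if n / m ∣ i then F i else 0), ← Finset.sum_filter]
  refine Finset.sum_nbij' (fun i => i / (n / m)) (fun t => n / m * t) ?_ ?_ ?_ ?_ ?_
  · intro a ha
    simp only [mem_filter, mem_range] at ha ⊢
    obtain ⟨han, c, hc⟩ := ha
    subst hc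
    rw [Nat.mul_div_cancel_left c hd0]
    by_contra hcm
    push_neg at hcm
    have : n / m * m ≤ n / m * c := Nat.mul_le_mul_left _ hcm
    omega
  · intro t ht
    simp only [mem_range] at ht
    simp only [mem_filter, mem_range]
    refine ⟨?_, Dvd.intro t rfl⟩
    calc n / m * t < n / m * m := by
          exact (Nat.mul_lt_mul_left hd0).mpr ht
      _ = n := hdm
  · intro a ha
    simp only [mem_filter, mem_range] at ha
    exact Nat.mul_div_cancel' ha.2
  · intro t _
    exact Nat.mul_div_cancel_left t hd0
  · intro a ha
    simp only [mem_filter, mem_range] at ha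
    rw [Nat.mul_div_cancel' ha.2]

lemma sum_sfun_one (hn : 0 < n) {m : ℕ} (hm : m ∣ n) (hm0 : 0 < m) :
    ∑ i : Fin n, sfun n m i.val = 1 := by
  have h := sum_fin_dvd (M := ℝ) hn hm hm0 (fun _ => (m : ℝ)⁻¹)
  simp only [sfun]
  rw [h, Finset.sum_const, card_range, nsmul_eq_mul]
  rw [mul_inv_cancel₀ (by exact_mod_cast hm0.ne')]

lemma count_mult (hn : 0 < n) {m : ℕ} (hm : m ∣ n) (hm0 : 0 < m) :
    ∑ i : Fin n, (if n / m ∣ i.val then (1 : ℝ) else 0) = (m : ℝ) := by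
  rw [sum_fin_dvd hn hm hm0 (fun _ => (1 : ℝ))]
  simp

lemma sum_sfun_char (hn : 0 < n) {ω : ℂ} (hω : IsPrimitiveRoot ω n) {m : ℕ}
    (hm : m ∣ n) (hm0 : 0 < m) (k : ℕ) :
    ∑ i : Fin n, (sfun n m i.val : ℂ) * ω ^ (k * i.val) = if m ∣ k then 1 else 0 := by
  have hstep : ∀ i : Fin n, (sfun n m i.val : ℂ) * ω ^ (k * i.val)
      = if n / m ∣ i.val then ((m : ℂ)⁻¹ * ω ^ (k * i.val)) else 0 := by
    intro i
    by_cases hc : n / m ∣ i.val <;> simp [sfun, hc]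
  rw [Finset.sum_congr rfl (fun i _ => hstep i),
    sum_fin_dvd hn hm hm0 (fun x => (m : ℂ)⁻¹ * ω ^ (k * x)), ← Finset.mul_sum]
  have hζ : IsPrimitiveRoot (ω ^ (n / m)) m := hω.pow hn (Nat.div_mul_cancel hm).symm
  have hre : ∀ t, ω ^ (k * (n / m * t)) = (ω ^ (n / m)) ^ (k * t) := by
    intro t
    rw [← pow_mul]
    congr 1
    ring
  rw [Finset.sum_congr rfl (fun t _ => hre t), sum_pow_eq hm0 hζ k]
  have hm0' : (m : ℂ) ≠ 0 := by exact_mod_cast hm0.ne'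
  split_ifs
  · rw [inv_mul_cancel₀ hm0']
  · rw [mul_zero]

lemma sum_div_cols {M : Type*} [AddCommMonoid M] (hn : 0 < n) (f : ℕ → M) :
    ∑ j : Fin n, (if (j.val + 1) ∣ n then f (j.val + 1) else 0) = ∑ m ∈ n.divisors, f m := by
  rw [← Finset.sum_filter]
  refine Finset.sum_nbij' (fun j => j.val + 1) (fun m => ⟨(m - 1) % n, Nat.mod_lt _ hn⟩)
    ?_ ?_ ?_ ?_ ?_
  · intro j hj
    simp only [mem_filter, mem_univ, true_and] at hj
    rw [Nat.mem_divisors]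
    exact ⟨hj, hn.ne'⟩
  · intro m hm
    rw [Nat.mem_divisors] at hm
    have h1 := Nat.pos_of_dvd_of_pos hm.1 hn
    have h2 := Nat.le_of_dvd hn hm.1
    simp only [mem_filter, mem_univ, true_and]
    have heq : (m - 1) % n + 1 = m := by
      rw [Nat.mod_eq_of_lt (by omega)]
      omega
    rw [heq]
    exact hm.1
  · intro j _
    refine Fin.ext ?_
    simp only
    have := j.isLt
    rw [Nat.mod_eq_of_lt (by omega)]
    omega
  · intro m hm
    rw [Nat.mem_divisors] at hm
    have h1 := Nat.pos_of_dvd_of_pos hm.1 hn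
    have h2 := Nat.le_of_dvd hn hm.1
    simp only
    rw [Nat.mod_eq_of_lt (by omega)]
    omega
  · intro j _
    rfl

lemma sum_dite_subtype {M : Type*} [AddCommMonoid M] {P : Fin n → Prop} [DecidablePred P]
    (F : {j : Fin n // P j} → M) :
    ∑ j : Fin n, (if h : P j then F ⟨j, h⟩ else 0) = ∑ m : {j : Fin n // P j}, F m := by
  have h1 : ∑ j : Fin n, (if h : P j then F ⟨j, h⟩ else 0)
      = ∑ j ∈ univ.filter P, (if h : P j then F ⟨j, h⟩ else 0) := by
    refine (Finset.sum_filter_of_ne ?_).symm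
    intro x _ hx
    by_contra hP
    rw [dif_neg hP] at hx
    exact hx rfl
  rw [h1, Finset.sum_subtype (p := P) _ (fun x => by simp) (fun j => if h : P j then F ⟨j, h⟩ else 0)]
  exact Finset.sum_congr rfl (fun m _ => by rw [dif_pos m.2])

lemma sum_ite_last {M : Type*} [AddCommMonoid M] {i0 : Fin n} (hi0 : i0.val + 1 = n)
    (g : Fin n → M) :
    ∑ j : Fin n, (if j.val + 1 = n then g j else 0) = g i0 := by
  have hc : ∀ j : Fin n, (if j.val + 1 = n then g j else 0)
      = if j = i0 then g j else 0 := by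
    intro j
    have hj := j.isLt
    refine if_congr ?_ rfl rfl
    rw [Fin.ext_iff]
    omega
  rw [Finset.sum_congr rfl (fun j _ => hc j), Finset.sum_ite_eq' univ _ g,
    if_pos (mem_univ _)]

lemma ite_dvd_split {M : Type*} [AddCommMonoid M] (g : Fin n → M) (j : Fin n) :
    (if (j.val + 1) ∣ n then g j else 0)
      = (if _h : (j.val + 1) ∣ n ∧ j.val + 1 ≠ n then g j else 0)
        + (if j.val + 1 = n then g j else 0) := by
  by_cases h1 : j.val + 1 = n
  · have hne : ¬ ((j.val + 1) ∣ n ∧ j.val + 1 ≠ n) := by simp [h1]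
    rw [dif_neg hne, if_pos h1, if_pos (show (j.val + 1) ∣ n by rw [h1]), zero_add]
  · rw [if_neg h1, add_zero]
    by_cases h2 : (j.val + 1) ∣ n
    · rw [if_pos h2, dif_pos ⟨h2, h1⟩]
    · rw [if_neg h2, dif_neg (by tauto)]

/-! ### linearity -/

lemma colSum_add (A B : Matrix (Fin n) (Fin n) ℝ) (j : Fin n) :
    colSum (A + B) j = colSum A j + colSum B j := by
  simp [colSum, Finset.sum_add_distrib]

lemma colSum_smul (c : ℝ) (A : Matrix (Fin n) (Fin n) ℝ) (j : Fin n) :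
    colSum (c • A) j = c * colSum A j := by
  simp [colSum, Finset.mul_sum]

lemma Rt_add (A B : Matrix (Fin n) (Fin n) ℝ) (i : Fin n) :
    Rt (A + B) i = Rt A i + Rt B i := by
  simp only [Rt, colSum_add, add_mul, ← Finset.sum_add_distrib]
  refine Finset.sum_congr rfl (fun j _ => ?_)
  split_ifs <;> simp

lemma Rt_smul (c : ℝ) (A : Matrix (Fin n) (Fin n) ℝ) (i : Fin n) :
    Rt (c • A) i = c * Rt A i := by
  simp only [Rt, colSum_smul, Finset.mul_sum]
  refine Finset.sum_congr rfl (fun j _ => ?_)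
  split_ifs <;> ring

lemma memV_add {A B : Matrix (Fin n) (Fin n) ℝ} (hA : MemV A) (hB : MemV B) :
    MemV (A + B) := by
  refine ⟨fun i j h => by simp [Matrix.add_apply, hA.1 i j h, hB.1 i j h], fun i => ?_⟩
  simp [Matrix.add_apply, Finset.sum_add_distrib, hA.2 i, hB.2 i, Rt_add]

lemma memV_smul (c : ℝ) {A : Matrix (Fin n) (Fin n) ℝ} (hA : MemV A) :
    MemV (c • A) := by
  refine ⟨fun i j h => by simp [Matrix.smul_apply, hA.1 i j h], fun i => ?_⟩
  simp [Matrix.smul_apply, ← Finset.mul_sum, hA.2 i, Rt_smul, smul_eq_mul]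

/-! ### the CSP identities -/

lemma Rt_transform (hn : 0 < n) {ω : ℂ} (hω : IsPrimitiveRoot ω n)
    {A : Matrix (Fin n) (Fin n) ℝ}
    (h1 : ∀ i j, ¬ ((j.val + 1) ∣ n) → A i j = 0) (k : ℕ) :
    ∑ i : Fin n, (Rt A i : ℂ) * ω ^ (k * i.val)
      = ∑ i : Fin n, ∑ j ∈ Finset.univ.filter (fun j : Fin n => (j.val + 1) ∣ k),
          (A i j : ℂ) := by
  have lhs1 : ∀ i : Fin n, (Rt A i : ℂ) * ω ^ (k * i.val)
      = ∑ j : Fin n, (if (j.val + 1) ∣ n then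
          (colSum A j : ℂ) * ((sfun n (j.val + 1) i.val : ℂ) * ω ^ (k * i.val)) else 0) := by
    intro i
    rw [Rt]
    push_cast
    rw [Finset.sum_mul]
    refine Finset.sum_congr rfl (fun j _ => ?_)
    split_ifs <;> push_cast <;> ring
  rw [Finset.sum_congr rfl (fun i _ => lhs1 i), Finset.sum_comm]
  have mid : ∀ j : Fin n,
      (∑ i : Fin n, if (j.val + 1) ∣ n then
        (colSum A j : ℂ) * ((sfun n (j.val + 1) i.val : ℂ) * ω ^ (k * i.val)) else 0)
      = if (j.val + 1) ∣ n ∧ (j.val + 1) ∣ k then (colSum A j : ℂ) else 0 := by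
    intro j
    by_cases hd : (j.val + 1) ∣ n
    · simp only [if_pos hd, ← Finset.mul_sum]
      rw [sum_sfun_char hn hω hd (Nat.succ_pos _) k]
      by_cases hk : (j.val + 1) ∣ k <;> simp [hd, hk]
    · simp [hd]
  rw [Finset.sum_congr rfl (fun j _ => mid j)]
  have rhs1 : ∑ i : Fin n, ∑ j ∈ Finset.univ.filter (fun j : Fin n => (j.val + 1) ∣ k),
      (A i j : ℂ)
      = ∑ j : Fin n, (if (j.val + 1) ∣ n ∧ (j.val + 1) ∣ k then (colSum A j : ℂ) else 0) := by
    rw [Finset.sum_comm, Finset.sum_filter]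
    refine Finset.sum_congr rfl (fun j _ => ?_)
    by_cases hk : (j.val + 1) ∣ k
    · by_cases hd : (j.val + 1) ∣ n
      · simp only [if_pos hk, if_pos (⟨hd, hk⟩ : (j.val + 1) ∣ n ∧ (j.val + 1) ∣ k), colSum]
        push_cast
        rfl
      · rw [if_pos hk, if_neg (by tauto)]
        exact Finset.sum_eq_zero (fun i _ => by rw [h1 i j hd]; norm_num)
    · rw [if_neg hk, if_neg (by tauto)]
  rw [rhs1]

lemma eq_of_memV (hn : 0 < n) {ω : ℂ} (hω : IsPrimitiveRoot ω n)
    {A : Matrix (Fin n) (Fin n) ℝ} (hA : MemV A) (k : ℕ) :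
    ∑ i : Fin n, ∑ j : Fin n, (A i j : ℂ) * ω ^ (k * i.val)
      = ∑ i : Fin n, ∑ j ∈ Finset.univ.filter (fun j : Fin n => (j.val + 1) ∣ k),
          (A i j : ℂ) := by
  have hrow : ∀ i : Fin n, ∑ j : Fin n, (A i j : ℂ) * ω ^ (k * i.val)
      = (Rt A i : ℂ) * ω ^ (k * i.val) := by
    intro i
    rw [← Finset.sum_mul, ← hA.2 i]
    push_cast
    rfl
  rw [Finset.sum_congr rfl (fun i _ => hrow i), Rt_transform hn hω hA.1 k]

lemma csp_of_memV (hn : 0 < n) {ω : ℂ} (hω : IsPrimitiveRoot ω n)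
    {A : Matrix (Fin n) (Fin n) ℝ} (hA : MemV A) (hpos : ∀ i j, 0 ≤ A i j) :
    IsCSPMatrix n ω A :=
  ⟨hpos, fun k _ => eq_of_memV hn hω hA k⟩

lemma memV_of_csp (hn : 0 < n) {ω : ℂ} (hω : IsPrimitiveRoot ω n)
    {A : Matrix (Fin n) (Fin n) ℝ} (hA : IsCSPMatrix n ω A) : MemV A := by
  obtain ⟨hpos, heq⟩ := hA
  have hn_mem : n ∈ Finset.Icc 1 n := by simp; omega
  have hω1 : ∀ i : Fin n, ω ^ (n * i.val) = 1 := fun i => by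
    rw [pow_mul, hω.pow_eq_one, one_pow]
  -- Step 1: the non-divisor columns vanish
  have h1r : ∑ i : Fin n, ∑ j : Fin n, A i j
      = ∑ i : Fin n, ∑ j ∈ Finset.univ.filter (fun j : Fin n => (j.val + 1) ∣ n), A i j := by
    have h1 := heq n hn_mem
    simp only [hω1, mul_one] at h1
    exact_mod_cast h1
  have hcols : ∀ i j, ¬ ((j.val + 1) ∣ n) → A i j = 0 := by
    have hsplit : ∀ i : Fin n, ∑ j : Fin n, A i j
        = ∑ j ∈ Finset.univ.filter (fun j : Fin n => (j.val + 1) ∣ n), A i j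
          + ∑ j ∈ Finset.univ.filter (fun j : Fin n => ¬ ((j.val + 1) ∣ n)), A i j :=
      fun i => (Finset.sum_filter_add_sum_filter_not univ _ _).symm
    have hzero : ∑ i : Fin n,
        ∑ j ∈ Finset.univ.filter (fun j : Fin n => ¬ ((j.val + 1) ∣ n)), A i j = 0 := by
      have h2 := h1r
      rw [Finset.sum_congr rfl (fun i _ => hsplit i), Finset.sum_add_distrib] at h2
      linarith
    rw [Finset.sum_eq_zero_iff_of_nonneg
      (fun i _ => Finset.sum_nonneg (fun j _ => hpos i j))] at hzero
    intro i j hj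
    have := hzero i (mem_univ i)
    rw [Finset.sum_eq_zero_iff_of_nonneg (fun j _ => hpos i j)] at this
    exact this j (by simp [hj])
  refine ⟨hcols, fun i0 => ?_⟩
  set g : Fin n → ℂ := fun i => ((∑ j, A i j : ℝ) : ℂ) - ((Rt A i : ℝ) : ℂ) with hg
  have hks : ∀ k, 1 ≤ k → k ≤ n → ∑ i : Fin n, g i * ω ^ (k * i.val) = 0 := by
    intro k hk1 hk2
    have e1 := heq k (by simp [hk1, hk2])
    have e2 := Rt_transform hn hω hcols k
    have e3 : ∑ i : Fin n, ∑ j : Fin n, (A i j : ℂ) * ω ^ (k * i.val)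
        = ∑ i : Fin n, ((∑ j, A i j : ℝ) : ℂ) * ω ^ (k * i.val) := by
      refine Finset.sum_congr rfl (fun i _ => ?_)
      rw [← Finset.sum_mul]
      push_cast
      rfl
    simp only [hg, sub_mul, Finset.sum_sub_distrib]
    rw [← e3, e1, ← e2]
    ring
  have hall : ∀ k ∈ Finset.range n, ∑ i : Fin n, g i * ω ^ (k * i.val) = 0 := by
    intro k hk
    rcases Nat.eq_zero_or_pos k with rfl | hkpos
    · have h0 := hks n hn le_rfl
      simp only [hω1, mul_one] at h0
      simpa using h0
    · exact hks k hkpos (le_of_lt (mem_range.mp hk))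
  -- inversion
  have key : ∑ k ∈ range n, ω ^ ((n - i0.val + i0.val) - i0.val + 0) * 0 = 0 := by simp
  have hsum0 : ∑ k ∈ range n, ω ^ (k * (n - i0.val)) * (∑ i : Fin n, g i * ω ^ (k * i.val))
      = 0 := Finset.sum_eq_zero (fun k hk => by rw [hall k hk, mul_zero])
  have hswap : ∑ k ∈ range n, ω ^ (k * (n - i0.val)) * (∑ i : Fin n, g i * ω ^ (k * i.val))
      = ∑ i : Fin n, g i * ∑ k ∈ range n, ω ^ ((n - i0.val + i.val) * k) := by
    simp only [Finset.mul_sum]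
    rw [Finset.sum_comm]
    refine Finset.sum_congr rfl (fun i _ => ?_)
    refine Finset.sum_congr rfl (fun k _ => ?_)
    calc ω ^ (k * (n - i0.val)) * (g i * ω ^ (k * i.val))
        = g i * ω ^ (k * (n - i0.val) + k * i.val) := by rw [pow_add]; ring
      _ = g i * ω ^ ((n - i0.val + i.val) * k) := by
          rw [show k * (n - i0.val) + k * i.val = (n - i0.val + i.val) * k from by ring]
  have horth : ∀ i : Fin n, (∑ k ∈ range n, ω ^ ((n - i0.val + i.val) * k))
      = if n ∣ (n - i0.val + i.val) then (n : ℂ) else 0 :=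
    fun i => sum_pow_eq hn hω (n - i0.val + i.val)
  have hfinal : ∑ i : Fin n, g i * ∑ k ∈ range n, ω ^ ((n - i0.val + i.val) * k)
      = g i0 * n := by
    have hpt : ∀ i : Fin n, g i * ∑ k ∈ range n, ω ^ ((n - i0.val + i.val) * k)
        = if i = i0 then g i * n else 0 := by
      intro i
      rw [horth i]
      by_cases hi : i = i0
      · subst hi
        have hdvd : n ∣ (n - i.val + i.val) := by
          have := i.isLt
          have heq : n - i.val + i.val = n := by omega
          rw [heq]
        rw [if_pos hdvd, if_pos rfl]
      · have hi' : i.val ≠ i0.val := fun hc => hi (Fin.ext hc)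
        have hnd : ¬ n ∣ (n - i0.val + i.val) := by
          intro ⟨c, hc⟩
          have h1 := i.isLt
          have h2 := i0.isLt
          rcases Nat.lt_or_ge c 2 with hc2 | hc2
          · interval_cases c <;> omega
          · have : n * 2 ≤ n * c := Nat.mul_le_mul_left _ hc2
            omega
        rw [if_neg hnd, if_neg hi, mul_zero]
    rw [Finset.sum_congr rfl (fun i _ => hpt i), Finset.sum_ite_eq' univ i0 (fun i => g i * n),
      if_pos (mem_univ _)]
  have : g i0 * n = 0 := by rw [← hfinal, ← hswap, hsum0]
  have hgz : g i0 = 0 := by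
    have hne : (n : ℂ) ≠ 0 := by exact_mod_cast hn.ne'
    exact (mul_eq_zero.mp this).resolve_right hne
  rw [hg] at hgz
  simp only [sub_eq_zero] at hgz
  exact_mod_cast hgz

/-! ### an interior CSP matrix -/

noncomputable def rho (n : ℕ) (i : ℕ) : ℝ :=
  ∑ m ∈ n.divisors, (if n / m ∣ i then (1 : ℝ) else 0)

noncomputable def Tn (n : ℕ) : ℝ := ∑ m ∈ n.divisors, (m : ℝ)

noncomputable def Astar (n : ℕ) : Matrix (Fin n) (Fin n) ℝ :=
  fun i j => if (j.val + 1) ∣ n then rho n i.val * (j.val + 1) * (Tn n)⁻¹ else 0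

lemma Tn_pos (hn : 0 < n) : 0 < Tn n := by
  refine Finset.sum_pos (fun m hm => ?_) ⟨n, Nat.mem_divisors_self n hn.ne'⟩
  rw [Nat.mem_divisors] at hm
  exact_mod_cast Nat.pos_of_dvd_of_pos hm.1 hn

lemma rho_nonneg (i : ℕ) : 0 ≤ rho n i :=
  Finset.sum_nonneg (fun m _ => by split_ifs <;> norm_num)

lemma one_le_rho (hn : 0 < n) (i : ℕ) : 1 ≤ rho n i := by
  have hmem : n ∈ n.divisors := Nat.mem_divisors_self n hn.ne'
  have : (if n / n ∣ i then (1 : ℝ) else 0) = 1 := by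
    rw [if_pos (by rw [Nat.div_self hn]; exact one_dvd i)]
  rw [rho]
  calc (1 : ℝ) = (if n / n ∣ i then (1 : ℝ) else 0) := this.symm
    _ ≤ ∑ m ∈ n.divisors, (if n / m ∣ i then (1 : ℝ) else 0) :=
        Finset.single_le_sum (f := fun m => if n / m ∣ i then (1 : ℝ) else 0)
          (fun m _ => by split_ifs <;> norm_num) hmem

lemma sum_rho (hn : 0 < n) : ∑ i : Fin n, rho n i.val = Tn n := by
  simp only [rho]
  rw [Finset.sum_comm]
  refine Finset.sum_congr rfl (fun m hm => ?_)
  rw [Nat.mem_divisors] at hm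
  exact count_mult hn hm.1 (Nat.pos_of_dvd_of_pos hm.1 hn)

lemma colSum_Astar (hn : 0 < n) {j : Fin n} (hj : (j.val + 1) ∣ n) :
    colSum (Astar n) j = (j.val + 1 : ℕ) := by
  simp only [colSum, Astar, if_pos hj]
  rw [← Finset.sum_mul, ← Finset.sum_mul, sum_rho hn]
  rw [mul_comm (Tn n), mul_assoc, mul_inv_cancel₀ (Tn_pos hn).ne', mul_one]
  push_cast
  ring

lemma memV_Astar (hn : 0 < n) : MemV (Astar n) := by
  constructor
  · intro i j h
    simp [Astar, h]
  · intro i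
    have hrow : ∑ j, Astar n i j = rho n i.val := by
      simp only [Astar]
      have hpt : ∀ j : Fin n, (if (j.val + 1) ∣ n then rho n i.val * (j.val + 1) * (Tn n)⁻¹ else 0)
          = rho n i.val * (Tn n)⁻¹ * (if (j.val + 1) ∣ n then ((j.val + 1 : ℕ) : ℝ) else 0) := by
        intro j
        split_ifs <;> push_cast <;> ring
      rw [Finset.sum_congr rfl (fun j _ => hpt j), ← Finset.mul_sum,
        sum_div_cols hn (fun m => ((m : ℕ) : ℝ))]
      rw [show (∑ m ∈ n.divisors, ((m : ℕ) : ℝ)) = Tn n from rfl]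
      rw [mul_assoc, inv_mul_cancel₀ (Tn_pos hn).ne', mul_one]
    have hRt : Rt (Astar n) i = rho n i.val := by
      simp only [Rt]
      have hpt : ∀ j : Fin n, (if (j.val + 1) ∣ n then colSum (Astar n) j * sfun n (j.val + 1) i.val else 0)
          = (if (j.val + 1) ∣ n then ((j.val + 1 : ℕ) : ℝ) * sfun n (j.val + 1) i.val else 0) := by
        intro j
        by_cases hj : (j.val + 1) ∣ n
        · rw [if_pos hj, if_pos hj, colSum_Astar hn hj]
        · rw [if_neg hj, if_neg hj]
      rw [Finset.sum_congr rfl (fun j _ => hpt j),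
        sum_div_cols hn (fun m => ((m : ℕ) : ℝ) * sfun n m i.val)]
      rw [rho]
      refine Finset.sum_congr rfl (fun m hm => ?_)
      rw [Nat.mem_divisors] at hm
      have hm0 : 0 < m := Nat.pos_of_dvd_of_pos hm.1 hn
      simp only [sfun]
      split_ifs
      · rw [mul_inv_cancel₀ (by exact_mod_cast hm0.ne' : (m : ℝ) ≠ 0)]
      · rw [mul_zero]
    rw [hrow, hRt]

lemma Astar_nonneg (i j : Fin n) : 0 ≤ Astar n i j := by
  unfold Astar
  split_ifs with h
  · have h1 := rho_nonneg (n := n) i.val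
    have h2 : (0:ℝ) ≤ ((j.val + 1 : ℕ) : ℝ) := by positivity
    have hT : (0:ℝ) ≤ Tn n := Finset.sum_nonneg (fun m _ => by positivity)
    have h4 : (0:ℝ) ≤ (Tn n)⁻¹ := inv_nonneg.mpr hT
    positivity
  · exact le_refl 0

lemma Astar_lb (hn : 0 < n) {i j : Fin n} (hj : (j.val + 1) ∣ n) :
    (Tn n)⁻¹ ≤ Astar n i j := by
  unfold Astar
  rw [if_pos hj]
  have h1 : (1 : ℝ) ≤ rho n i.val := one_le_rho hn i.val
  have h2 : (1 : ℝ) ≤ ((j.val + 1 : ℕ) : ℝ) := by exact_mod_cast Nat.succ_le_succ (Nat.zero_le _)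
  have h3 : (0 : ℝ) < (Tn n)⁻¹ := inv_pos.mpr (Tn_pos hn)
  calc (Tn n)⁻¹ = 1 * 1 * (Tn n)⁻¹ := by ring
    _ ≤ rho n i.val * (j.val + 1) * (Tn n)⁻¹ := by
        apply mul_le_mul_of_nonneg_right _ h3.le
        have : (0:ℝ) ≤ 1 := zero_le_one
        nlinarith

lemma memV_mem_span (hn : 0 < n) {ω : ℂ} (hω : IsPrimitiveRoot ω n)
    {A : Matrix (Fin n) (Fin n) ℝ} (hA : MemV A) :
    A ∈ Submodule.span ℝ {B : Matrix (Fin n) (Fin n) ℝ | IsCSPMatrix n ω B} := by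
  set c : ℝ := (∑ i : Fin n, ∑ j : Fin n, |A i j|) * Tn n with hc
  have hsnn : 0 ≤ ∑ i : Fin n, ∑ j : Fin n, |A i j| :=
    Finset.sum_nonneg (fun i _ => Finset.sum_nonneg (fun j _ => abs_nonneg _))
  have hcnn : 0 ≤ c := mul_nonneg hsnn (Tn_pos hn).le
  have habs : ∀ i j : Fin n, |A i j| ≤ ∑ i : Fin n, ∑ j : Fin n, |A i j| := by
    intro i j
    calc |A i j| ≤ ∑ j' : Fin n, |A i j'| :=
          Finset.single_le_sum (f := fun j' => |A i j'|) (fun j' _ => abs_nonneg _) (mem_univ j)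
      _ ≤ ∑ i' : Fin n, ∑ j' : Fin n, |A i' j'| :=
          Finset.single_le_sum (f := fun i' => ∑ j' : Fin n, |A i' j'|)
            (fun i' _ => Finset.sum_nonneg (fun j' _ => abs_nonneg _)) (mem_univ i)
  have hcT : c * (Tn n)⁻¹ = ∑ i : Fin n, ∑ j : Fin n, |A i j| := by
    rw [hc, mul_assoc, mul_inv_cancel₀ (Tn_pos hn).ne', mul_one]
  have hstar_csp : IsCSPMatrix n ω (c • Astar n) := by
    refine csp_of_memV hn hω (memV_smul c (memV_Astar hn)) (fun i j => ?_)
    rw [Matrix.smul_apply, smul_eq_mul]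
    exact mul_nonneg hcnn (Astar_nonneg i j)
  have hsum_csp : IsCSPMatrix n ω (A + c • Astar n) := by
    refine csp_of_memV hn hω (memV_add hA (memV_smul c (memV_Astar hn))) (fun i j => ?_)
    rw [Matrix.add_apply, Matrix.smul_apply, smul_eq_mul]
    by_cases hj : (j.val + 1) ∣ n
    · have h1 : c * (Tn n)⁻¹ ≤ c * Astar n i j :=
        mul_le_mul_of_nonneg_left (Astar_lb hn hj) hcnn
      have h2 := habs i j
      have h3 := neg_abs_le (A i j)
      rw [hcT] at h1
      linarith
    · rw [hA.1 i j hj]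
      simp [Astar, hj]
  have hdecomp : A = (A + c • Astar n) - c • Astar n := by
    abel
  rw [hdecomp]
  exact Submodule.sub_mem _ (Submodule.subset_span hsum_csp)
    (Submodule.subset_span hstar_csp)

/-! ### the parametrization -/

noncomputable def phiFun (n : ℕ) (p : ((Fin n × D n) → ℝ) × ℝ) :
    Matrix (Fin n) (Fin n) ℝ :=
  fun i j =>
    if h : (j.val + 1) ∣ n ∧ j.val + 1 ≠ n then p.1 (i, ⟨j, h⟩)
    else if j.val + 1 = n then
      p.2 * (n : ℝ)⁻¹ + (∑ m : D n, (∑ i' : Fin n, p.1 (i', m)) * sfun n (m.1.val + 1) i.val)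
        - ∑ m : D n, p.1 (i, m)
    else 0

noncomputable def PhiL (n : ℕ) : (((Fin n × D n) → ℝ) × ℝ) →ₗ[ℝ] Matrix (Fin n) (Fin n) ℝ where
  toFun := phiFun n
  map_add' p q := by
    funext i j
    simp only [phiFun, Matrix.add_apply, Prod.fst_add, Prod.snd_add, Pi.add_apply]
    split_ifs with h h2
    · rfl
    · simp only [Finset.sum_add_distrib, add_mul]
      ring
    · simp
  map_smul' c p := by
    funext i j
    simp only [phiFun, Matrix.smul_apply, Prod.smul_fst, Prod.smul_snd, Pi.smul_apply,
      smul_eq_mul, RingHom.id_apply]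
    split_ifs with h h2
    · rfl
    · simp only [mul_assoc, ← Finset.mul_sum]
      ring
    · simp

lemma phiFun_pt (hn : 0 < n) (p : ((Fin n × D n) → ℝ) × ℝ) (i j : Fin n) :
    phiFun n p i j
      = (if h : (j.val + 1) ∣ n ∧ j.val + 1 ≠ n then p.1 (i, ⟨j, h⟩) else 0)
        + (if j.val + 1 = n then
            p.2 * (n : ℝ)⁻¹
              + (∑ m : D n, (∑ i' : Fin n, p.1 (i', m)) * sfun n (m.1.val + 1) i.val)
              - ∑ m : D n, p.1 (i, m)
          else 0) := by
  rw [phiFun]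
  split_ifs with h h2
  · exact absurd h2 h.2
  · rw [add_zero]
  · rw [zero_add]
  · rw [add_zero]

def lastc (hn : 0 < n) : Fin n := ⟨n - 1, by omega⟩

lemma lastc_succ (hn : 0 < n) : (lastc hn).val + 1 = n := by
  simp only [lastc]
  omega

lemma sfun_self (hn : 0 < n) (i : ℕ) : sfun n n i = (n : ℝ)⁻¹ := by
  rw [sfun, if_pos (by rw [Nat.div_self hn]; exact one_dvd i)]

lemma phi_col_D (p : ((Fin n × D n) → ℝ) × ℝ) (m : D n) (i : Fin n) :
    phiFun n p i m.1 = p.1 (i, m) := by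
  rw [phiFun, dif_pos m.2]

lemma phi_last (hn : 0 < n) (p : ((Fin n × D n) → ℝ) × ℝ) (i : Fin n) :
    phiFun n p i (lastc hn)
      = p.2 * (n : ℝ)⁻¹ + (∑ m : D n, (∑ i' : Fin n, p.1 (i', m)) * sfun n (m.1.val + 1) i.val)
        - ∑ m : D n, p.1 (i, m) := by
  rw [phiFun, dif_neg (fun hc => hc.2 (lastc_succ hn)), if_pos (lastc_succ hn)]

lemma row_phi (hn : 0 < n) (p : ((Fin n × D n) → ℝ) × ℝ) (i : Fin n) :
    ∑ j, phiFun n p i j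
      = p.2 * (n : ℝ)⁻¹
        + ∑ m : D n, (∑ i' : Fin n, p.1 (i', m)) * sfun n (m.1.val + 1) i.val := by
  rw [Finset.sum_congr rfl (fun j _ => phiFun_pt hn p i j), Finset.sum_add_distrib,
    sum_dite_subtype (F := fun m => p.1 (i, m)), sum_ite_last (lastc_succ hn)]
  ring

lemma col_phi_D (p : ((Fin n × D n) → ℝ) × ℝ) (m : D n) :
    colSum (phiFun n p) m.1 = ∑ i : Fin n, p.1 (i, m) := by
  rw [colSum]
  exact Finset.sum_congr rfl (fun i _ => phi_col_D p m i)

lemma col_phi_last (hn : 0 < n) (p : ((Fin n × D n) → ℝ) × ℝ) :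
    colSum (phiFun n p) (lastc hn) = p.2 := by
  rw [colSum, Finset.sum_congr rfl (fun i _ => phi_last hn p i)]
  simp only [Finset.sum_sub_distrib, Finset.sum_add_distrib, Finset.sum_const, card_univ,
    Fintype.card_fin, nsmul_eq_mul]
  have h1 : ∑ i : Fin n, ∑ m : D n, (∑ i' : Fin n, p.1 (i', m)) * sfun n (m.1.val + 1) i.val
      = ∑ i : Fin n, ∑ m : D n, p.1 (i, m) := by
    rw [Finset.sum_comm, Finset.sum_comm (f := fun i m => p.1 (i, m))]
    refine Finset.sum_congr rfl (fun m _ => ?_)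
    rw [← Finset.mul_sum, sum_sfun_one hn m.2.1 (Nat.succ_pos _), mul_one]
  rw [h1]
  have hne : (n : ℝ) ≠ 0 := by exact_mod_cast hn.ne'
  field_simp
  ring

lemma Rt_phi (hn : 0 < n) (p : ((Fin n × D n) → ℝ) × ℝ) (i : Fin n) :
    Rt (phiFun n p) i
      = (∑ m : D n, (∑ i' : Fin n, p.1 (i', m)) * sfun n (m.1.val + 1) i.val)
        + p.2 * (n : ℝ)⁻¹ := by
  rw [Rt, Finset.sum_congr rfl (fun j _ =>
    ite_dvd_split (fun j => colSum (phiFun n p) j * sfun n (j.val + 1) i.val) j),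
    Finset.sum_add_distrib,
    sum_dite_subtype (F := fun m => colSum (phiFun n p) m.1 * sfun n (m.1.val + 1) i.val),
    sum_ite_last (lastc_succ hn) (fun j => colSum (phiFun n p) j * sfun n (j.val + 1) i.val)]
  have h2 : colSum (phiFun n p) (lastc hn) * sfun n ((lastc hn).val + 1) i.val
      = p.2 * (n : ℝ)⁻¹ := by
    rw [col_phi_last hn p, lastc_succ hn, sfun_self hn]
  rw [h2]
  congr 1
  exact Finset.sum_congr rfl (fun m _ => by rw [col_phi_D p m])

lemma memV_phi (hn : 0 < n) (p : ((Fin n × D n) → ℝ) × ℝ) : MemV (phiFun n p) := by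
  constructor
  · intro i j hj
    rw [phiFun, dif_neg (fun hc => hj hc.1), if_neg (fun he => hj (by rw [he]))]
  · intro i
    rw [row_phi hn p i, Rt_phi hn p i]
    ring

lemma phi_eq_of_memV (hn : 0 < n) {A : Matrix (Fin n) (Fin n) ℝ} (hA : MemV A) :
    phiFun n (fun im => A im.1 im.2.1, colSum A (lastc hn)) = A := by
  funext i j
  by_cases h : (j.val + 1) ∣ n ∧ j.val + 1 ≠ n
  · rw [phiFun, dif_pos h]
  · by_cases h2 : j.val + 1 = n
    · have hj : j = lastc hn := by
        rw [Fin.ext_iff]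
        have hl : (lastc hn).val = n - 1 := rfl
        omega
      subst hj
      rw [phi_last hn _ i]
      simp only
      -- row identity for A
      have hrow : ∑ j', A i j' = (∑ m : D n, A i m.1) + A i (lastc hn) := by
        have hz : ∀ j' : Fin n, A i j' = (if (j'.val + 1) ∣ n then A i j' else 0) := by
          intro j'
          split_ifs with hd
          · rfl
          · exact hA.1 i j' hd
        rw [Finset.sum_congr rfl (fun j' _ => hz j'),
          Finset.sum_congr rfl (fun j' _ => ite_dvd_split (fun j' => A i j') j'),
          Finset.sum_add_distrib, sum_dite_subtype (F := fun m => A i m.1),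
          sum_ite_last (lastc_succ hn) (fun j' => A i j')]
      -- Rt identity for A
      have hRt : Rt A i = (∑ m : D n, colSum A m.1 * sfun n (m.1.val + 1) i.val)
          + colSum A (lastc hn) * (n : ℝ)⁻¹ := by
        rw [Rt, Finset.sum_congr rfl (fun j' _ =>
          ite_dvd_split (fun j' => colSum A j' * sfun n (j'.val + 1) i.val) j'),
          Finset.sum_add_distrib,
          sum_dite_subtype (F := fun m => colSum A m.1 * sfun n (m.1.val + 1) i.val),
          sum_ite_last (lastc_succ hn) (fun j' => colSum A j' * sfun n (j'.val + 1) i.val),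
          lastc_succ hn, sfun_self hn]
      have hmain := hA.2 i
      rw [hrow, hRt] at hmain
      have hcol : ∀ m : D n, (∑ i' : Fin n, A i' m.1) = colSum A m.1 := fun m => rfl
      rw [Finset.sum_congr rfl (fun m _ => by rw [hcol m])]
      linarith
    · rw [phiFun, dif_neg h, if_neg h2, (hA.1 i j (by tauto)).symm]

lemma phi_zero (hn : 0 < n) (p : ((Fin n × D n) → ℝ) × ℝ) (hp : phiFun n p = 0) :
    p = 0 := by
  have hB : p.1 = 0 := by
    funext x
    obtain ⟨i, m⟩ := x
    have := congrFun (congrFun hp i) m.1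
    rw [phi_col_D p m i] at this
    simpa using this
  have ht : p.2 = 0 := by
    have := congrFun (congrFun hp (lastc hn)) (lastc hn)
    rw [phi_last hn p (lastc hn)] at this
    simp only [hB, Pi.zero_apply, Finset.sum_const_zero, zero_mul, mul_zero, add_zero,
      sub_zero, Matrix.zero_apply] at this
    have hne : (n : ℝ)⁻¹ ≠ 0 := by
      apply inv_ne_zero
      exact_mod_cast hn.ne'
    rcases mul_eq_zero.mp this with h | h
    · exact h
    · exact absurd h hne
  exact Prod.ext hB ht

lemma phi_injective (hn : 0 < n) : Function.Injective (PhiL n) := by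
  intro p q hpq
  have h0 : PhiL n (p - q) = 0 := by rw [map_sub, hpq, sub_self]
  have := phi_zero hn (p - q) h0
  exact sub_eq_zero.mp this

lemma span_eq_range (hn : 0 < n) {ω : ℂ} (hω : IsPrimitiveRoot ω n) :
    Submodule.span ℝ {A : Matrix (Fin n) (Fin n) ℝ | IsCSPMatrix n ω A}
      = LinearMap.range (PhiL n) := by
  apply le_antisymm
  · rw [Submodule.span_le]
    intro A hA
    exact ⟨(fun im => A im.1 im.2.1, colSum A (lastc hn)),
      phi_eq_of_memV hn (memV_of_csp hn hω hA)⟩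
  · rintro A ⟨p, rfl⟩
    exact memV_mem_span hn hω (memV_phi hn p)

lemma card_D (hn : 0 < n) : Fintype.card (D n) = n.divisors.card - 1 := by
  rw [Fintype.card_subtype, Finset.card_filter]
  have hpt : ∀ j : Fin n, (if (j.val + 1) ∣ n ∧ j.val + 1 ≠ n then 1 else 0)
      = (if (j.val + 1) ∣ n then (if (j.val + 1) ≠ n then 1 else 0) else 0) := by
    intro j
    split_ifs <;> tauto
  rw [Finset.sum_congr rfl (fun j _ => hpt j),
    sum_div_cols hn (fun m => if m ≠ n then 1 else 0), ← Finset.card_filter,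
    Finset.filter_ne', Finset.card_erase_of_mem (Nat.mem_divisors_self n hn.ne')]

end CSP13

/-- The cone CSP(n) has dimension n(d − 1) + 1, where d is the number of
divisors of n; that is, the real linear span of CSP(n) has dimension n(d − 1) + 1. -/
theorem stmt_13 (n : ℕ) (hn : 0 < n) (ω : ℂ) (hω : IsPrimitiveRoot ω n) :
    Module.finrank ℝ
        (Submodule.span ℝ {A : Matrix (Fin n) (Fin n) ℝ | IsCSPMatrix n ω A}) =
      n * (n.divisors.card - 1) + 1 := by
  rw [CSP13.span_eq_range hn hω,
    LinearMap.finrank_range_of_inj (CSP13.phi_injective hn),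
    Module.finrank_prod, Module.finrank_pi, Module.finrank_self,
    Fintype.card_prod, Fintype.card_fin, CSP13.card_D hn]
end

section
/- Let f be a decreasing convex real-valued function on ℝ_{≥0}, let p be a positive integer, and let r ≥ 0 be a real number. Then (1/p) ∑_{ℓ=1}^{p} f((ℓ + r)/p) ≤ (1/(p+1)) ∑_{ℓ=1}^{p+1} f((ℓ + r)/(p+1)). -/
/-- Summation identity: the right-hand coefficients recombine to `p * ∑`. -/
lemma stmt16_sum_id (g : ℕ → ℝ) (p : ℕ) :
    ∑ ℓ ∈ Finset.Icc 1 p, (((p : ℝ) + 1 - ℓ) * g ℓ + (ℓ : ℝ) * g (ℓ + 1)) =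
    (p : ℝ) * ∑ m ∈ Finset.Icc 1 (p + 1), g m := by
  induction p with
  | zero => simp
  | succ n ih =>
    have hrw : ∀ ℓ ∈ Finset.Icc 1 n,
        (((n + 1 : ℕ) : ℝ) + 1 - ℓ) * g ℓ + (ℓ : ℝ) * g (ℓ + 1) =
        (((n : ℕ) : ℝ) + 1 - ℓ) * g ℓ + (ℓ : ℝ) * g (ℓ + 1) + g ℓ := by
      intro ℓ _; push_cast; ring
    rw [Finset.sum_Icc_succ_top (by omega : 1 ≤ n + 1),
        Finset.sum_congr rfl hrw, Finset.sum_add_distrib, ih,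
        Finset.sum_Icc_succ_top (by omega : 1 ≤ n + 1 + 1),
        Finset.sum_Icc_succ_top (by omega : 1 ≤ n + 1)]
    push_cast
    ring

/-- If f is a decreasing convex function on ℝ_{≥0}, p a positive integer
and r ≥ 0, then (1/p) ∑_{ℓ=1}^p f((ℓ+r)/p) ≤ (1/(p+1)) ∑_{ℓ=1}^{p+1} f((ℓ+r)/(p+1)). -/
theorem stmt_16 (f : ℝ → ℝ) (hdec : AntitoneOn f (Set.Ici 0))
    (hconv : ConvexOn ℝ (Set.Ici 0) f) (p : ℕ) (hp : 0 < p) (r : ℝ) (hr : 0 ≤ r) :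
    (1 / p : ℝ) * ∑ ℓ ∈ Finset.Icc 1 p, f (((ℓ : ℝ) + r) / p) ≤
    (1 / (p + 1) : ℝ) * ∑ ℓ ∈ Finset.Icc 1 (p + 1), f (((ℓ : ℝ) + r) / (p + 1)) := by
  have hP : (0 : ℝ) < p := by exact_mod_cast hp
  have hP1 : (0 : ℝ) < (p : ℝ) + 1 := by linarith
  set g : ℕ → ℝ := fun m => f (((m : ℝ) + r) / ((p : ℝ) + 1)) with hg
  -- termwise bound
  have key : ∀ ℓ ∈ Finset.Icc 1 p,
      ((p : ℝ) + 1) * f (((ℓ : ℝ) + r) / p) ≤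
      ((p : ℝ) + 1 - ℓ) * g ℓ + (ℓ : ℝ) * g (ℓ + 1) := by
    intro ℓ hℓ
    rw [Finset.mem_Icc] at hℓ
    have hL1 : (1 : ℝ) ≤ ℓ := by exact_mod_cast hℓ.1
    have hLP : (ℓ : ℝ) ≤ p := by exact_mod_cast hℓ.2
    set L : ℝ := (ℓ : ℝ)
    have hy1 : ((L + r) / ((p : ℝ) + 1)) ∈ Set.Ici (0 : ℝ) := by
      simp only [Set.mem_Ici]; positivity
    have hy2 : ((L + 1 + r) / ((p : ℝ) + 1)) ∈ Set.Ici (0 : ℝ) := by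
      simp only [Set.mem_Ici]; positivity
    have hgsucc : g (ℓ + 1) = f ((L + 1 + r) / ((p : ℝ) + 1)) := by
      simp only [hg, L]; push_cast; rfl
    have hAB : f ((L + 1 + r) / ((p : ℝ) + 1)) ≤ f ((L + r) / ((p : ℝ) + 1)) := by
      apply hdec hy1 hy2
      gcongr
      linarith
    rw [hgsucc]
    show ((p : ℝ) + 1) * f ((L + r) / p) ≤
      ((p : ℝ) + 1 - L) * f ((L + r) / ((p : ℝ) + 1)) + L * f ((L + 1 + r) / ((p : ℝ) + 1))
    by_cases hcase : L + r ≤ p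
    · -- convexity case
      have hμ : 0 ≤ ((p : ℝ) - L - r) / p := by
        apply div_nonneg (by linarith) hP.le
      have hν : 0 ≤ (L + r) / p := by positivity
      have hsum : ((p : ℝ) - L - r) / p + (L + r) / p = 1 := by
        field_simp
        ring
      have hcomb := hconv.2 hy1 hy2 hμ hν hsum
      have hpt : (((p : ℝ) - L - r) / p) • ((L + r) / ((p : ℝ) + 1)) +
          ((L + r) / p) • ((L + 1 + r) / ((p : ℝ) + 1)) = (L + r) / p := by
        simp only [smul_eq_mul]
        field_simp
        ring
      rw [hpt] at hcomb
      set A := f ((L + r) / ((p : ℝ) + 1))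
      set B := f ((L + 1 + r) / ((p : ℝ) + 1))
      set C := f ((L + r) / p)
      have hcomb' : (p : ℝ) * C ≤ ((p : ℝ) - L - r) * A + (L + r) * B := by
        have := mul_le_mul_of_nonneg_left hcomb hP.le
        calc (p : ℝ) * C ≤ (p : ℝ) * ((((p : ℝ) - L - r) / p) * A + ((L + r) / p) * B) := this
          _ = ((p : ℝ) - L - r) * A + (L + r) * B := by field_simp
      -- multiply goal by p and compare
      rw [show ((p : ℝ) + 1) * C = (((p : ℝ) + 1) * ((p : ℝ) * C)) / p by field_simp]
      rw [div_le_iff₀ hP]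
      nlinarith [mul_nonneg (show (0 : ℝ) ≤ L + ((p : ℝ) + 1) * r by nlinarith)
        (sub_nonneg.2 hAB), mul_le_mul_of_nonneg_left hcomb' (le_of_lt hP1)]
    · -- monotonicity case: (L+r)/p ≥ both points
      push_neg at hcase
      have hx : ((L + r) / p) ∈ Set.Ici (0 : ℝ) := by
        simp only [Set.mem_Ici]; positivity
      have hCA : f ((L + r) / p) ≤ f ((L + r) / ((p : ℝ) + 1)) := by
        apply hdec hy1 hx
        rw [div_le_div_iff₀ hP1 hP]
        nlinarith
      have hCB : f ((L + r) / p) ≤ f ((L + 1 + r) / ((p : ℝ) + 1)) := by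
        apply hdec hy2 hx
        rw [div_le_div_iff₀ hP1 hP]
        nlinarith
      nlinarith [mul_le_mul_of_nonneg_left hCA (show (0:ℝ) ≤ (p : ℝ) + 1 - L by linarith),
        mul_le_mul_of_nonneg_left hCB (show (0:ℝ) ≤ L by linarith)]
  have hsum := Finset.sum_le_sum key
  rw [stmt16_sum_id g p] at hsum
  rw [← Finset.mul_sum] at hsum
  have hfinal : ∑ ℓ ∈ Finset.Icc 1 (p + 1), f (((ℓ : ℝ) + r) / (p + 1)) =
      ∑ m ∈ Finset.Icc 1 (p + 1), g m := by
    apply Finset.sum_congr rfl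
    intro m _
    simp [hg]
  rw [hfinal, div_mul_eq_mul_div, div_mul_eq_mul_div, div_le_div_iff₀ hP hP1]
  linarith
end
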